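/- arXiv:2404.17956 — 10 statements merged into one kernel-verified Lean document; each statement's English description precedes it below -/
import Mathlib

section
/- If (g,θ,𝔲) is an LCP structure on a unimodular Lie algebra 𝔤 of dimension n with dim 𝔲 = q, then the trace forms satisfy H^𝔲 = −(n−q)·θ|_𝔲 and H^{𝔲^⊥} = −q·θ|_{𝔲^⊥}. -/
lemma trace_aux {V : Type*} [AddCommGroup V] [Module ℝ V] {ι : Type*} [Fintype ι]
    [DecidableEq ι] (b : Module.Basis ι ℝ V) (B : LinearMap.BilinForm ℝ V)
    (horth : ∀ i j, B (b i) (b j) = if i = j then 1 else 0) (f : V →ₗ[ℝ] V) :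
    LinearMap.trace ℝ V f = ∑ i, B (b i) (f (b i)) := by
  have key : ∀ i : ι, (B (b i)) = (Finsupp.lapply i).comp (b.repr : V →ₗ[ℝ] ι →₀ ℝ) := by
    intro i
    refine b.ext fun j => ?_
    simp [horth i j, Finsupp.single_apply, eq_comm]
  rw [LinearMap.trace_eq_matrix_trace ℝ b f, Matrix.trace]
  refine Finset.sum_congr rfl fun i _ => ?_
  have := LinearMap.congr_fun (key i) (f (b i))
  simpa [LinearMap.toMatrix_apply, Matrix.diag] using this.symm

/-- If `(g,θ,𝔲)` is an LCP structure on a unimodular Lie algebra `𝔤` of dimension `n`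
with `dim 𝔲 = q`, then the trace forms satisfy `H^𝔲 = -(n-q)·θ|_𝔲` and
`H^{𝔲^⊥} = -q·θ|_{𝔲^⊥}`.  The trace form of the subalgebra `𝔲` at `u ∈ 𝔲` is
expressed as the trace of any endomorphism `T` of `𝔲` acting as `ad u` on `𝔲`. -/
theorem lcp_trace_forms
    {G : Type*} [LieRing G] [LieAlgebra ℝ G] [FiniteDimensional ℝ G]
    (g : LinearMap.BilinForm ℝ G)
    (hsymm : ∀ x y : G, g x y = g y x)
    (hpos : ∀ x : G, x ≠ 0 → 0 < g x x)
    -- θ : non-zero closed 1-form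
    (θ : G →ₗ[ℝ] ℝ) (hθ : θ ≠ 0) (hclosed : ∀ x y : G, θ ⁅x, y⁆ = 0)
    -- 𝔲 : non-zero subspace
    (U : Submodule ℝ G) (hUne : U ≠ ⊥)
    -- the Weyl connection ∇^θ determined by g and θ
    (N : G →ₗ[ℝ] G →ₗ[ℝ] G)
    (hN : ∀ x y z : G, g (N x y) z =
      (g ⁅x, y⁆ z - g ⁅x, z⁆ y - g ⁅y, z⁆ x) / 2
        + θ x * g y z + θ y * g x z - θ z * g x y)
    -- (1) 𝔲 and 𝔲^⊥ are Lie subalgebras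
    (hUsub : ∀ u ∈ U, ∀ v ∈ U, ⁅u, v⁆ ∈ U)
    (hPsub : ∀ x ∈ LinearMap.BilinForm.orthogonal g U,
             ∀ y ∈ LinearMap.BilinForm.orthogonal g U,
             ⁅x, y⁆ ∈ LinearMap.BilinForm.orthogonal g U)
    -- (2)
    (h2 : ∀ u ∈ U, ∀ x ∈ LinearMap.BilinForm.orthogonal g U,
      g ⁅u, x⁆ x = θ u * g x x ∧ g ⁅x, u⁆ u = θ x * g u u)
    -- (3) 𝔲 is ∇^θ-parallel and x ↦ ∇^θ_x|_𝔲 is a Lie algebra representation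
    (hpar : ∀ x : G, ∀ u ∈ U, N x u ∈ U)
    (hrep : ∀ x y : G, ∀ u ∈ U, N ⁅x, y⁆ u = N x (N y u) - N y (N x u))
    -- 𝔤 is unimodular
    (hunim : ∀ x : G, LinearMap.trace ℝ G (LieAlgebra.ad ℝ G x) = 0) :
    (∀ u ∈ U, ∀ T : U →ₗ[ℝ] U, (∀ v : U, (T v : G) = ⁅u, (v : G)⁆) →
      LinearMap.trace ℝ U T
        = -((Module.finrank ℝ G : ℝ) - (Module.finrank ℝ U : ℝ)) * θ u) ∧
    (∀ x ∈ LinearMap.BilinForm.orthogonal g U,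
      ∀ T : (LinearMap.BilinForm.orthogonal g U) →ₗ[ℝ]
            (LinearMap.BilinForm.orthogonal g U),
      (∀ v : LinearMap.BilinForm.orthogonal g U, (T v : G) = ⁅x, (v : G)⁆) →
      LinearMap.trace ℝ (LinearMap.BilinForm.orthogonal g U) T
        = -(Module.finrank ℝ U : ℝ) * θ x) := by
  classical
  letI core : InnerProductSpace.Core ℝ G :=
    { inner := fun x y => g x y
      conj_inner_symm := fun x y => by simpa using hsymm y x
      re_inner_nonneg := fun x => by
        rcases eq_or_ne x 0 with h | h
        · simp [h]
        · exact le_of_lt (by simpa using hpos x h)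
      add_left := fun x y z => by simp
      smul_left := fun x y r => by simp
      definite := fun x hx => by
        by_contra h
        exact (hpos x h).ne' (by simpa using hx) }
  letI : NormedAddCommGroup G := core.toNormedAddCommGroup
  letI : InnerProductSpace ℝ G := InnerProductSpace.ofCore core.toCore
  set P := LinearMap.BilinForm.orthogonal g U with hPdef
  have hPmem : ∀ x : G, x ∈ P ↔ ∀ n ∈ U, g n x = 0 := by
    intro x
    exact LinearMap.BilinForm.mem_orthogonal_iff
  have hPorth : P = Uᗮ := by
    ext x
    rw [hPmem, Submodule.mem_orthogonal]
    exact Iff.rfl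
  have hcompl : IsCompl U P := by
    rw [hPorth]; exact U.isCompl_orthogonal
  have hq : Module.finrank ℝ U + Module.finrank ℝ P = Module.finrank ℝ G := by
    rw [hPorth]; exact Submodule.finrank_add_finrank_orthogonal U
  let bU := stdOrthonormalBasis ℝ U
  let bP := stdOrthonormalBasis ℝ P
  let e : Module.Basis (Fin (Module.finrank ℝ U) ⊕ Fin (Module.finrank ℝ P)) ℝ G :=
    (bU.toBasis.prod bP.toBasis).map (Submodule.prodEquivOfIsCompl U P hcompl)
  have heL : ∀ i, e (Sum.inl i) = (bU i : G) := by
    intro i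
    simp [e, Submodule.coe_prodEquivOfIsCompl', Module.Basis.prod_apply]
  have heR : ∀ j, e (Sum.inr j) = (bP j : G) := by
    intro j
    simp [e, Submodule.coe_prodEquivOfIsCompl', Module.Basis.prod_apply]
  have hUU : ∀ i j, g (bU i : G) (bU j : G) = if i = j then 1 else 0 := by
    intro i j
    have := orthonormal_iff_ite.mp bU.orthonormal i j
    exact (by simpa [Submodule.coe_inner] using this : inner ℝ (bU i : G) (bU j : G) = _)
  have hPP : ∀ i j, g (bP i : G) (bP j : G) = if i = j then 1 else 0 := by
    intro i j
    have := orthonormal_iff_ite.mp bP.orthonormal i j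
    exact (by simpa [Submodule.coe_inner] using this : inner ℝ (bP i : G) (bP j : G) = _)
  have hUP : ∀ i j, g (bU i : G) (bP j : G) = 0 := by
    intro i j
    exact (hPmem _).mp (bP j).2 _ (bU i).2
  have he : ∀ i j, g (e i) (e j) = if i = j then 1 else 0 := by
    rintro (i | i) (j | j)
    · rw [heL, heL, hUU]; simp
    · rw [heL, heR]; simp [hUP]
    · rw [heR, heL, hsymm]; simp [hUP]
    · rw [heR, heR, hPP]; simp
  -- trace of ad x over G
  have hadsum : ∀ x : G,
      (∑ i, g ((bU i : G)) ⁅x, (bU i : G)⁆) + ∑ j, g ((bP j : G)) ⁅x, (bP j : G)⁆ = 0 := by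
    intro x
    have h0 := hunim x
    rw [trace_aux e g he (LieAlgebra.ad ℝ G x)] at h0
    rw [Fintype.sum_sum_type] at h0
    simpa [heL, heR, LieAlgebra.ad_apply] using h0
  constructor
  · intro u hu T hT
    have hU1 : ∀ i j, (g.restrict U) (bU.toBasis i) (bU.toBasis j)
        = if i = j then 1 else 0 := by
      intro i j
      simpa [LinearMap.BilinForm.restrict_apply] using hUU i j
    have htr : LinearMap.trace ℝ U T = ∑ i, g ((bU i : G)) ⁅u, (bU i : G)⁆ := by
      rw [trace_aux bU.toBasis (g.restrict U) hU1 T]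
      refine Finset.sum_congr rfl fun i _ => ?_
      rw [LinearMap.BilinForm.restrict_apply]
      simp [hT]
    have hsum2 : ∀ j, g ((bP j : G)) ⁅u, (bP j : G)⁆ = θ u := by
      intro j
      have h2j := (h2 u hu _ (bP j).2).1
      have hg1 : g ((bP j : G)) ((bP j : G)) = 1 := by simpa using hPP j j
      rw [hsymm, h2j, hg1, mul_one]
    have h0 := hadsum u
    rw [← htr] at h0
    rw [Finset.sum_congr rfl fun j _ => hsum2 j] at h0
    simp only [Finset.sum_const, Finset.card_univ, Fintype.card_fin, nsmul_eq_mul] at h0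
    have hn : (Module.finrank ℝ P : ℝ)
        = (Module.finrank ℝ G : ℝ) - (Module.finrank ℝ U : ℝ) := by
      have := hq
      push_cast [← this]
      ring
    linarith [h0, hn ▸ h0]
  · intro x hx T hT
    have hP1 : ∀ i j, (g.restrict P) (bP.toBasis i) (bP.toBasis j)
        = if i = j then 1 else 0 := by
      intro i j
      simpa [LinearMap.BilinForm.restrict_apply] using hPP i j
    have htr : LinearMap.trace ℝ P T = ∑ j, g ((bP j : G)) ⁅x, (bP j : G)⁆ := by
      rw [trace_aux bP.toBasis (g.restrict P) hP1 T]
      refine Finset.sum_congr rfl fun j _ => ?_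
      rw [LinearMap.BilinForm.restrict_apply]
      simp [hT]
    have hsum2 : ∀ i, g ((bU i : G)) ⁅x, (bU i : G)⁆ = θ x := by
      intro i
      have h2i := (h2 _ (bU i).2 x hx).2
      have hg1 : g ((bU i : G)) ((bU i : G)) = 1 := by simpa using hUU i i
      rw [hsymm, h2i, hg1, mul_one]
    have h0 := hadsum x
    rw [← htr] at h0
    rw [Finset.sum_congr rfl fun i _ => hsum2 i] at h0
    simp only [Finset.sum_const, Finset.card_univ, Fintype.card_fin, nsmul_eq_mul] at h0
    linarith [h0]
end

section
/- If (g,θ) is a conformally flat LCP structure on a Lie algebra 𝔤 and 𝔦 denotes the kernel of the representation ∇^θ : 𝔤 → 𝔤𝔩(𝔤), then 𝔦 is an abelian ideal of 𝔤. -/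
/-- If `(g,θ)` is a conformally flat LCP structure on a Lie algebra `𝔤` and
`𝔦 = ker ∇^θ`, then `𝔦` is an abelian ideal of `𝔤`. -/
theorem kernel_abelian_ideal
    {G : Type*} [LieRing G] [LieAlgebra ℝ G] [FiniteDimensional ℝ G]
    (g : LinearMap.BilinForm ℝ G)
    (hsymm : ∀ x y : G, g x y = g y x)
    (hpos : ∀ x : G, x ≠ 0 → 0 < g x x)
    (θ : G →ₗ[ℝ] ℝ) (hθ : θ ≠ 0) (hclosed : ∀ x y : G, θ ⁅x, y⁆ = 0)
    (N : G →ₗ[ℝ] Module.End ℝ G)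
    (hN : ∀ x y z : G, g (N x y) z =
      (g ⁅x, y⁆ z - g ⁅x, z⁆ y - g ⁅y, z⁆ x) / 2
        + θ x * g y z + θ y * g x z - θ z * g x y)
    (hrep : ∀ x y : G, N ⁅x, y⁆ = N x * N y - N y * N x) :
    (∀ x : G, ∀ y ∈ LinearMap.ker N, ⁅x, y⁆ ∈ LinearMap.ker N) ∧
    (∀ y ∈ LinearMap.ker N, ∀ z ∈ LinearMap.ker N, ⁅y, z⁆ = 0) := by
  constructor
  · intro x y hy
    rw [LinearMap.mem_ker] at hy ⊢
    rw [hrep, hy]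
    simp
  · intro y hy z hz
    rw [LinearMap.mem_ker] at hy hz
    -- g ⁅y,z⁆ w = 0 for all w
    have key : ∀ w : G, g ⁅y, z⁆ w = 0 := by
      intro w
      have h1 : g (N y z) w = 0 := by rw [hy]; simp
      have h2 : g (N z y) w = 0 := by rw [hz]; simp
      rw [hN] at h1 h2
      have hskew : g ⁅z, y⁆ w = -g ⁅y, z⁆ w := by
        have hb : ⁅z, y⁆ = -⁅y, z⁆ := by rw [← lie_skew]
        rw [hb, map_neg, LinearMap.neg_apply]
      have hs1 : θ w * g y z = θ w * g z y := by rw [hsymm y z]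
      have hs2 := hsymm y w
      have hs3 := hsymm z w
      linarith
    by_contra h
    have := hpos _ h
    rw [key ⁅y, z⁆] at this
    exact lt_irrefl 0 this
end

section
/- If (g,θ) is a conformally flat LCP structure on a Lie algebra 𝔤 with 𝔦 := ker(∇^θ), then the orthogonal complement 𝔦^⊥ is a Lie subalgebra of 𝔤, and [x,y] = ∇^θ_x y for all x ∈ 𝔤 and y ∈ 𝔦. -/
/-- If `(g,θ)` is a conformally flat LCP structure on a Lie algebra `𝔤` with
`𝔦 = ker ∇^θ`, then the orthogonal complement `𝔦^⊥` is a Lie subalgebra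
and `⁅x,y⁆ = ∇^θ_x y` for all `x ∈ 𝔤`, `y ∈ 𝔦`. -/
theorem kernel_perp_subalgebra_and_bracket
    {G : Type*} [LieRing G] [LieAlgebra ℝ G] [FiniteDimensional ℝ G]
    (g : LinearMap.BilinForm ℝ G)
    (hsymm : ∀ x y : G, g x y = g y x)
    (hpos : ∀ x : G, x ≠ 0 → 0 < g x x)
    (θ : G →ₗ[ℝ] ℝ) (hθ : θ ≠ 0) (hclosed : ∀ x y : G, θ ⁅x, y⁆ = 0)
    (N : G →ₗ[ℝ] Module.End ℝ G)
    (hN : ∀ x y z : G, g (N x y) z =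
      (g ⁅x, y⁆ z - g ⁅x, z⁆ y - g ⁅y, z⁆ x) / 2
        + θ x * g y z + θ y * g x z - θ z * g x y)
    (hrep : ∀ x y : G, N ⁅x, y⁆ = N x * N y - N y * N x) :
    (∀ x ∈ LinearMap.BilinForm.orthogonal g (LinearMap.ker N),
     ∀ y ∈ LinearMap.BilinForm.orthogonal g (LinearMap.ker N),
       ⁅x, y⁆ ∈ LinearMap.BilinForm.orthogonal g (LinearMap.ker N)) ∧
    (∀ x : G, ∀ y ∈ LinearMap.ker N, ⁅x, y⁆ = N x y) := by
  -- nondegeneracy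
  have hzero : ∀ w : G, (∀ z : G, g w z = 0) → w = 0 := by
    intro w hw
    by_contra h
    exact (hpos w h).ne' (hw w)
  have skew : ∀ a b : G, ⁅a, b⁆ = -⁅b, a⁆ := fun a b => (lie_skew a b).symm
  -- the bracket formula
  have hbr : ∀ x y : G, N y = 0 → ⁅x, y⁆ = N x y := by
    intro x y hy
    have h : ∀ z : G, g (⁅x, y⁆ - N x y) z = 0 := by
      intro z
      have h1 := hN x y z
      have h2 := hN y x z
      have hyx : N y x = 0 := by rw [hy]; rfl
      rw [hyx] at h2
      simp only [map_zero, LinearMap.zero_apply] at h2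
      have hl : g ⁅y, x⁆ z = - g ⁅x, y⁆ z := by
        rw [skew y x, map_neg, LinearMap.neg_apply]
      rw [hl, hsymm y x] at h2
      have hsy := hsymm x y
      have hsy2 := hsymm y x
      have : g (⁅x, y⁆ - N x y) z = g ⁅x, y⁆ z - g (N x y) z := by
        simp [map_sub]
      rw [this, h1]
      linarith
    have := hzero _ h
    exact sub_eq_zero.mp this
  -- ker N is an ideal
  have hideal : ∀ x y : G, N y = 0 → N ⁅x, y⁆ = 0 := by
    intro x y hy
    rw [hrep, hy]
    simp
  refine ⟨?_, ?_⟩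
  · intro x hx y hy
    rw [LinearMap.BilinForm.mem_orthogonal_iff] at hx hy ⊢
    intro n hn
    have hn0 : N n = 0 := LinearMap.mem_ker.mp hn
    have hxn := hbr x n hn0
    have hyn := hbr y n hn0
    have hxnk : N x n ∈ LinearMap.ker N := by
      rw [← hxn]; exact LinearMap.mem_ker.mpr (hideal x n hn0)
    have hynk : N y n ∈ LinearMap.ker N := by
      rw [← hyn]; exact LinearMap.mem_ker.mpr (hideal y n hn0)
    have e1 : g (N x n) y = 0 := hy _ hxnk
    have e2 : g (N y n) x = 0 := hx _ hynk
    have e3 : g n x = 0 := hx n hn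
    have e4 : g n y = 0 := hy n hn
    have b0 : g ⁅x, n⁆ y = 0 := by rw [hxn]; exact e1
    have c0 : g ⁅y, n⁆ x = 0 := by rw [hyn]; exact e2
    have b0' : g ⁅n, x⁆ y = 0 := by
      rw [skew n x, map_neg, LinearMap.neg_apply, b0, neg_zero]
    have c0' : g ⁅n, y⁆ x = 0 := by
      rw [skew n y, map_neg, LinearMap.neg_apply, c0, neg_zero]
    have hyxn : g ⁅y, x⁆ n = - g ⁅x, y⁆ n := by
      rw [skew y x, map_neg, LinearMap.neg_apply]
    have h1 := hN x n y
    have h2 := hN y n x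
    rw [e1, b0, c0', hsymm x n, e3, e4] at h1
    rw [e2, c0, b0', hyxn, hsymm y n, hsymm y x, e3, e4] at h2
    have : g ⁅x, y⁆ n = 0 := by linarith
    show g n ⁅x, y⁆ = 0
    rw [hsymm n ⁅x, y⁆]
    exact this
  · intro x y hy
    exact hbr x y (LinearMap.mem_ker.mp hy)
end

section
/- Let (g,θ) be a conformally flat LCP structure on a Lie algebra 𝔤 with 𝔦 := ker(∇^θ). Then 𝔤 is unimodular if and only if 𝔦 = 0. -/
section Aux

open LinearMap Matrix in
lemma skew_trace_zero {V : Type*} [AddCommGroup V] [Module ℝ V] [FiniteDimensional ℝ V]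
    (B : LinearMap.BilinForm ℝ V) (hnd : B.Nondegenerate)
    (f : V →ₗ[ℝ] V) (hskew : ∀ x y, B (f x) y = - B x (f y)) :
    LinearMap.trace ℝ V f = 0 := by
  classical
  let b := Module.finBasis ℝ V
  set M := LinearMap.BilinForm.toMatrix b B with hM
  set F := LinearMap.toMatrix b b f with hF
  have h1 : B.compLeft f = - B.compRight f := by
    ext x y
    simp [LinearMap.BilinForm.compLeft, LinearMap.BilinForm.compRight,
      LinearMap.BilinForm.comp, hskew x y]
  have h2 : Fᵀ * M = -(M * F) := by
    have : (LinearMap.BilinForm.toMatrix b) (-B.compRight f) = -(LinearMap.BilinForm.toMatrix b) (B.compRight f) :=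
      map_neg (LinearMap.BilinForm.toMatrix b : LinearMap.BilinForm ℝ V ≃ₗ[ℝ] Matrix _ _ ℝ) _
    rw [hF, hM, ← BilinForm.toMatrix_compLeft, ← BilinForm.toMatrix_compRight, h1, this]
  have hdet : IsUnit M.det := by
    have := (LinearMap.BilinForm.nondegenerate_iff_det_ne_zero b).mp hnd
    simpa [isUnit_iff_ne_zero] using this
  have e1 : M⁻¹ * (M * F) = F := by
    rw [← Matrix.mul_assoc, Matrix.nonsing_inv_mul M hdet, Matrix.one_mul]
  have h3 : F = -(M⁻¹ * (Fᵀ * M)) := by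
    rw [h2, Matrix.mul_neg, e1, neg_neg]
  have h4 : F.trace = - F.trace := by
    conv_lhs => rw [h3]
    rw [Matrix.trace_neg, ← Matrix.mul_assoc, Matrix.trace_mul_cycle,
      Matrix.mul_nonsing_inv M hdet, Matrix.one_mul, Matrix.trace_transpose]
  have h5 : F.trace = 0 := by linarith
  rw [LinearMap.trace_eq_matrix_trace ℝ b f, ← hF, h5]

lemma trace_eq_sum_inner' {V : Type*} [NormedAddCommGroup V] [InnerProductSpace ℝ V]
    [FiniteDimensional ℝ V] {ι : Type*} [Fintype ι] [DecidableEq ι]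
    (b : OrthonormalBasis ι ℝ V) (f : V →ₗ[ℝ] V) :
    LinearMap.trace ℝ V f = ∑ i, inner ℝ (b i) (f (b i)) := by
  rw [LinearMap.trace_eq_matrix_trace ℝ b.toBasis f, Matrix.trace]
  apply Finset.sum_congr rfl
  intro i _
  rw [Matrix.diag_apply, LinearMap.toMatrix_apply, OrthonormalBasis.coe_toBasis,
    OrthonormalBasis.coe_toBasis_repr_apply, OrthonormalBasis.repr_apply_apply]

lemma adjoint_trace_zero_imp {V : Type*} [NormedAddCommGroup V] [InnerProductSpace ℝ V]
    [FiniteDimensional ℝ V] (f f' : V →ₗ[ℝ] V)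
    (hadj : ∀ u v : V, (inner ℝ (f u) v : ℝ) = inner ℝ u (f' v))
    (h0 : LinearMap.trace ℝ V (f ∘ₗ f') = 0) : f' = 0 := by
  classical
  let b := stdOrthonormalBasis ℝ V
  have ht : LinearMap.trace ℝ V (f ∘ₗ f') = ∑ i, (inner ℝ (f' (b i)) (f' (b i)) : ℝ) := by
    rw [trace_eq_sum_inner' b]
    apply Finset.sum_congr rfl
    intro i _
    rw [LinearMap.comp_apply, real_inner_comm, hadj]
  rw [ht] at h0
  have hz : ∀ i ∈ Finset.univ, (inner ℝ (f' (b i)) (f' (b i)) : ℝ) = 0 := by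
    intro i _
    have hnn : ∀ j ∈ (Finset.univ : Finset (Fin (Module.finrank ℝ V))),
        (0:ℝ) ≤ inner ℝ (f' (b j)) (f' (b j)) := fun j _ => real_inner_self_nonneg
    exact (Finset.sum_eq_zero_iff_of_nonneg hnn).mp h0 i (Finset.mem_univ i)
  apply b.toBasis.ext
  intro i
  have := hz i (Finset.mem_univ i)
  rw [OrthonormalBasis.coe_toBasis]
  simpa [inner_self_eq_zero] using this

end Aux

set_option maxHeartbeats 1000000 in
/-- Let `(g,θ)` be a conformally flat LCP structure on a Lie algebra `𝔤` with
`𝔦 = ker ∇^θ`. Then `𝔤` is unimodular if and only if `𝔦 = 0`. -/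
theorem unimodular_iff_kernel_trivial
    {G : Type*} [LieRing G] [LieAlgebra ℝ G] [FiniteDimensional ℝ G]
    (g : LinearMap.BilinForm ℝ G)
    (hsymm : ∀ x y : G, g x y = g y x)
    (hpos : ∀ x : G, x ≠ 0 → 0 < g x x)
    (θ : G →ₗ[ℝ] ℝ) (hθ : θ ≠ 0) (hclosed : ∀ x y : G, θ ⁅x, y⁆ = 0)
    (N : G →ₗ[ℝ] Module.End ℝ G)
    (hN : ∀ x y z : G, g (N x y) z =
      (g ⁅x, y⁆ z - g ⁅x, z⁆ y - g ⁅y, z⁆ x) / 2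
        + θ x * g y z + θ y * g x z - θ z * g x y)
    (hrep : ∀ x y : G, N ⁅x, y⁆ = N x * N y - N y * N x) :
    (∀ x : G, LinearMap.trace ℝ G (LieAlgebra.ad ℝ G x) = 0) ↔
      LinearMap.ker N = ⊥ := by
  classical
  obtain ⟨w, hw⟩ : ∃ w : G, θ w ≠ 0 := by
    by_contra h
    push_neg at h
    exact hθ (LinearMap.ext fun x => by simpa using h x)
  have hw0 : w ≠ 0 := fun h => hw (by simp [h])
  have hgw : 0 < g w w := hpos w hw0
  -- skew-symmetry helper
  have gskew : ∀ x y z : G, g ⁅x, y⁆ z = - g ⁅y, x⁆ z := by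
    intro x y z
    have h : (⁅x, y⁆ : G) = -⁅y, x⁆ := (lie_skew x y).symm
    rw [h, LinearMap.map_neg, LinearMap.neg_apply]
  -- (P1) : N x + (N x)^t = 2 θ(x) Id
  have hP1 : ∀ x y z : G, g (N x y) z + g y (N x z) = 2 * θ x * g y z := by
    intro x y z
    have h1 := hN x y z
    have h2 := hN x z y
    have e1 : g ⁅z, y⁆ x = - g ⁅y, z⁆ x := gskew z y x
    have e2 : g y (N x z) = g (N x z) y := hsymm y (N x z)
    have e3 : g z y = g y z := hsymm z y
    rw [e1, e3] at h2
    rw [e2, h1, h2]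
    ring
  -- θ vanishes on the kernel
  have hθI : ∀ u : G, N u = 0 → θ u = 0 := by
    intro u hNu
    have h := hP1 u w w
    rw [hNu] at h
    simp only [LinearMap.zero_apply, map_zero, add_zero] at h
    have h' : 2 * θ u * g w w = 0 := by linarith
    rcases mul_eq_zero.mp h' with h'' | h''
    · rcases mul_eq_zero.mp h'' with h3 | h3
      · norm_num at h3
      · exact h3
    · exact absurd h'' (ne_of_gt hgw)
  -- the kernel is a Lie ideal
  have hkerlie : ∀ (z u : G), N u = 0 → N ⁅z, u⁆ = 0 := by
    intro z u hu
    rw [hrep, hu]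
    simp
  -- (F5) : invariance on the kernel
  have hF5 : ∀ z u v : G, N u = 0 → N v = 0 →
      g ⁅z, u⁆ v + g u ⁅z, v⁆ = 2 * θ z * g u v := by
    intro z u v hu hv
    have hu0 : θ u = 0 := hθI u hu
    have hv0 : θ v = 0 := hθI v hv
    have A := hN u z v
    have B := hN v z u
    rw [hu] at A
    rw [hv] at B
    simp only [LinearMap.zero_apply, map_zero] at A B
    rw [hu0, hv0] at A B
    have e1 : g ⁅u, z⁆ v = - g ⁅z, u⁆ v := gskew u z v
    have e2 : g ⁅v, z⁆ u = - g ⁅z, v⁆ u := gskew v z u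
    have e3 : g ⁅u, v⁆ z = - g ⁅v, u⁆ z := gskew u v z
    have e4 : g v u = g u v := hsymm v u
    have e5 : g u ⁅z, v⁆ = g ⁅z, v⁆ u := hsymm u ⁅z, v⁆
    rw [e1, e3] at A
    rw [e2, e4] at B
    rw [e5]
    linarith [A, B]
  -- The invariant positive semi-definite form P
  set T : G → ℝ := fun x => LinearMap.trace ℝ G (N x) with hT
  have hTadd : ∀ x y : G, T (x + y) = T x + T y := by
    intro x y; simp [hT, map_add]
  have hTsmul : ∀ (c : ℝ) (x : G), T (c • x) = c * T x := by
    intro c x; simp [hT, _root_.map_smul]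
  set Pf : G → G → ℝ := fun x y =>
    θ x * T y + θ y * T x - LinearMap.trace ℝ G (N x * N y) with hPf
  have hQadd : ∀ x y z : G, Pf (x + y) z = Pf x z + Pf y z := by
    intro x y z
    simp only [hPf, map_add, hTadd, add_mul, mul_add, add_mul]
    ring
  have hQsmul : ∀ (c : ℝ) (x z : G), Pf (c • x) z = c * Pf x z := by
    intro c x z
    simp only [hPf, _root_.map_smul, hTsmul, smul_eq_mul]
    rw [smul_mul_assoc, _root_.map_smul, smul_eq_mul]
    ring
  have hPfsymm : ∀ x y : G, Pf x y = Pf y x := by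
    intro x y
    simp only [hPf]
    rw [LinearMap.trace_mul_comm]
    ring
  set P : LinearMap.BilinForm ℝ G := LinearMap.mk₂ ℝ Pf
    (fun x y z => hQadd x y z)
    (fun c x z => by rw [hQsmul c x z, smul_eq_mul])
    (fun x y z => by rw [hPfsymm x (y + z), hQadd, hPfsymm y x, hPfsymm z x])
    (fun c x z => by rw [hPfsymm x (c • z), hQsmul, hPfsymm z x, smul_eq_mul]) with hP
  have hPapp : ∀ x y : G, P x y = Pf x y := fun x y => rfl
  -- trace of N ⁅z,x⁆ is zero
  have hTlie : ∀ z x : G, T ⁅z, x⁆ = 0 := by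
    intro z x
    simp only [hT, hrep, map_sub]
    rw [LinearMap.trace_mul_comm]
    ring
  -- invariance of P
  have hPinv : ∀ z x y : G, P ⁅z, x⁆ y = - P x ⁅z, y⁆ := by
    intro z x y
    rw [hPapp, hPapp]
    simp only [hPf, hclosed, hTlie, zero_mul, mul_zero, add_zero, zero_add]
    have c1 : LinearMap.trace ℝ G (N ⁅z, x⁆ * N y) =
        LinearMap.trace ℝ G (N z * N x * N y) - LinearMap.trace ℝ G (N x * N z * N y) := by
      rw [hrep, sub_mul, map_sub]
    have c2 : LinearMap.trace ℝ G (N x * N ⁅z, y⁆) =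
        LinearMap.trace ℝ G (N x * (N z * N y)) - LinearMap.trace ℝ G (N x * (N y * N z)) := by
      rw [hrep, mul_sub, map_sub]
    have c3 : LinearMap.trace ℝ G (N x * (N z * N y)) =
        LinearMap.trace ℝ G (N x * N z * N y) := by rw [mul_assoc]
    have c4 : LinearMap.trace ℝ G (N x * (N y * N z)) =
        LinearMap.trace ℝ G (N z * N x * N y) := by
      rw [LinearMap.trace_mul_comm, mul_assoc, LinearMap.trace_mul_comm]
    rw [c1, c2, c3, c4]
    ring
  -- P vanishes when either argument is in the kernel
  have hPrad : ∀ u y : G, N u = 0 → P u y = 0 ∧ P y u = 0 := by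
    intro u y hu
    have h0 : θ u = 0 := hθI u hu
    have hTu : T u = 0 := by simp [hT, hu]
    constructor
    · rw [hPapp]; simp [hPf, h0, hTu, hu]
    · rw [hPapp]; simp [hPf, h0, hTu, hu]
  -- inner product space structure coming from g
  let gCore : InnerProductSpace.Core ℝ G :=
    { inner := fun x y => g x y
      conj_inner_symm := fun x y => by simpa using hsymm y x
      re_inner_nonneg := fun x => by
        by_cases hx : x = 0
        · simp [hx]
        · simpa using (hpos x hx).le
      add_left := fun x y z => by simp
      smul_left := fun x y r => by simp
      definite := fun x hx => by
        by_contra h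
        exact (hpos x h).ne' (by simpa using hx) }
  letI : NormedAddCommGroup G := @InnerProductSpace.Core.toNormedAddCommGroup ℝ G _ _ _ gCore
  letI : InnerProductSpace ℝ G := InnerProductSpace.ofCore gCore.toCore
  have hinner : ∀ x y : G, (inner ℝ x y : ℝ) = g x y := fun x y => rfl
  -- P x x = 0 implies N x = 0
  have hPdef : ∀ x : G, P x x = 0 → N x = 0 := by
    intro x hx
    set f' : Module.End ℝ G := (2 * θ x) • (1 : Module.End ℝ G) - N x with hf'
    have hadj : ∀ u v : G, (inner ℝ ((N x) u) v : ℝ) = inner ℝ u (f' v) := by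
      intro u v
      rw [hinner, hinner, hf']
      have expand : g u (((2 * θ x) • (1 : Module.End ℝ G) - N x) v) =
          2 * θ x * g u v - g u (N x v) := by
        rw [LinearMap.sub_apply, map_sub, LinearMap.smul_apply, Module.End.one_apply,
          _root_.map_smul, smul_eq_mul]
      rw [expand]
      linarith [hP1 x u v]
    have h0 : LinearMap.trace ℝ G ((N x) ∘ₗ f') = 0 := by
      have hcomp : (N x) ∘ₗ f' = (2 * θ x) • (N x) - N x * N x := by
        rw [hf']
        ext v
        simp only [LinearMap.comp_apply, LinearMap.sub_apply, LinearMap.smul_apply,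
          Module.End.one_apply, Module.End.mul_apply, map_sub, _root_.map_smul]
      rw [hcomp, map_sub, _root_.map_smul, smul_eq_mul]
      have hx' := hx
      rw [hPapp] at hx'
      simp only [hPf] at hx'
      have hTx : T x = LinearMap.trace ℝ G (N x) := rfl
      rw [hTx] at hx'
      linarith [hx']
    have hf'0 : f' = 0 := adjoint_trace_zero_imp (N x) f' hadj h0
    have hNx : N x = (2 * θ x) • (1 : Module.End ℝ G) := by
      have := sub_eq_zero.mp hf'0
      rw [← this]
    have hθx : θ x = 0 := by
      have h := hP1 x w w
      rw [hNx] at h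
      simp only [LinearMap.smul_apply, Module.End.one_apply, _root_.map_smul,
        smul_eq_mul] at h
      have h2 : 2 * θ x * g w w = 0 := by linarith
      rcases mul_eq_zero.mp h2 with h3 | h3
      · rcases mul_eq_zero.mp h3 with h4 | h4
        · norm_num at h4
        · exact h4
      · exact absurd h3 (ne_of_gt hgw)
    rw [hNx, hθx]
    simp
  -- complement of the kernel
  set I : Submodule ℝ G := LinearMap.ker N with hI
  obtain ⟨Q, hIQ⟩ := Submodule.exists_isCompl I
  set πI := I.linearProjOfIsCompl Q hIQ with hπI
  set πQ := Q.linearProjOfIsCompl I hIQ.symm with hπQ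
  have hidsum : ∀ x : G, ((πI x : G) + (πQ x : G)) = x := fun x =>
    Submodule.projection_add_projection_eq_self hIQ x
  -- trace splitting
  have hsplit : ∀ f : G →ₗ[ℝ] G, LinearMap.trace ℝ G f =
      LinearMap.trace ℝ ↥I (πI ∘ₗ (f ∘ₗ I.subtype)) +
      LinearMap.trace ℝ ↥Q (πQ ∘ₗ (f ∘ₗ Q.subtype)) := by
    intro f
    have hident : I.subtype ∘ₗ πI + Q.subtype ∘ₗ πQ = LinearMap.id := by
      ext x
      simpa using hidsum x
    have step1 : f = (f ∘ₗ I.subtype) ∘ₗ πI + (f ∘ₗ Q.subtype) ∘ₗ πQ := by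
      conv_lhs => rw [← LinearMap.comp_id f, ← hident]
      rw [LinearMap.comp_add, LinearMap.comp_assoc, LinearMap.comp_assoc]
    conv_lhs => rw [step1]
    rw [map_add, LinearMap.trace_comp_comm' πI (f ∘ₗ I.subtype),
      LinearMap.trace_comp_comm' πQ (f ∘ₗ Q.subtype)]
  -- the first block
  have hb1 : ∀ z : G, LinearMap.trace ℝ ↥I
      (πI ∘ₗ (((LieAlgebra.ad ℝ G z : Module.End ℝ G)) ∘ₗ I.subtype)) =
      (Module.finrank ℝ ↥I : ℝ) * θ z := by
    intro z
    set f1 : ↥I →ₗ[ℝ] ↥I := πI ∘ₗ (((LieAlgebra.ad ℝ G z : Module.End ℝ G)) ∘ₗ I.subtype)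
      with hf1
    have hcoe : ∀ u : ↥I, (f1 u : G) = ⁅z, (u : G)⁆ := by
      intro u
      have hmemu : (u : G) ∈ LinearMap.ker N := u.2
      have hmem : ⁅z, (u : G)⁆ ∈ I :=
        LinearMap.mem_ker.mpr (hkerlie z u (LinearMap.mem_ker.mp hmemu))
      have : f1 u = ⟨⁅z, (u : G)⁆, hmem⟩ := by
        rw [hf1]
        simp only [LinearMap.comp_apply, Submodule.subtype_apply, LieAlgebra.ad_apply]
        exact Submodule.linearProjOfIsCompl_apply_left hIQ ⟨⁅z, (u : G)⁆, hmem⟩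
      rw [this]
    have htr0 : LinearMap.trace ℝ ↥I (f1 - θ z • LinearMap.id) = 0 := by
      apply skew_trace_zero (g.compl₁₂ I.subtype I.subtype)
      · refine LinearMap.BilinForm.Nondegenerate.ofSeparatingLeft fun u hu => ?_
        have h1 := hu u
        simp only [LinearMap.compl₁₂_apply, Submodule.subtype_apply] at h1
        have hzero : (u : G) = 0 := by
          by_contra hne
          exact (hpos _ hne).ne' h1
        exact Subtype.ext hzero
      · intro u v
        simp only [LinearMap.compl₁₂_apply, Submodule.subtype_apply, LinearMap.sub_apply,
          LinearMap.smul_apply, LinearMap.id_apply, Submodule.coe_sub, Submodule.coe_smul,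
          hcoe]
        have h5 := hF5 z (u : G) (v : G) (LinearMap.mem_ker.mp u.2) (LinearMap.mem_ker.mp v.2)
        have e1 : g (⁅z, (u : G)⁆ - θ z • (u : G)) (v : G) =
            g ⁅z, (u : G)⁆ (v : G) - θ z * g (u : G) (v : G) := by
          rw [map_sub, LinearMap.sub_apply, _root_.map_smul, LinearMap.smul_apply, smul_eq_mul]
        have e2 : g (u : G) (⁅z, (v : G)⁆ - θ z • (v : G)) =
            g (u : G) ⁅z, (v : G)⁆ - θ z * g (u : G) (v : G) := by
          rw [map_sub, _root_.map_smul, smul_eq_mul]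
        rw [e1, e2]
        linarith [h5]
    have hexp : LinearMap.trace ℝ ↥I f1 =
        LinearMap.trace ℝ ↥I (f1 - θ z • LinearMap.id) +
        θ z * (Module.finrank ℝ ↥I : ℝ) := by
      rw [map_sub, _root_.map_smul, smul_eq_mul, LinearMap.trace_id]
      ring
    rw [hexp, htr0]
    ring
  -- the second block
  have hb2 : ∀ z : G, LinearMap.trace ℝ ↥Q
      (πQ ∘ₗ (((LieAlgebra.ad ℝ G z : Module.End ℝ G)) ∘ₗ Q.subtype)) = 0 := by
    intro z
    apply skew_trace_zero (P.compl₁₂ Q.subtype Q.subtype)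
    · refine LinearMap.BilinForm.Nondegenerate.ofSeparatingLeft fun u hu => ?_
      have h1 := hu u
      simp only [LinearMap.compl₁₂_apply, Submodule.subtype_apply] at h1
      have hNu : N (u : G) = 0 := hPdef _ h1
      have hmem : (u : G) ∈ I := LinearMap.mem_ker.mpr hNu
      have hzero : (u : G) = 0 :=
        Submodule.disjoint_def.mp hIQ.disjoint (u : G) hmem u.2
      exact Subtype.ext hzero
    · intro x y
      simp only [LinearMap.compl₁₂_apply, Submodule.subtype_apply, LinearMap.comp_apply,
        LieAlgebra.ad_apply]
      have hdec : ∀ v : G, ((πQ v : G)) = v - (πI v : G) := by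
        intro v
        have := hidsum v
        exact eq_sub_of_add_eq' this
      rw [hdec ⁅z, (x : G)⁆, hdec ⁅z, (y : G)⁆]
      have hNpi : ∀ v : G, N ((πI v : G)) = 0 := fun v => LinearMap.mem_ker.mp (πI v).2
      have r1 : P ((πI ⁅z, (x : G)⁆ : G)) (y : G) = 0 := (hPrad _ _ (hNpi _)).1
      have r2 : P (x : G) ((πI ⁅z, (y : G)⁆ : G)) = 0 := (hPrad _ _ (hNpi _)).2
      have e1 : P (⁅z, (x : G)⁆ - (πI ⁅z, (x : G)⁆ : G)) (y : G) =
          P ⁅z, (x : G)⁆ (y : G) - P ((πI ⁅z, (x : G)⁆ : G)) (y : G) := by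
        rw [map_sub, LinearMap.sub_apply]
      have e2 : P (x : G) (⁅z, (y : G)⁆ - (πI ⁅z, (y : G)⁆ : G)) =
          P (x : G) ⁅z, (y : G)⁆ - P (x : G) ((πI ⁅z, (y : G)⁆ : G)) := by
        rw [map_sub]
      rw [e1, e2, r1, r2, hPinv z (x : G) (y : G)]
      ring
  -- the key trace formula
  have key : ∀ z : G, LinearMap.trace ℝ G (LieAlgebra.ad ℝ G z) =
      (Module.finrank ℝ ↥I : ℝ) * θ z := by
    intro z
    rw [hsplit (LieAlgebra.ad ℝ G z : Module.End ℝ G), hb1 z, hb2 z, add_zero]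
  constructor
  · intro hU
    have hk : (Module.finrank ℝ ↥I : ℝ) * θ w = 0 := by
      rw [← key w]; exact hU w
    have hk0 : (Module.finrank ℝ ↥I : ℝ) = 0 := by
      rcases mul_eq_zero.mp hk with h | h
      · exact h
      · exact absurd h hw
    have hk1 : Module.finrank ℝ ↥I = 0 := by exact_mod_cast hk0
    have := Submodule.finrank_eq_zero.mp hk1
    rw [hI] at this
    exact this
  · intro hbot z
    have hk0 : Module.finrank ℝ ↥I = 0 := by
      rw [hbot]
      exact finrank_bot ℝ G
    rw [key z, hk0]
    simp
end

section
/- If (g,θ) is a conformally flat LCP structure on a unimodular Lie algebra 𝔤, then the left-invariant Levi-Civita covariant derivative of θ vanishes: ∇^g_x θ^♯ = 0 for all x ∈ 𝔤, where θ^♯ is the g-dual vector of θ. -/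
/-- If `(g,θ)` is a conformally flat LCP structure on a unimodular Lie algebra `𝔤`,
then the Levi-Civita covariant derivative of `θ` vanishes: `∇^g_x θ^♯ = 0` for all `x`. -/
theorem conformallyFlat_unimodular_theta_parallel
    {G : Type*} [LieRing G] [LieAlgebra ℝ G] [FiniteDimensional ℝ G]
    (g : LinearMap.BilinForm ℝ G)
    (hsymm : ∀ x y : G, g x y = g y x)
    (hpos : ∀ x : G, x ≠ 0 → 0 < g x x)
    (θ : G →ₗ[ℝ] ℝ) (hθ : θ ≠ 0) (hclosed : ∀ x y : G, θ ⁅x, y⁆ = 0)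
    -- the g-dual vector of θ
    (θs : G) (hθs : ∀ x : G, g θs x = θ x)
    -- the Levi-Civita map, given by Koszul's formula
    (LC : G →ₗ[ℝ] Module.End ℝ G)
    (hLC : ∀ x y z : G, g (LC x y) z =
      (g ⁅x, y⁆ z - g ⁅x, z⁆ y - g ⁅y, z⁆ x) / 2)
    -- the Weyl connection ∇^θ_x = ∇^g_x + θ∧x + θ(x)Id is a representation
    (N : G →ₗ[ℝ] Module.End ℝ G)
    (hNdef : ∀ x y : G, N x y = LC x y + (θ y • x - g x y • θs) + θ x • y)
    (hrep : ∀ x y : G, N ⁅x, y⁆ = N x * N y - N y * N x)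
    (hunim : ∀ x : G, LinearMap.trace ℝ G (LieAlgebra.ad ℝ G x) = 0) :
    ∀ x : G, LC x θs = 0 := by
  classical
  -- scalar basics
  have hgs : ∀ x : G, g x θs = θ x := fun x => (hsymm x θs).trans (hθs x)
  have hlie : ∀ x y z : G, g ⁅x, y⁆ z = - g ⁅y, x⁆ z := by
    intro x y z
    rw [← lie_skew y x, map_neg, LinearMap.neg_apply, neg_neg]
  -- skew-symmetry of LC x
  have hsk : ∀ x y z : G, g (LC x y) z = - g (LC x z) y := by
    intro x y z
    rw [hLC, hLC, hlie z y]
    ring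
  -- torsion-free (scalar form)
  have htor : ∀ x y z : G, g (LC x y) z = g (LC y x) z + g ⁅x, y⁆ z := by
    intro x y z
    rw [hLC, hLC, hlie y x]
    ring
  -- u := LC θs θs
  set u : G := LC θs θs with hu
  have hu0 : θ u = 0 := by
    have h1 := hsk θs θs θs
    have h2 : g u θs = 0 := by rw [hu]; linarith
    rw [← hθs u, hsymm θs u, h2]
  -- symmetry of P := LC · θs
  have hPsymm : ∀ x z : G, g (LC x θs) z = g (LC z θs) x := by
    intro x z
    rw [hLC, hLC, hgs ⁅x,z⁆, hgs ⁅z,x⁆, hclosed, hclosed, hlie x θs, hlie z θs]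
    ring
  -- explicit formula for P
  have hPform : ∀ x z : G, g (LC x θs) z = -(g ⁅θs, x⁆ z + g ⁅θs, z⁆ x) / 2 := by
    intro x z
    rw [hLC, hgs ⁅x,z⁆, hclosed, hlie x θs]
    ring
  -- the key curvature identity, scalar form
  have keyg : ∀ x z : G, g (LC ⁅x, θs⁆ θs) z =
      g (LC x u) z - g (LC θs (LC x θs)) z - θ θs * g (LC x θs) z
        - g x u * θ z + θ x * g u z := by
    intro x z
    have h := congrArg (fun v : G => g v z) (DFunLike.congr_fun (hrep x θs) θs)
    simp only [LinearMap.sub_apply, Module.End.mul_apply, hNdef, map_add, map_sub, map_smul,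
      LinearMap.add_apply, LinearMap.sub_apply, LinearMap.smul_apply, smul_eq_mul,
      hθs, hgs, hclosed, hu0, ← hu] at h
    have htg : g (LC θs x) z = g (LC x θs) z - g ⁅x, θs⁆ z := by
      rw [htor θs x z, hlie θs x]; ring
    linear_combination h - θ θs * htg
  -- positive semidefiniteness
  have hgnn : ∀ v : G, 0 ≤ g v v := by
    intro v
    rcases eq_or_ne v 0 with h | h
    · simp [h]
    · exact (hpos v h).le
  -- inner product space structure coming from g
  letI c : InnerProductSpace.Core ℝ G :=
    { inner := fun x y => g x y
      conj_inner_symm := fun x y => by simpa using hsymm y x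
      re_inner_nonneg := fun x => by simpa using hgnn x
      add_left := fun x y z => by simp
      smul_left := fun x y r => by simp
      definite := fun x hx => by
        by_contra h
        exact absurd hx (ne_of_gt (hpos x h)) }
  letI : NormedAddCommGroup G := c.toNormedAddCommGroup
  letI : InnerProductSpace ℝ G := InnerProductSpace.ofCore c.toCore
  have hinner : ∀ v w : G, (inner ℝ v w : ℝ) = g v w := fun _ _ => rfl
  set b := stdOrthonormalBasis ℝ G with hb
  -- trace via the orthonormal basis
  have bridge : ∀ M : G →ₗ[ℝ] G,
      LinearMap.trace ℝ G M = ∑ i, g (M (b i)) (b i) := by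
    intro M
    rw [LinearMap.trace_eq_matrix_trace ℝ b.toBasis M, Matrix.trace]
    refine Finset.sum_congr rfl fun i _ => ?_
    rw [Matrix.diag_apply, LinearMap.toMatrix_apply, OrthonormalBasis.coe_toBasis_repr_apply,
      OrthonormalBasis.repr_apply_apply, OrthonormalBasis.coe_toBasis]
    exact (hinner _ _).trans (hsymm _ _)
  have diag0 : ∀ (w : G) (i), g (LC w (b i)) (b i) = 0 := by
    intro w i; have := hsk w (b i) (b i); linarith
  have trad : ∀ w : G, ∑ i, g ⁅w, b i⁆ (b i) = 0 := by
    intro w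
    have h := hunim w
    rw [bridge] at h
    simpa [LieAlgebra.ad_apply] using h
  have sum1 : ∀ w : G, ∑ i, g (LC (b i) w) (b i) = 0 := by
    intro w
    calc ∑ i, g (LC (b i) w) (b i)
        = ∑ i, (g (LC w (b i)) (b i) + g ⁅b i, w⁆ (b i)) :=
          Finset.sum_congr rfl fun i _ => htor _ _ _
      _ = ∑ i, - g ⁅w, b i⁆ (b i) := by
          refine Finset.sum_congr rfl fun i _ => ?_
          rw [diag0, hlie (b i) w (b i)]; ring
      _ = - ∑ i, g ⁅w, b i⁆ (b i) := by rw [Finset.sum_neg_distrib]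
      _ = 0 := by rw [trad w, neg_zero]
  set Pm : G →ₗ[ℝ] G := LC.flip θs with hPmdef
  have hPm : ∀ x : G, Pm x = LC x θs := fun x => rfl
  have adA : ∀ v x : G, (LieAlgebra.ad ℝ G v) x = ⁅v, x⁆ := fun v x => rfl
  -- the sum Σ g(LCθs (LC eᵢ θs), eᵢ) vanishes (skew ∘ symmetric)
  have τ0 : ∑ i, g (LC θs (LC (b i) θs)) (b i) = 0 := by
    have h1 : ∀ i, g (LC θs (LC (b i) θs)) (b i)
        = - g ((Pm * (LC θs : Module.End ℝ G)) (b i)) (b i) := by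
      intro i
      rw [hsk θs (LC (b i) θs) (b i), hsymm (LC θs (b i)) (LC (b i) θs),
        hPsymm (b i) (LC θs (b i))]
      rfl
    have h2 : ∑ i, g (LC θs (LC (b i) θs)) (b i)
        = - LinearMap.trace ℝ G (Pm * (LC θs : Module.End ℝ G)) := by
      rw [bridge, ← Finset.sum_neg_distrib]
      exact Finset.sum_congr rfl fun i _ => h1 i
    have h3 : ∑ i, g (LC θs (LC (b i) θs)) (b i)
        = LinearMap.trace ℝ G ((LC θs : Module.End ℝ G) * Pm) := by
      rw [bridge]
      exact Finset.sum_congr rfl fun i _ => rfl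
    rw [LinearMap.trace_mul_comm] at h2
    linarith [h2, h3]
  -- expansion of linear functionals in the basis
  have hexp : ∀ v : G, ∑ i, g (b i) v * θ (b i) = θ v := by
    intro v
    conv_rhs => rw [← b.sum_repr v]
    rw [map_sum]
    refine Finset.sum_congr rfl fun i _ => ?_
    have hr : (b.repr v i : ℝ) = g (b i) v :=
      (OrthonormalBasis.repr_apply_apply b v i).trans (hinner _ _)
    rw [map_smul, smul_eq_mul, hr]
  have hexp2 : ∀ v : G, ∑ i, θ (b i) * g v (b i) = θ v := by
    intro v
    rw [← hexp v]
    exact Finset.sum_congr rfl fun i _ => by rw [hsymm v (b i), mul_comm]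
  -- the trace of Pm ∘ ad(θs) vanishes: sum the key identity over the basis
  have T0 : LinearMap.trace ℝ G (Pm * LieAlgebra.ad ℝ G θs) = 0 := by
    have hL : LinearMap.trace ℝ G (Pm * LieAlgebra.ad ℝ G θs)
        = - ∑ i, g (LC ⁅b i, θs⁆ θs) (b i) := by
      rw [bridge, ← Finset.sum_neg_distrib]
      refine Finset.sum_congr rfl fun i _ => ?_
      have hsw : (⁅b i, θs⁆ : G) = -⁅θs, b i⁆ := (lie_skew (b i) θs).symm
      rw [hsw]
      simp only [Module.End.mul_apply, adA, hPm, map_neg, LinearMap.neg_apply]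
      simp
    have hR : ∑ i, g (LC ⁅b i, θs⁆ θs) (b i) = 0 := by
      calc ∑ i, g (LC ⁅b i, θs⁆ θs) (b i)
          = ∑ i, (g (LC (b i) u) (b i) - g (LC θs (LC (b i) θs)) (b i)
              - θ θs * g (LC (b i) θs) (b i) - g (b i) u * θ (b i) + θ (b i) * g u (b i)) :=
            Finset.sum_congr rfl fun i _ => keyg (b i) (b i)
        _ = 0 := by
            rw [Finset.sum_add_distrib, Finset.sum_sub_distrib, Finset.sum_sub_distrib,
              Finset.sum_sub_distrib, ← Finset.mul_sum, sum1 u, τ0, sum1 θs, hexp u, hexp2 u, hu0]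
            ring
    rw [hL, hR, neg_zero]
  -- Σ |Pm eᵢ|² = 0
  have hA : ∑ i, g ⁅θs, Pm (b i)⁆ (b i) = 0 := by
    have h := bridge (LieAlgebra.ad ℝ G θs * Pm)
    rw [LinearMap.trace_mul_comm, T0] at h
    exact (Finset.sum_congr rfl fun i _ => rfl).trans h.symm
  have hB : ∑ i, g ⁅θs, b i⁆ (Pm (b i)) = 0 := by
    have h := bridge (Pm * LieAlgebra.ad ℝ G θs)
    rw [T0] at h
    refine Eq.trans ?_ h.symm
    refine Finset.sum_congr rfl fun i _ => ?_
    rw [hsymm ⁅θs, b i⁆ (Pm (b i)), hPm, hPsymm (b i) ⁅θs, b i⁆]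
    rfl
  have Psum0 : ∑ i, g (Pm (b i)) (Pm (b i)) = 0 := by
    have h1 : ∀ i, g (Pm (b i)) (Pm (b i))
        = -(g ⁅θs, b i⁆ (Pm (b i)) + g ⁅θs, Pm (b i)⁆ (b i)) / 2 := by
      intro i
      rw [hPm]
      exact hPform (b i) (Pm (b i))
    calc ∑ i, g (Pm (b i)) (Pm (b i))
        = ∑ i, (-(g ⁅θs, b i⁆ (Pm (b i)) + g ⁅θs, Pm (b i)⁆ (b i)) / 2) :=
          Finset.sum_congr rfl fun i _ => h1 i
      _ = -((∑ i, g ⁅θs, b i⁆ (Pm (b i))) + ∑ i, g ⁅θs, Pm (b i)⁆ (b i)) / 2 := by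
          rw [← Finset.sum_add_distrib, ← Finset.sum_neg_distrib, ← Finset.sum_div]
      _ = 0 := by rw [hA, hB]; ring
  have hz : ∀ i, Pm (b i) = 0 := by
    have hnn : ∀ i ∈ Finset.univ, (0:ℝ) ≤ g (Pm (b i)) (Pm (b i)) := fun i _ => hgnn _
    have hall := (Finset.sum_eq_zero_iff_of_nonneg hnn).mp Psum0
    intro i
    by_contra hne
    exact absurd (hall i (Finset.mem_univ i)) (ne_of_gt (hpos _ hne))
  intro x
  have hPx : Pm x = 0 := by
    conv_lhs => rw [← b.sum_repr x]
    rw [map_sum]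
    simp [hz]
  exact (hPm x).symm.trans hPx
end

section
/- Every proper LCP structure (g,θ,𝔲) on a unimodular Lie algebra 𝔤 is adapted, i.e., θ vanishes on 𝔲. -/
open Module

lemma lcp_aux_exists_on_basis {V : Type*} [AddCommGroup V] [Module ℝ V]
    [FiniteDimensional ℝ V] (B : LinearMap.BilinForm ℝ V)
    (hs : ∀ x y, B x y = B y x) (hp : ∀ x, x ≠ 0 → 0 < B x x) :
    ∃ b : Basis (Fin (Module.finrank ℝ V)) ℝ V,
      ∀ i j, B (b i) (b j) = if i = j then 1 else 0 := by
  have hsy : LinearMap.IsSymm B := by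
    exact ⟨fun x y => hs x y⟩
  obtain ⟨v, hv⟩ := LinearMap.BilinForm.exists_orthogonal_basis hsy
  have hpos : ∀ i, 0 < B (v i) (v i) := fun i => hp _ (v.ne_zero i)
  set w : Fin (Module.finrank ℝ V) → ℝˣ :=
    fun i => Units.mk0 ((Real.sqrt (B (v i) (v i)))⁻¹)
      (inv_ne_zero (ne_of_gt (Real.sqrt_pos.mpr (hpos i)))) with hw
  refine ⟨v.unitsSMul w, fun i j => ?_⟩
  rw [Basis.unitsSMul_apply, Basis.unitsSMul_apply, Units.smul_def, Units.smul_def]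
  have hBv : B ((w i : ℝ) • v i) ((w j : ℝ) • v j)
      = (w i : ℝ) * (w j : ℝ) * B (v i) (v j) := by
    simp [map_smul, smul_eq_mul]; ring
  rw [hBv]
  by_cases h : i = j
  · subst h
    simp only [if_pos rfl, hw, Units.val_mk0]
    rw [← mul_inv, Real.mul_self_sqrt (hpos i).le]
    exact inv_mul_cancel₀ (ne_of_gt (hpos i))
  · rw [hv h, if_neg h, mul_zero]

set_option maxHeartbeats 1600000 in
/-- Every proper LCP structure `(g,θ,𝔲)` on a unimodular Lie algebra is adapted,
i.e. `θ` vanishes on `𝔲`. -/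
theorem proper_lcp_unimodular_adapted
    {G : Type*} [LieRing G] [LieAlgebra ℝ G] [FiniteDimensional ℝ G]
    (g : LinearMap.BilinForm ℝ G)
    (hsymm : ∀ x y : G, g x y = g y x)
    (hpos : ∀ x : G, x ≠ 0 → 0 < g x x)
    -- θ : non-zero closed 1-form
    (θ : G →ₗ[ℝ] ℝ) (hθ : θ ≠ 0) (hclosed : ∀ x y : G, θ ⁅x, y⁆ = 0)
    -- 𝔲 : non-zero subspace
    (U : Submodule ℝ G) (hUne : U ≠ ⊥)
    -- the Weyl connection ∇^θ determined by g and θ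
    (N : G →ₗ[ℝ] Module.End ℝ G)
    (hN : ∀ x y z : G, g (N x y) z =
      (g ⁅x, y⁆ z - g ⁅x, z⁆ y - g ⁅y, z⁆ x) / 2
        + θ x * g y z + θ y * g x z - θ z * g x y)
    -- (1) 𝔲 and 𝔲^⊥ are Lie subalgebras
    (hUsub : ∀ u ∈ U, ∀ v ∈ U, ⁅u, v⁆ ∈ U)
    (hPsub : ∀ x ∈ LinearMap.BilinForm.orthogonal g U,
             ∀ y ∈ LinearMap.BilinForm.orthogonal g U,
             ⁅x, y⁆ ∈ LinearMap.BilinForm.orthogonal g U)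
    -- (2)
    (h2 : ∀ u ∈ U, ∀ x ∈ LinearMap.BilinForm.orthogonal g U,
      g ⁅u, x⁆ x = θ u * g x x ∧ g ⁅x, u⁆ u = θ x * g u u)
    -- (3) 𝔲 is ∇^θ-parallel and x ↦ ∇^θ_x|_𝔲 is a Lie algebra representation
    (hpar : ∀ x : G, ∀ u ∈ U, N x u ∈ U)
    (hrep : ∀ x y : G, ∀ u ∈ U, N ⁅x, y⁆ u = N x (N y u) - N y (N x u))
    -- the LCP structure is proper
    (hproper : U ≠ ⊤)
    -- 𝔤 is unimodular
    (hunim : ∀ x : G, LinearMap.trace ℝ G (LieAlgebra.ad ℝ G x) = 0) :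
    ∀ u ∈ U, θ u = 0 := by
  classical
  -- basic nondegeneracy
  have hnd : ∀ w : G, (∀ z : G, g w z = 0) → w = 0 := by
    intro w h
    by_contra hw
    exact (hpos w hw).ne' (h w)
  set P := LinearMap.BilinForm.orthogonal g U with hPdef
  have hPmem : ∀ x ∈ P, ∀ u ∈ U, g u x = 0 := by
    intro x hx u hu
    exact (LinearMap.BilinForm.mem_orthogonal_iff.mp hx) u hu
  have hrefl : g.IsRefl := by
    intro x y h; rw [hsymm]; exact h
  have hrestU : (g.restrict U).Nondegenerate := by
    refine LinearMap.BilinForm.Nondegenerate.ofSeparatingLeft ?_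
    intro m hm
    ext
    by_contra hm0
    exact (hpos (m : G) hm0).ne' (by simpa using hm m)
  have hcompl : IsCompl U P :=
    LinearMap.BilinForm.isCompl_orthogonal_of_restrict_nondegenerate hrefl hrestU
  -- orthonormal bases
  obtain ⟨bU, hbU⟩ := lcp_aux_exists_on_basis (g.restrict U)
    (fun x y => by simpa using hsymm x y)
    (fun x hx => by
      have : (x : G) ≠ 0 := fun h => hx (Subtype.ext h)
      simpa using hpos (x : G) this)
  obtain ⟨bP, hbP⟩ := lcp_aux_exists_on_basis (g.restrict P)
    (fun x y => by simpa using hsymm x y)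
    (fun x hx => by
      have : (x : G) ≠ 0 := fun h => hx (Subtype.ext h)
      simpa using hpos (x : G) this)
  set e : Fin (Module.finrank ℝ U) → G := fun i => (bU i : G) with he
  set fv : Fin (Module.finrank ℝ P) → G := fun j => (bP j : G) with hfv
  have he_mem : ∀ i, e i ∈ U := fun i => (bU i).2
  have hf_mem : ∀ j, fv j ∈ P := fun j => (bP j).2
  have hbU' : ∀ i j, g (e i) (e j) = if i = j then 1 else 0 := by
    intro i j; simpa using hbU i j
  have hbP' : ∀ i j, g (fv i) (fv j) = if i = j then 1 else 0 := by
    intro i j; simpa using hbP i j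
  -- the combined orthonormal basis of G
  set bG : Basis (Fin (Module.finrank ℝ U) ⊕ Fin (Module.finrank ℝ P)) ℝ G :=
    (bU.prod bP).map (Submodule.prodEquivOfIsCompl U P hcompl) with hbG
  have hbGl : ∀ i, bG (Sum.inl i) = e i := by
    intro i
    rw [hbG, Basis.map_apply, Submodule.coe_prodEquivOfIsCompl']
    have h1 : (bU.prod bP (Sum.inl i)).1 = bU i := Basis.prod_apply_inl_fst bU bP i
    have h2 : (bU.prod bP (Sum.inl i)).2 = 0 := Basis.prod_apply_inl_snd bU bP i
    rw [h1, h2]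
    simp [he]
  have hbGr : ∀ j, bG (Sum.inr j) = fv j := by
    intro j
    rw [hbG, Basis.map_apply, Submodule.coe_prodEquivOfIsCompl']
    have h1 : (bU.prod bP (Sum.inr j)).1 = 0 := Basis.prod_apply_inr_fst bU bP j
    have h2 : (bU.prod bP (Sum.inr j)).2 = bP j := Basis.prod_apply_inr_snd bU bP j
    rw [h1, h2]
    simp [hfv]
  have hONG : ∀ k l, g (bG k) (bG l) = if k = l then 1 else 0 := by
    rintro (i | i) (j | j)
    · rw [hbGl, hbGl, hbU']
      simp
    · rw [hbGl, hbGr]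
      rw [hPmem (fv j) (hf_mem j) (e i) (he_mem i)]
      simp
    · rw [hbGr, hbGl]
      rw [hsymm, hPmem (fv i) (hf_mem i) (e j) (he_mem j)]
      simp
    · rw [hbGr, hbGr, hbP']
      simp [Sum.inr.injEq]
  -- coordinates w.r.t. an orthonormal basis
  have hcoords : ∀ (x : G) k, bG.repr x k = g x (bG k) := by
    intro x k
    have h1 : g x (bG k) = ∑ l, bG.repr x l * g (bG l) (bG k) := by
      conv_lhs => rw [← bG.sum_repr x]
      rw [map_sum, LinearMap.sum_apply]
      simp [smul_eq_mul]
    rw [h1]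
    simp [hONG]
  have htrace : ∀ T : Module.End ℝ G,
      LinearMap.trace ℝ G T = ∑ k, g (T (bG k)) (bG k) := by
    intro T
    rw [LinearMap.trace_eq_matrix_trace ℝ bG T, Matrix.trace]
    congr 1
    funext k
    rw [Matrix.diag_apply, LinearMap.toMatrix_apply, hcoords]
  -- coordinates within U
  have hUcoord : ∀ (vU : U) (j), bU.repr vU j = g (vU : G) (e j) := by
    intro vU j
    have h2 : (∑ i, bU.repr vU i • e i) = (vU : G) := by
      have h3 := congrArg (U.subtype) (bU.sum_repr vU)
      simpa only [map_sum, map_smul, Submodule.subtype_apply] using h3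
    have h4 : g (vU : G) (e j) = ∑ i, bU.repr vU i * g (e i) (e j) := by
      conv_lhs => rw [← h2]
      rw [map_sum, LinearMap.sum_apply]
      simp [smul_eq_mul]
    rw [h4]
    simp [hbU']
  have hUexp : ∀ v ∈ U, v = ∑ i, g v (e i) • e i := by
    intro v hv
    have h2 : (∑ i, bU.repr ⟨v, hv⟩ i • e i) = v := by
      have h3 := congrArg (U.subtype) (bU.sum_repr ⟨v, hv⟩)
      simpa only [map_sum, map_smul, Submodule.subtype_apply] using h3
    conv_lhs => rw [← h2]
    refine Finset.sum_congr rfl fun i _ => ?_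
    rw [hUcoord ⟨v, hv⟩ i]
  -- the metric dual of θ inside U
  set ξ : G := ∑ i, θ (e i) • e i with hξdef
  have hξU : ξ ∈ U := Submodule.sum_mem U fun i _ => Submodule.smul_mem U _ (he_mem i)
  have hgξe : ∀ i, g ξ (e i) = θ (e i) := by
    intro i
    rw [hξdef, map_sum, LinearMap.sum_apply]
    simp [smul_eq_mul, hbU']
  have hgξv : ∀ v ∈ U, g ξ v = θ v := by
    intro v hv
    conv_lhs => rw [hUexp v hv]
    conv_rhs => rw [hUexp v hv]
    simp only [map_sum, map_smul, smul_eq_mul]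
    exact Finset.sum_congr rfl fun i _ => by rw [hgξe]
  set c : ℝ := θ ξ with hcdef
  have hθe : ∀ x y z : G, g (N x y) z + g (N x z) y = 2 * θ x * g y z := by
    intro x y z
    have h1 := hN x y z
    have h2 := hN x z y
    have h3 : g ⁅z, y⁆ x = - g ⁅y, z⁆ x := by
      rw [show (⁅z, y⁆ : G) = -⁅y, z⁆ by rw [← lie_skew y z, neg_neg], map_neg,
        LinearMap.neg_apply]
    have h4 : g y z = g z y := hsymm y z
    linear_combination h1 + h2 - h3 / 2 - θ x * h4
  have hNskew0 : ∀ x y : G, g (N x y) y = θ x * g y y := by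
    intro x y
    have := hθe x y y
    linarith
  have htor : ∀ x y : G, N x y - N y x = ⁅x, y⁆ := by
    intro x y
    apply eq_of_sub_eq_zero ∘ hnd _
    intro z
    have h1 := hN x y z
    have h2 := hN y x z
    have h3 : g ⁅y, x⁆ z = - g ⁅x, y⁆ z := by
      rw [show (⁅y, x⁆ : G) = -⁅x, y⁆ by rw [← lie_skew x y, neg_neg], map_neg,
        LinearMap.neg_apply]
    have h4 : g x y = g y x := hsymm x y
    simp only [map_sub, LinearMap.sub_apply]
    linear_combination h1 - h2 - h3 / 2 - θ z * h4
  -- the operators f and Aop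
  set f : G →ₗ[ℝ] G := N.flip ξ - θ.smulRight ξ with hfdef
  have hf_apply : ∀ x, f x = N x ξ - θ x • ξ := by
    intro x
    rw [hfdef]
    simp [LinearMap.sub_apply, LinearMap.flip_apply, LinearMap.smulRight_apply]
  set Aop : Module.End ℝ G := N ξ - c • (LinearMap.id : G →ₗ[ℝ] G) with hAdef
  have hA_apply : ∀ y, Aop y = N ξ y - c • y := by
    intro y
    rw [hAdef]
    simp [LinearMap.sub_apply, LinearMap.smul_apply]
  have hfU : ∀ x, f x ∈ U := by
    intro x
    rw [hf_apply]
    exact sub_mem (hpar x ξ hξU) (Submodule.smul_mem U _ hξU)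
  have hAU : ∀ u ∈ U, Aop u ∈ U := by
    intro u hu
    rw [hA_apply]
    exact sub_mem (hpar ξ u hu) (Submodule.smul_mem U _ hu)
  have hf_g : ∀ x y, g (f x) y = g (N x ξ) y - θ x * g ξ y := by
    intro x y
    rw [hf_apply]
    simp [map_sub, LinearMap.sub_apply, map_smul, smul_eq_mul]
  have hθN : ∀ u v : G, θ (N u v) = θ (N v u) := by
    intro u v
    have h1 := congrArg θ (htor u v)
    rw [hclosed u v] at h1
    simp only [map_sub, LinearMap.sub_apply] at h1
    linarith [h1]
  have hfkey : ∀ u ∈ U, ∀ v ∈ U, g (f u) v = θ u * θ v - θ (N u v) := by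
    intro u hu v hv
    have h1 := hθe u ξ v
    have h2 : g (N u v) ξ = θ (N u v) := by
      rw [hsymm]; exact hgξv _ (hpar u v hv)
    have h3 : g ξ v = θ v := hgξv v hv
    rw [hf_g]
    linear_combination h1 - h2 + θ u * h3 - θ u * h3 + (θ u) * h3
  have hfsymm : ∀ u ∈ U, ∀ v ∈ U, g (f u) v = g (f v) u := by
    intro u hu v hv
    rw [hfkey u hu v hv, hfkey v hv u hu, hθN u v]
    ring
  have hθf : ∀ x, θ (f x) = 0 := by
    intro x
    have h1 : θ (f x) = g (f x) ξ := by rw [← hgξv (f x) (hfU x), hsymm]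
    have h2 : g (N x ξ) ξ = θ x * g ξ ξ := hNskew0 x ξ
    rw [h1, hf_g, h2]
    ring
  have hfξ : f ξ = 0 := by
    by_contra h0
    have h1 : g (f ξ) (f ξ) = g (f (f ξ)) ξ := hfsymm ξ hξU (f ξ) (hfU ξ)
    have h2 : g (f (f ξ)) ξ = 0 := by
      rw [hsymm]
      rw [hgξv _ (hfU (f ξ))]
      exact hθf (f ξ)
    exact (hpos (f ξ) h0).ne' (h1.trans h2)
  have hNξξ : N ξ ξ = c • ξ := by
    have h1 := hf_apply ξ
    rw [hfξ] at h1
    exact sub_eq_zero.mp h1.symm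
  -- the key curvature identity on U
  have hkey : ∀ u ∈ U, f (f u) - f (Aop u) - c • f u = - Aop (f u) := by
    intro u hu
    have H := hrep u ξ ξ hξU
    have hNuξ : N u ξ = f u + θ u • ξ := by rw [hf_apply]; abel
    have hNξu : N ξ u = Aop u + c • u := by rw [hA_apply]; abel
    have hNξfu : N ξ (f u) = Aop (f u) + c • f u := by rw [hA_apply]; abel
    have hbr : (⁅u, ξ⁆ : G) = N u ξ - N ξ u := (htor u ξ).symm
    have hL : N ⁅u, ξ⁆ ξ = f ⁅u, ξ⁆ := by
      rw [hf_apply, hclosed, zero_smul, sub_zero]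
    have hL2 : f ⁅u, ξ⁆ = f (f u) - f (Aop u) - c • f u := by
      rw [hbr, map_sub, hNuξ, hNξu, map_add, map_add, map_smul, map_smul, hfξ, smul_zero]
      abel
    have hR : N u (N ξ ξ) - N ξ (N u ξ) = - Aop (f u) := by
      rw [hNξξ, map_smul, hNuξ, map_add, map_smul, hNξξ, hNξfu, smul_add,
        smul_smul, smul_smul, mul_comm (θ u) c]
      abel
    rw [← hL2, ← hL, H, hR]
  -- matrix coefficients
  set m : Fin (Module.finrank ℝ U) → Fin (Module.finrank ℝ U) → ℝ :=
    fun i j => g (f (e i)) (e j) with hm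
  set t : Fin (Module.finrank ℝ U) → ℝ := fun i => θ (e i) with ht
  have hms : ∀ i j, m i j = m j i := fun i j =>
    hfsymm (e i) (he_mem i) (e j) (he_mem j)
  have hfe : ∀ i, f (e i) = ∑ j, m i j • e j := fun i => hUexp (f (e i)) (hfU (e i))
  have hAe : ∀ i, Aop (e i) = ∑ j, g (Aop (e i)) (e j) • e j :=
    fun i => hUexp _ (hAU _ (he_mem i))
  have htc : (∑ i, t i * t i) = c := by
    rw [hcdef]
    conv_rhs => rw [hξdef]
    rw [map_sum]
    exact (Finset.sum_congr rfl fun i _ => by rw [map_smul, smul_eq_mul, ht]).symm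
  have hK1 : ∀ j, (∑ i, t i * m i j) = 0 := by
    intro j
    have h1 : f ξ = ∑ i, t i • f (e i) := by
      conv_lhs => rw [hξdef]
      rw [map_sum]
      exact Finset.sum_congr rfl fun i _ => by rw [map_smul, ht]
    have h2 := congrArg (fun w => g w (e j)) h1
    rw [hfξ] at h2
    simp only [map_sum, LinearMap.sum_apply, map_smul, LinearMap.smul_apply, smul_eq_mul,
      map_zero, LinearMap.zero_apply] at h2
    exact h2.symm
  -- unimodularity
  have htr0 : (∑ i, g ⁅ξ, e i⁆ (e i)) + (∑ j, g ⁅ξ, fv j⁆ (fv j)) = 0 := by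
    have h1 := hunim ξ
    rw [htrace (LieAlgebra.ad ℝ G ξ), Fintype.sum_sum_type] at h1
    simpa only [LieAlgebra.ad_apply, hbGl, hbGr] using h1
  have hsum2 : (∑ j, g ⁅ξ, fv j⁆ (fv j)) = (Module.finrank ℝ P : ℝ) * c := by
    have h1 : ∀ j, g ⁅ξ, fv j⁆ (fv j) = c := by
      intro j
      rw [(h2 ξ hξU (fv j) (hf_mem j)).1, hbP' j j, hcdef]
      simp
    rw [Finset.sum_congr rfl fun j _ => h1 j]
    simp [Finset.sum_const, mul_comm]
  have hsum1 : ∀ i, g ⁅ξ, e i⁆ (e i) = c - m i i - t i * t i := by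
    intro i
    have hb : (⁅ξ, e i⁆ : G) = N ξ (e i) - N (e i) ξ := (htor ξ (e i)).symm
    have h1 : g (N ξ (e i)) (e i) = c := by
      rw [hNskew0 ξ (e i), hbU' i i, hcdef]
      simp
    have h4 := hf_g (e i) (e i)
    rw [hgξe i] at h4
    rw [hb, map_sub, LinearMap.sub_apply, h1]
    have : m i i = g (f (e i)) (e i) := rfl
    have : t i = θ (e i) := rfl
    rw [hm, ht]
    linarith [h4]
  have hS1 : (∑ i, m i i)
      = ((Module.finrank ℝ U : ℝ) + (Module.finrank ℝ P : ℝ) - 1) * c := by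
    rw [Finset.sum_congr rfl fun i _ => hsum1 i, hsum2] at htr0
    rw [Finset.sum_sub_distrib, Finset.sum_sub_distrib, htc, Finset.sum_const] at htr0
    simp only [Finset.card_univ, Fintype.card_fin, nsmul_eq_mul] at htr0
    linarith [htr0]
  -- trace of f ∘ f
  have hff : ∀ i, g (f (f (e i))) (e i) = ∑ j, m i j * m j i := by
    intro i
    conv_lhs => rw [hfe i]
    rw [map_sum f, map_sum, LinearMap.sum_apply]
    exact Finset.sum_congr rfl fun j _ => by
      rw [map_smul, map_smul, LinearMap.smul_apply, smul_eq_mul]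
  have hfA : ∀ i, g (f (Aop (e i))) (e i) = ∑ j, g (Aop (e i)) (e j) * m j i := by
    intro i
    conv_lhs => rw [hAe i]
    rw [map_sum f, map_sum, LinearMap.sum_apply]
    exact Finset.sum_congr rfl fun j _ => by
      rw [map_smul, map_smul, LinearMap.smul_apply, smul_eq_mul]
  have hAf : ∀ i, g (Aop (f (e i))) (e i) = ∑ j, m i j * g (Aop (e j)) (e i) := by
    intro i
    conv_lhs => rw [hfe i]
    rw [map_sum Aop, map_sum, LinearMap.sum_apply]
    exact Finset.sum_congr rfl fun j _ => by
      rw [map_smul, map_smul, LinearMap.smul_apply, smul_eq_mul]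
  have hcomm : (∑ i, ∑ j, g (Aop (e i)) (e j) * m j i)
      = ∑ i, ∑ j, m i j * g (Aop (e j)) (e i) := by
    rw [Finset.sum_comm]
    exact Finset.sum_congr rfl fun j _ => Finset.sum_congr rfl fun i _ => by ring
  have hkey2 : ∀ i, g (f (f (e i))) (e i) - g (f (Aop (e i))) (e i) - c * m i i
      = - g (Aop (f (e i))) (e i) := by
    intro i
    have h1 := congrArg (fun w => g w (e i)) (hkey (e i) (he_mem i))
    simpa only [map_sub, LinearMap.sub_apply, map_smul, LinearMap.smul_apply, smul_eq_mul,
      map_neg, LinearMap.neg_apply] using h1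
  have hS2 : (∑ i, ∑ j, m i j * m j i) = c * ∑ i, m i i := by
    have h1 : ∀ i, (∑ j, m i j * m j i)
        = ((∑ j, g (Aop (e i)) (e j) * m j i) - ∑ j, m i j * g (Aop (e j)) (e i))
          + c * m i i := by
      intro i
      rw [← hff i, ← hfA i, ← hAf i]
      linarith [hkey2 i]
    rw [Finset.sum_congr rfl fun i _ => h1 i, Finset.sum_add_distrib,
      Finset.sum_sub_distrib, hcomm, ← Finset.mul_sum]
    ring
  -- the Cauchy–Schwarz contradiction
  have hcross : (∑ i, ∑ j, m i j * (t i * t j)) = 0 := by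
    rw [Finset.sum_comm]
    have h1 : ∀ j, (∑ i, m i j * (t i * t j)) = (∑ i, t i * m i j) * t j := by
      intro j
      rw [Finset.sum_mul]
      exact Finset.sum_congr rfl fun i _ => by ring
    rw [Finset.sum_congr rfl fun j _ => h1 j]
    simp [hK1]
  have htt2 : (∑ i, ∑ j, (t i * t j) * (t i * t j)) = c * c := by
    have h1 : ∀ i, (∑ j, (t i * t j) * (t i * t j)) = (t i * t i) * ∑ j, t j * t j := by
      intro i
      rw [Finset.mul_sum]
      exact Finset.sum_congr rfl fun j _ => by ring
    rw [Finset.sum_congr rfl fun i _ => h1 i, ← Finset.sum_mul, htc]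
  have hT1 : (∑ i, (m i i + t i * t i))
      = ((Module.finrank ℝ U : ℝ) + (Module.finrank ℝ P : ℝ)) * c := by
    rw [Finset.sum_add_distrib, hS1, htc]
    ring
  have hT2 : (∑ i, ∑ j, (m i j + t i * t j) * (m i j + t i * t j))
      = ((Module.finrank ℝ U : ℝ) + (Module.finrank ℝ P : ℝ)) * (c * c) := by
    have hexp : ∀ i j, (m i j + t i * t j) * (m i j + t i * t j)
        = m i j * m j i + (m i j * (t i * t j) + (m i j * (t i * t j)
          + (t i * t j) * (t i * t j))) := by
      intro i j
      rw [hms j i]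
      ring
    rw [Finset.sum_congr rfl fun i _ => Finset.sum_congr rfl fun j _ => hexp i j]
    simp only [Finset.sum_add_distrib]
    rw [hS2, hS1, htt2, hcross]
    ring
  have hCS1 : (∑ i, (m i i + t i * t i)) ^ 2
      ≤ (∑ i, (m i i + t i * t i) ^ 2) * (Module.finrank ℝ U : ℝ) := by
    have h1 := Finset.sum_mul_sq_le_sq_mul_sq Finset.univ
      (fun i => m i i + t i * t i) (fun _ => (1 : ℝ))
    simpa using h1
  have hCS2 : (∑ i, (m i i + t i * t i) ^ 2)
      ≤ ∑ i, ∑ j, (m i j + t i * t j) * (m i j + t i * t j) := by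
    refine Finset.sum_le_sum fun i _ => ?_
    have h3 := Finset.single_le_sum
      (f := fun j => (m i j + t i * t j) * (m i j + t i * t j))
      (fun j _ => mul_self_nonneg _) (Finset.mem_univ i)
    calc (m i i + t i * t i) ^ 2
        = (m i i + t i * t i) * (m i i + t i * t i) := sq (m i i + t i * t i) ▸ by ring
      _ ≤ _ := h3
  have hq1 : 1 ≤ Module.finrank ℝ P := by
    by_contra h0
    push_neg at h0
    have h0' : Module.finrank ℝ P = 0 := by omega
    have hPbot : P = ⊥ := Submodule.finrank_eq_zero.mp h0'
    have h4 := hcompl.codisjoint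
    rw [codisjoint_iff, hPbot, sup_bot_eq] at h4
    exact hproper h4
  have hfin : (((Module.finrank ℝ U : ℝ) + (Module.finrank ℝ P : ℝ)) * c) ^ 2
      ≤ (Module.finrank ℝ U : ℝ)
        * (((Module.finrank ℝ U : ℝ) + (Module.finrank ℝ P : ℝ)) * (c * c)) := by
    calc (((Module.finrank ℝ U : ℝ) + (Module.finrank ℝ P : ℝ)) * c) ^ 2
        = (∑ i, (m i i + t i * t i)) ^ 2 := by rw [hT1]
      _ ≤ (∑ i, (m i i + t i * t i) ^ 2) * (Module.finrank ℝ U : ℝ) := hCS1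
      _ ≤ (∑ i, ∑ j, (m i j + t i * t j) * (m i j + t i * t j))
            * (Module.finrank ℝ U : ℝ) := by
          have : (0:ℝ) ≤ (Module.finrank ℝ U : ℝ) := Nat.cast_nonneg _
          exact mul_le_mul_of_nonneg_right hCS2 this
      _ = (Module.finrank ℝ U : ℝ)
            * (((Module.finrank ℝ U : ℝ) + (Module.finrank ℝ P : ℝ)) * (c * c)) := by
          rw [hT2]; ring
  have hcc : c * c ≤ 0 := by
    have hq1' : (1:ℝ) ≤ (Module.finrank ℝ P : ℝ) := by exact_mod_cast hq1
    have hp0 : (0:ℝ) ≤ (Module.finrank ℝ U : ℝ) := Nat.cast_nonneg _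
    have h5 : c * c ≤ (((Module.finrank ℝ U : ℝ) + (Module.finrank ℝ P : ℝ))
        * (Module.finrank ℝ P : ℝ)) * (c * c) :=
      le_mul_of_one_le_left (mul_self_nonneg c) (by nlinarith)
    have h6 : (((Module.finrank ℝ U : ℝ) + (Module.finrank ℝ P : ℝ))
        * (Module.finrank ℝ P : ℝ)) * (c * c) ≤ 0 := by nlinarith [hfin]
    linarith [h5, h6]
  have hc0 : c = 0 := mul_self_eq_zero.mp (le_antisymm hcc (mul_self_nonneg c))
  have hξ0 : ξ = 0 := by
    by_contra h0
    have h1 : g ξ ξ = c := by rw [hgξv ξ hξU, hcdef]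
    exact (hpos ξ h0).ne' (h1.trans hc0)
  intro u hu
  rw [← hgξv u hu, hξ0]
  simp
end

section
/- Every proper LCP structure (g,θ,𝔲) on an n-dimensional unimodular Lie algebra satisfies dim 𝔲 ≤ n−2. -/
set_option maxHeartbeats 1600000 in
/-- Every proper LCP structure `(g,θ,𝔲)` on an `n`-dimensional unimodular Lie
algebra satisfies `dim 𝔲 ≤ n - 2`. -/
theorem proper_lcp_unimodular_dim_bound
    {G : Type*} [LieRing G] [LieAlgebra ℝ G] [FiniteDimensional ℝ G]
    (g : LinearMap.BilinForm ℝ G)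
    (hsymm : ∀ x y : G, g x y = g y x)
    (hpos : ∀ x : G, x ≠ 0 → 0 < g x x)
    -- θ : non-zero closed 1-form
    (θ : G →ₗ[ℝ] ℝ) (hθ : θ ≠ 0) (hclosed : ∀ x y : G, θ ⁅x, y⁆ = 0)
    -- 𝔲 : non-zero subspace
    (U : Submodule ℝ G) (hUne : U ≠ ⊥)
    -- the Weyl connection ∇^θ determined by g and θ
    (N : G →ₗ[ℝ] Module.End ℝ G)
    (hN : ∀ x y z : G, g (N x y) z =
      (g ⁅x, y⁆ z - g ⁅x, z⁆ y - g ⁅y, z⁆ x) / 2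
        + θ x * g y z + θ y * g x z - θ z * g x y)
    -- (1) 𝔲 and 𝔲^⊥ are Lie subalgebras
    (hUsub : ∀ u ∈ U, ∀ v ∈ U, ⁅u, v⁆ ∈ U)
    (hPsub : ∀ x ∈ LinearMap.BilinForm.orthogonal g U,
             ∀ y ∈ LinearMap.BilinForm.orthogonal g U,
             ⁅x, y⁆ ∈ LinearMap.BilinForm.orthogonal g U)
    -- (2)
    (h2 : ∀ u ∈ U, ∀ x ∈ LinearMap.BilinForm.orthogonal g U,
      g ⁅u, x⁆ x = θ u * g x x ∧ g ⁅x, u⁆ u = θ x * g u u)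
    -- (3) 𝔲 is ∇^θ-parallel and x ↦ ∇^θ_x|_𝔲 is a Lie algebra representation
    (hpar : ∀ x : G, ∀ u ∈ U, N x u ∈ U)
    (hrep : ∀ x y : G, ∀ u ∈ U, N ⁅x, y⁆ u = N x (N y u) - N y (N x u))
    -- the LCP structure is proper
    (hproper : U ≠ ⊤)
    -- 𝔤 is unimodular
    (hunim : ∀ x : G, LinearMap.trace ℝ G (LieAlgebra.ad ℝ G x) = 0) :
    Module.finrank ℝ U + 2 ≤ Module.finrank ℝ G := by
  classical
  -- Equip `G` with the inner product coming from `g`.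
  letI core : InnerProductSpace.Core ℝ G :=
    { toInner := ⟨fun x y => g x y⟩
      conj_inner_symm := fun x y => show (starRingEnd ℝ) (g y x) = g x y by
        simpa [starRingEnd_apply] using hsymm y x
      re_inner_nonneg := fun x => by
        rcases eq_or_ne x 0 with rfl | hx
        · show (0:ℝ) ≤ RCLike.re (g 0 0)
          simp
        · show (0:ℝ) ≤ RCLike.re (g x x)
          simpa using (hpos x hx).le
      add_left := fun x y z => show g (x + y) z = g x z + g y z by simp
      smul_left := fun x y r => show g (r • x) y = (starRingEnd ℝ) r * g x y by
        simp [starRingEnd_apply]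
      definite := fun x hx => by
        by_contra h
        exact (hpos x h).ne' hx }
  letI : NormedAddCommGroup G := core.toNormedAddCommGroup
  letI : InnerProductSpace ℝ G := InnerProductSpace.ofCore core.toCore
  have hgi : ∀ x y : G, (inner ℝ x y : ℝ) = g x y := fun x y => rfl
  have hrksum := Submodule.finrank_add_finrank_orthogonal U
  by_cases hdim : 2 ≤ Module.finrank ℝ Uᗮ
  · omega
  exfalso
  -- basic consequences of `hN`
  have hgzero : ∀ a : G, (∀ w, g a w = 0) → a = 0 := by
    intro a ha
    by_contra h
    exact (hpos a h).ne' (ha a)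
  have hlskew : ∀ x y : G, (⁅x, y⁆ : G) = -⁅y, x⁆ := fun x y => (lie_skew x y).symm
  -- F1 : metric property of the Weyl connection
  have hF1 : ∀ z y w : G, g (N z y) w + g y (N z w) = 2 * θ z * g y w := by
    intro z y w
    have h1 := hN z y w
    have h2' := hN z w y
    have h3 : g ⁅w, y⁆ z = - g ⁅y, w⁆ z := by rw [hlskew w y, map_neg, LinearMap.neg_apply]
    have h4 : g y (N z w) = g (N z w) y := hsymm _ _
    rw [h4, h1, h2', h3, hsymm w y, hsymm z w, hsymm z y]
    ring
  -- F2 : torsion-freeness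
  have hF2 : ∀ x y : G, N x y - N y x = ⁅x, y⁆ := by
    intro x y
    have key : ∀ w, g (N x y - N y x - ⁅x, y⁆) w = 0 := by
      intro w
      have h1 := hN x y w
      have h2' := hN y x w
      have h3 : g ⁅y, x⁆ w = - g ⁅x, y⁆ w := by rw [hlskew y x, map_neg, LinearMap.neg_apply]
      simp only [map_sub, LinearMap.sub_apply]
      rw [h1, h2', h3, hsymm y x]
      ring
    have := hgzero _ key
    have h5 : N x y - N y x - ⁅x, y⁆ = 0 := this
    linear_combination (norm := module) h5
  -- F3
  have hF3 : ∀ x y : G, θ (N x y) = θ (N y x) := by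
    intro x y
    have h := congrArg θ (hF2 x y)
    rw [map_sub, hclosed x y] at h
    linarith
  -- diagonal of F1
  have hdiag : ∀ z y : G, g y (N z y) = θ z * g y y := by
    intro z y
    have h := hF1 z y y
    have h2' : g (N z y) y = g y (N z y) := hsymm _ _
    rw [h2'] at h
    linarith
  -- the dual vector of θ
  obtain ⟨ξ, hξ⟩ : ∃ ξ : G, ∀ y, g ξ y = θ y := by
    refine ⟨(InnerProductSpace.toDual ℝ G).symm (LinearMap.toContinuousLinearMap θ), fun y => ?_⟩
    have h := InnerProductSpace.toDual_symm_apply (𝕜 := ℝ) (E := G)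
      (y := LinearMap.toContinuousLinearMap θ) (x := y)
    rw [← hgi]
    simpa using h
  -- scenario : dim Uᗮ = 1
  have hUbotne : Uᗮ ≠ ⊥ := by
    intro h
    exact hproper (Submodule.orthogonal_eq_bot_iff.mp h)
  have hk1 : Module.finrank ℝ Uᗮ = 1 := by
    have h0 : Module.finrank ℝ Uᗮ ≠ 0 := by
      intro h
      exact hUbotne (Submodule.finrank_eq_zero.mp h)
    omega
  have hkpos : 0 < Module.finrank ℝ U := by
    have h0 : Module.finrank ℝ U ≠ 0 := by
      intro h
      exact hUne (Submodule.finrank_eq_zero.mp h)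
    omega
  -- a unit vector spanning Uᗮ
  obtain ⟨x', hx'mem, hx'ne⟩ := Submodule.exists_mem_ne_zero_of_ne_bot hUbotne
  have htpos : 0 < g x' x' := hpos x' hx'ne
  set x₀ : G := (Real.sqrt (g x' x'))⁻¹ • x' with hx₀def
  have hx₀mem : x₀ ∈ Uᗮ := Submodule.smul_mem _ _ hx'mem
  have hx₀1 : g x₀ x₀ = 1 := by
    have hs : Real.sqrt (g x' x') ≠ 0 := ne_of_gt (Real.sqrt_pos.mpr htpos)
    have hmul : Real.sqrt (g x' x') * Real.sqrt (g x' x') = g x' x' :=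
      Real.mul_self_sqrt htpos.le
    rw [hx₀def]
    simp only [map_smul, LinearMap.smul_apply, smul_eq_mul]
    rw [← hmul]
    field_simp
    rw [Real.sq_sqrt (sq_nonneg (Real.sqrt (g x' x')))]
  have hx₀ne : x₀ ≠ 0 := by
    intro h
    rw [h] at hx₀1
    simp at hx₀1
  have hx₀span : ∀ y ∈ Uᗮ, ∃ s : ℝ, y = s • x₀ := by
    have hx₀U : (⟨x₀, hx₀mem⟩ : Uᗮ) ≠ 0 := by
      intro h
      exact hx₀ne (congrArg Subtype.val h)
    have hiff := (finrank_eq_one_iff_of_nonzero' (⟨x₀, hx₀mem⟩ : Uᗮ) hx₀U).mp hk1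
    intro y hy
    obtain ⟨s, hs⟩ := hiff ⟨y, hy⟩
    exact ⟨s, by simpa using (congrArg Subtype.val hs).symm⟩
  have hx₀perp : ∀ u ∈ U, g u x₀ = 0 := fun u hu => by
    rw [← hgi]
    exact (Submodule.mem_orthogonal U x₀).mp hx₀mem u hu
  -- orthonormal basis of U
  let bU := stdOrthonormalBasis ℝ U
  let e : Fin (Module.finrank ℝ U) → G := fun i => (bU i : G)
  have heU : ∀ i, e i ∈ U := fun i => (bU i).2
  have hee : ∀ i j, g (e i) (e j) = if i = j then 1 else 0 := by
    intro i j
    have h := orthonormal_iff_ite.mp bU.orthonormal i j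
    rw [← hgi]
    simpa [Submodule.coe_inner] using h
  -- adapted orthonormal basis of G
  let v : (Fin (Module.finrank ℝ U)) ⊕ Unit → G := Sum.elim e (fun _ => x₀)
  have hvon : Orthonormal ℝ v := by
    rw [orthonormal_iff_ite]
    rintro (i | i) (j | j)
    · simpa [v, hgi] using hee i j
    · simpa [v, hgi] using hx₀perp (e i) (heU i)
    · have h := hx₀perp (e j) (heU j)
      rw [hsymm] at h
      simpa [v, hgi] using h
    · rw [if_pos (congrArg Sum.inr (Subsingleton.elim i j))]; exact hx₀1
  have hvspan : ⊤ ≤ Submodule.span ℝ (Set.range v) := by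
    have h1 : Submodule.span ℝ (Set.range e) = U := by
      have hre : Set.range e = (U.subtype) '' (Set.range bU) := by
        rw [← Set.range_comp]; rfl
      rw [hre, Submodule.span_image]
      have hb : Submodule.span ℝ (Set.range (bU : Fin _ → U)) = ⊤ := by
        have h := bU.toBasis.span_eq
        rwa [OrthonormalBasis.coe_toBasis] at h
      rw [hb, Submodule.map_subtype_top]
    have h2 : Set.range v = Set.range e ∪ {x₀} := by
      simp [v, Set.Sum.elim_range]
    have h3 : Uᗮ ≤ Submodule.span ℝ {x₀} := by
      intro y hy
      obtain ⟨s, rfl⟩ := hx₀span y hy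
      exact Submodule.smul_mem _ _ (Submodule.mem_span_singleton_self x₀)
    have h4 : U ⊔ Uᗮ = ⊤ := Submodule.sup_orthogonal_of_hasOrthogonalProjection
    calc (⊤ : Submodule ℝ G) = U ⊔ Uᗮ := h4.symm
      _ ≤ U ⊔ Submodule.span ℝ {x₀} := sup_le_sup_left h3 _
      _ ≤ Submodule.span ℝ (Set.range v) := by
          rw [h2, Submodule.span_union, h1]
  let bG : OrthonormalBasis _ ℝ G := OrthonormalBasis.mk hvon hvspan
  have hbG : ∀ j, bG j = v j := fun j => by
    rw [show bG = OrthonormalBasis.mk hvon hvspan from rfl, OrthonormalBasis.coe_mk]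
  -- trace formula
  have htr : ∀ f : Module.End ℝ G,
      LinearMap.trace ℝ G f = (∑ i, g (e i) (f (e i))) + g x₀ (f x₀) := by
    intro f
    rw [LinearMap.trace_eq_matrix_trace ℝ bG.toBasis f]
    have hdiagm : ∀ j, (LinearMap.toMatrix bG.toBasis bG.toBasis f) j j
        = g (v j) (f (v j)) := by
      intro j
      rw [LinearMap.toMatrix_apply, OrthonormalBasis.coe_toBasis_repr_apply,
        OrthonormalBasis.repr_apply_apply, OrthonormalBasis.coe_toBasis, hbG, hgi]
    simp only [Matrix.trace, Matrix.diag, hdiagm]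
    rw [Fintype.sum_sum_type]
    simp [v]
  -- cardinality facts
  have hcard : (∑ i : Fin (Module.finrank ℝ U), g (e i) (e i))
      = (Module.finrank ℝ U : ℝ) := by
    have h : ∀ i, g (e i) (e i) = 1 := fun i => by simp [hee i i]
    simp [h]
  have hn : Module.finrank ℝ G = Module.finrank ℝ U + 1 := by omega
  -- the unimodularity trace identity
  have hTr : ∀ z : G, (∑ i, g (e i) (N (e i) z)) + g x₀ (N x₀ z)
      = ((Module.finrank ℝ U : ℝ) + 1) * θ z := by
    intro z
    have had : LieAlgebra.ad ℝ G z = N z - N.flip z := by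
      ext y
      simp only [LieAlgebra.ad_apply, LinearMap.sub_apply, LinearMap.flip_apply]
      exact (hF2 z y).symm
    have h0 := hunim z
    rw [had, map_sub] at h0
    have h1 : LinearMap.trace ℝ G (N z) = ((Module.finrank ℝ U : ℝ) + 1) * θ z := by
      rw [htr (N z)]
      have h2' : ∀ i, g (e i) ((N z) (e i)) = θ z * g (e i) (e i) := fun i => hdiag z (e i)
      simp only [h2']
      rw [← Finset.mul_sum, hcard, hdiag z x₀, hx₀1]
      ring
    have h3 : LinearMap.trace ℝ G (N.flip z)
        = (∑ i, g (e i) (N (e i) z)) + g x₀ (N x₀ z) := by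
      rw [htr (N.flip z)]
      rfl
    rw [h1, h3] at h0
    linarith
  -- N z x₀ stays in Uᗮ-direction facts
  have hP4 : ∀ z x : G, (∀ u ∈ U, g u x = 0) → ∀ u ∈ U, g u (N z x) = 0 := by
    intro z x hx u hu
    have h := hF1 z x u
    have h1 : g x (N z u) = 0 := by
      rw [hsymm]
      exact hx _ (hpar z u hu)
    have h2' : g x u = 0 := by rw [hsymm]; exact hx u hu
    have h3 : g u (N z x) = g (N z x) u := hsymm _ _
    rw [h3]
    rw [h1, h2'] at h
    simpa using h
  -- θ x₀ = 0
  have hθx₀ : θ x₀ = 0 := by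
    have h := hTr x₀
    have h1 : ∀ i, g (e i) (N (e i) x₀) = 0 := fun i =>
      hP4 (e i) x₀ hx₀perp (e i) (heU i)
    have h2' : g x₀ (N x₀ x₀) = θ x₀ := by
      rw [hdiag x₀ x₀, hx₀1, mul_one]
    rw [Finset.sum_congr rfl (fun i _ => h1 i)] at h
    simp only [Finset.sum_const_zero, zero_add] at h
    rw [h2'] at h
    have hkne : ((Module.finrank ℝ U : ℝ)) ≠ 0 := Nat.cast_ne_zero.mpr (by omega)
    have h6 : ((Module.finrank ℝ U : ℝ)) * θ x₀ = 0 := by linarith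
    rcases mul_eq_zero.mp h6 with h7 | h7
    · exact absurd h7 hkne
    · exact h7
  -- N x₀ x₀ = 0
  have hNx₀x₀ : N x₀ x₀ = 0 := by
    have hmem : N x₀ x₀ ∈ Uᗮ := by
      rw [Submodule.mem_orthogonal]
      intro u hu
      rw [hgi]
      exact hP4 x₀ x₀ hx₀perp u hu
    obtain ⟨s, hs⟩ := hx₀span _ hmem
    have h1 : g x₀ (N x₀ x₀) = θ x₀ := by rw [hdiag x₀ x₀, hx₀1, mul_one]
    rw [hs] at h1 ⊢
    rw [map_smul, smul_eq_mul, hx₀1, mul_one] at h1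
    rw [h1, hθx₀] at hs ⊢
    simp
  -- ξ ∈ U
  have hξU : ξ ∈ U := by
    have h0 : g x₀ ξ = 0 := by
      rw [hsymm, hξ, hθx₀]
    have hmem : ξ ∈ Uᗮᗮ := by
      rw [Submodule.mem_orthogonal]
      intro y hy
      obtain ⟨s, rfl⟩ := hx₀span y hy
      rw [hgi, map_smul, LinearMap.smul_apply, smul_eq_mul, h0, mul_zero]
    rwa [Submodule.orthogonal_orthogonal] at hmem
  set c : ℝ := θ ξ with hc
  have hgξξ : g ξ ξ = c := hξ ξ
  set li : Fin (Module.finrank ℝ U) → ℝ := fun i => θ (e i) with hli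
  have hθe : ∀ j, θ (e j) = li j := fun j => rfl
  have hcr : θ ξ = c := rfl
  have hgξe : ∀ i, g ξ (e i) = li i := fun i => hξ (e i)
  have hgeξ : ∀ i, g (e i) ξ = li i := fun i => by rw [hsymm]; exact hξ (e i)
  -- ξ in terms of the basis
  have ha : (∑ i, li i • e i) = ξ := by
    have h := congrArg (Subtype.val : U → G) (bU.sum_repr' ⟨ξ, hξU⟩)
    rw [Submodule.coe_sum] at h
    have h2' : ∀ i, (((inner ℝ (bU i) (⟨ξ, hξU⟩ : U) : ℝ) • (bU i)) : U).val = li i • e i := by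
      intro i
      rw [Submodule.coe_smul]
      congr 1
      rw [Submodule.coe_inner, hgi]
      exact hgeξ i
    rw [Finset.sum_congr rfl fun i _ => h2' i] at h
    exact h
  have haw : ∀ w, (∑ i, li i * g (e i) w) = θ w := by
    intro w
    have h := congrArg (fun t => g t w) ha
    simpa [map_sum, LinearMap.sum_apply, map_smul, LinearMap.smul_apply, smul_eq_mul, hξ]
      using h
  have hc2 : (∑ i, li i * li i) = c := by
    have h := haw ξ
    have h2' : ∀ i, li i * g (e i) ξ = li i * li i := fun i => by rw [hgeξ i]
    rw [Finset.sum_congr rfl fun i _ => h2' i] at h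
    rw [h, hcr]
  -- q := N ξ ξ
  set q : G := N ξ ξ with hq
  have hθq : θ q = c * c := by
    rw [← hξ q, hq]
    rw [hdiag ξ ξ, hgξξ, hc]
  -- trace sums
  have hSξ : (∑ i, g (e i) (N (e i) ξ)) = ((Module.finrank ℝ U : ℝ) + 1) * c := by
    have h := hTr ξ
    have h1 : g x₀ (N x₀ ξ) = 0 := by
      rw [hsymm]
      exact hx₀perp _ (hpar x₀ ξ hξU)
    rw [h1, add_zero] at h
    rw [h, hc]
  have hSq : (∑ i, g (e i) (N (e i) q)) = ((Module.finrank ℝ U : ℝ) + 1) * (c * c) := by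
    have h := hTr q
    have h1 : g x₀ (N x₀ q) = 0 := by
      have hf := hF1 x₀ q x₀
      rw [hNx₀x₀] at hf
      simp only [map_zero] at hf
      have : g (N x₀ q) x₀ = 2 * θ x₀ * g q x₀ := by linarith
      rw [hsymm, this, hθx₀]
      ring
    rw [h1, add_zero] at h
    rw [h, hθq]
  -- the vectors φ i and ψ i
  set φ : Fin (Module.finrank ℝ U) → G := fun i => N (e i) ξ - li i • ξ with hφ
  set ψ : Fin (Module.finrank ℝ U) → G := fun i => N ξ (e i) - c • e i with hψ
  have hφU : ∀ i, φ i ∈ U := fun i =>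
    Submodule.sub_mem _ (hpar _ _ hξU) (Submodule.smul_mem _ _ hξU)
  have hψU : ∀ i, ψ i ∈ U := fun i =>
    Submodule.sub_mem _ (hpar _ _ (heU i)) (Submodule.smul_mem _ _ (heU i))
  -- g ξ (N (e i) ξ) = li i * c
  have hgξNeξ : ∀ i, g ξ (N (e i) ξ) = li i * c := by
    intro i
    have h := hF1 (e i) ξ ξ
    have h2' : g (N (e i) ξ) ξ = g ξ (N (e i) ξ) := hsymm _ _
    rw [h2', hgξξ, hθe i] at h
    linarith
  have hgξφ : ∀ i, g ξ (φ i) = 0 := by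
    intro i
    rw [hφ]
    simp only [map_sub, map_smul, smul_eq_mul]
    rw [hgξNeξ i, hgξξ]
    ring
  -- g ξ (ψ i) = c * li i - g (e i) q
  have hgNξeξ : ∀ i, g (N ξ (e i)) ξ = 2 * c * li i - g (e i) q := by
    intro i
    have h := hF1 ξ (e i) ξ
    rw [← hq] at h
    have h1 : g (e i) ξ = li i := hgeξ i
    rw [h1, hcr] at h
    linarith
  have hgξψ : ∀ i, g ξ (ψ i) = c * li i - g (e i) q := by
    intro i
    rw [hψ]
    simp only [map_sub, map_smul, smul_eq_mul]
    rw [← hsymm (N ξ (e i)) ξ, hgNξeξ i, hgξe i]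
    ring
  -- main per-index identity from hrep
  have hPi : ∀ i, 2 * g (N (e i) ξ) (N ξ (e i))
      = g (N (e i) ξ) (N (e i) ξ) + 2 * c * g (N (e i) ξ) (e i) - g (e i) (N (e i) q) := by
    intro i
    set w : G := ⁅ξ, e i⁆ with hw
    have hθw : θ w = 0 := hclosed ξ (e i)
    -- step 1
    have hstep1 : g (N w ξ) (e i) = - g ξ (N w (e i)) := by
      have h := hF1 w ξ (e i)
      rw [hθw] at h
      linarith
    -- step 2
    have hstep2 : g ξ (N w (e i)) = g ξ (N (e i) w) := by
      rw [hξ, hξ]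
      exact hF3 w (e i)
    -- step 3
    have hstep3 : g ξ (N (e i) w) = - g (N (e i) ξ) w := by
      have h := hF1 (e i) ξ w
      have h1 : g ξ w = 0 := by rw [hξ]; exact hθw
      rw [h1] at h
      linarith
    -- so LHS = g (N (e i) ξ) w
    have hL : g (N w ξ) (e i) = g (N (e i) ξ) w := by
      rw [hstep1, hstep2, hstep3]; ring
    -- expand w via torsion
    have hwt : w = N ξ (e i) - N (e i) ξ := (hF2 ξ (e i)).symm
    have hL2 : g (N w ξ) (e i)
        = g (N (e i) ξ) (N ξ (e i)) - g (N (e i) ξ) (N (e i) ξ) := by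
      rw [hL, hwt, map_sub]
    -- hrep
    have hR : N w ξ = N ξ (N (e i) ξ) - N (e i) (N ξ ξ) := by
      rw [hw]
      exact hrep ξ (e i) ξ hξU
    have hR2 : g (N w ξ) (e i)
        = g (N ξ (N (e i) ξ)) (e i) - g (N (e i) q) (e i) := by
      rw [hR, hq]
      simp only [map_sub, LinearMap.sub_apply]
    -- step 4
    have hstep4 : g (N ξ (N (e i) ξ)) (e i)
        = 2 * c * g (N (e i) ξ) (e i) - g (N (e i) ξ) (N ξ (e i)) := by
      have h := hF1 ξ (N (e i) ξ) (e i)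
      rw [hcr] at h
      linarith
    have h5 : g (N (e i) q) (e i) = g (e i) (N (e i) q) := hsymm _ _
    rw [hL2, hstep4, h5] at hR2
    linarith
  -- expansions
  have hNeξ : ∀ i, N (e i) ξ = li i • ξ + φ i := by
    intro i
    rw [hφ]
    module
  have hNξe : ∀ i, N ξ (e i) = c • e i + ψ i := by
    intro i
    rw [hψ]
    module
  have hri : ∀ i, g (N (e i) ξ) (N (e i) ξ)
      = li i * li i * c + g (φ i) (φ i) := by
    intro i
    rw [hNeξ i]
    simp only [map_add, map_smul, LinearMap.add_apply, LinearMap.smul_apply, smul_eq_mul]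
    have h1 : g ξ (φ i) = 0 := hgξφ i
    have h2' : g (φ i) ξ = 0 := by rw [hsymm]; exact hgξφ i
    rw [hgξξ, h1, h2']
    ring
  have hpe : ∀ i, g (N (e i) ξ) (e i) = li i * li i + g (φ i) (e i) := by
    intro i
    rw [hNeξ i]
    simp only [map_add, LinearMap.add_apply, map_smul, LinearMap.smul_apply, smul_eq_mul]
    rw [hgξe i]
  have hsi : ∀ i, g (N (e i) ξ) (N ξ (e i))
      = c * (li i * li i) + li i * g ξ (ψ i) + c * g (φ i) (e i) + g (φ i) (ψ i) := by
    intro i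
    rw [hNeξ i, hNξe i]
    simp only [map_add, map_smul, LinearMap.add_apply, LinearMap.smul_apply, smul_eq_mul]
    rw [hgξe i]
    ring
  -- global sums
  set kR : ℝ := (Module.finrank ℝ U : ℝ) with hkR
  set D : ℝ := ∑ i, g (φ i) (φ i) with hD
  set T : ℝ := ∑ i, g (φ i) (e i) with hT
  set Z : ℝ := ∑ i, g (φ i) (ψ i) with hZ
  -- sum of li * g ξ (ψ i) = 0
  have hsum1 : (∑ i, li i * g ξ (ψ i)) = 0 := by
    have h : ∀ i, li i * g ξ (ψ i) = c * (li i * li i) - li i * g (e i) q := by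
      intro i
      rw [hgξψ i]
      ring
    rw [Finset.sum_congr rfl fun i _ => h i, Finset.sum_sub_distrib, ← Finset.mul_sum, hc2,
      haw q, hθq]
    ring
  -- T = kR * c
  have hTval : T = kR * c := by
    have h : ∀ i, g (φ i) (e i) = g (e i) (N (e i) ξ) - li i * li i := by
      intro i
      have h1 := hpe i
      rw [hsymm (e i) (N (e i) ξ), h1]
      ring
    rw [hT, Finset.sum_congr rfl fun i _ => h i, Finset.sum_sub_distrib, hSξ, hc2]
    ring
  -- sum the main identity
  have hmain : 2 * ((kR + 1) * (c * c) + Z) = (c * c + D) + 2 * c * (c + T)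
      - (kR + 1) * (c * c) := by
    have hsum := Finset.sum_congr rfl fun i (_ : i ∈ Finset.univ) => hPi i
    -- LHS sum
    have hLs : (∑ i, 2 * g (N (e i) ξ) (N ξ (e i)))
        = 2 * ((kR + 1) * (c * c) + Z) := by
      have h : ∀ i, 2 * g (N (e i) ξ) (N ξ (e i))
          = 2 * (c * (li i * li i) + li i * g ξ (ψ i) + c * g (φ i) (e i) + g (φ i) (ψ i)) := by
        intro i
        rw [hsi i]
      rw [Finset.sum_congr rfl fun i _ => h i, ← Finset.mul_sum]
      have : (∑ i, (c * (li i * li i) + li i * g ξ (ψ i) + c * g (φ i) (e i) + g (φ i) (ψ i)))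
          = c * c + 0 + c * T + Z := by
        rw [Finset.sum_add_distrib, Finset.sum_add_distrib, Finset.sum_add_distrib,
          ← Finset.mul_sum, hc2, hsum1, ← Finset.mul_sum, ← hT, ← hZ]
      rw [this]
      have hTc : c * T = kR * (c * c) := by rw [hTval]; ring
      rw [hTc]
      ring
    -- RHS sum
    have hRs : (∑ i, (g (N (e i) ξ) (N (e i) ξ) + 2 * c * g (N (e i) ξ) (e i)
        - g (e i) (N (e i) q)))
        = (c * c + D) + 2 * c * (c + T) - (kR + 1) * (c * c) := by
      rw [Finset.sum_sub_distrib, Finset.sum_add_distrib]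
      have h1 : (∑ i, g (N (e i) ξ) (N (e i) ξ)) = c * c + D := by
        rw [Finset.sum_congr rfl fun i _ => hri i, Finset.sum_add_distrib, ← hD,
          ← Finset.sum_mul, hc2]
      have h2' : (∑ i, 2 * c * g (N (e i) ξ) (e i)) = 2 * c * (c + T) := by
        rw [← Finset.mul_sum]
        have h3 : (∑ i, g (N (e i) ξ) (e i)) = c + T := by
          rw [Finset.sum_congr rfl fun i _ => hpe i, Finset.sum_add_distrib, hc2, ← hT]
        rw [h3]
      rw [h1, h2', hSq]
    rw [hLs] at hsum
    rw [hRs] at hsum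
    exact hsum
  -- Parseval identity inside U
  have hpars : ∀ u w : G, u ∈ U → w ∈ U → g u w = ∑ j, g u (e j) * g (e j) w := by
    intro u w hu hw
    have h := bU.sum_inner_mul_inner (⟨u, hu⟩ : U) ⟨w, hw⟩
    have h2' : ∀ j, (inner ℝ (⟨u, hu⟩ : U) (bU j) : ℝ) * (inner ℝ (bU j) (⟨w, hw⟩ : U) : ℝ)
        = g u (e j) * g (e j) w := by
      intro j
      rw [Submodule.coe_inner, Submodule.coe_inner, hgi, hgi]
    have h3 : (inner ℝ (⟨u, hu⟩ : U) (⟨w, hw⟩ : U) : ℝ) = g u w := by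
      rw [Submodule.coe_inner, hgi]
    rw [Finset.sum_congr rfl fun j _ => h2' j, h3] at h
    exact h.symm
  -- symmetry of the matrix of φ
  have hφe : ∀ i j, g (φ i) (e j) = li i * li j - θ (N (e i) (e j)) := by
    intro i j
    have h := hF1 (e i) ξ (e j)
    have h1 : g ξ (N (e i) (e j)) = θ (N (e i) (e j)) := hξ _
    have h2' : g ξ (e j) = li j := hgξe j
    rw [h1, h2'] at h
    rw [hφ]
    simp only [map_sub, LinearMap.sub_apply, map_smul, LinearMap.smul_apply, smul_eq_mul]
    rw [hgξe j]
    have hθei : θ (e i) = li i := rfl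
    rw [hθei] at h
    linarith
  have hBsym : ∀ i j, g (φ i) (e j) = g (φ j) (e i) := by
    intro i j
    rw [hφe i j, hφe j i, hF3 (e i) (e j)]
    ring
  -- skewness of the matrix of ψ
  have hCskew : ∀ i j, g (e j) (ψ i) = - g (e i) (ψ j) := by
    intro i j
    have h := hF1 ξ (e i) (e j)
    rw [← hc] at h
    have h1 : g (e j) (N ξ (e i)) = g (N ξ (e i)) (e j) := hsymm _ _
    have h2' : g (e j) (e i) = g (e i) (e j) := hsymm _ _
    rw [hψ]
    simp only [map_sub, map_smul, smul_eq_mul]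
    rw [h1, h2']
    linarith
  -- Z = 0
  have hZ0 : Z = 0 := by
    have hform : Z = ∑ i, ∑ j, g (φ i) (e j) * g (e j) (ψ i) := by
      rw [hZ]
      exact Finset.sum_congr rfl fun i _ => hpars (φ i) (ψ i) (hφU i) (hψU i)
    have hform2 : Z = ∑ j, ∑ i, g (φ i) (e j) * g (e j) (ψ i) := by
      rw [hform, Finset.sum_comm]
    have hneg : ∀ j i, g (φ i) (e j) * g (e j) (ψ i)
        = -(g (φ j) (e i) * g (e i) (ψ j)) := by
      intro j i
      rw [hBsym i j, hCskew i j]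
      ring
    rw [Finset.sum_congr rfl fun j _ =>
      Finset.sum_congr rfl fun i _ => hneg j i] at hform2
    have hsumneg : (∑ j, ∑ i, -(g (φ j) (e i) * g (e i) (ψ j)))
        = - ∑ j, ∑ i, g (φ j) (e i) * g (e i) (ψ j) := by
      rw [← Finset.sum_neg_distrib]
      exact Finset.sum_congr rfl fun j _ => by rw [Finset.sum_neg_distrib]
    have hback : (∑ j, ∑ i, g (φ j) (e i) * g (e i) (ψ j)) = Z := by
      rw [hZ]
      exact Finset.sum_congr rfl fun j _ => (hpars (φ j) (ψ j) (hφU j) (hψU j)).symm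
    rw [hsumneg, hback] at hform2
    linarith
  -- D = kR * c²
  have hDval : D = kR * (c * c) := by
    rw [hZ0, hTval] at hmain
    nlinarith [hmain]
  -- Cauchy–Schwarz equality
  have hCS : (∑ i, g (φ i - c • e i) (φ i - c • e i)) = 0 := by
    have h : ∀ i, g (φ i - c • e i) (φ i - c • e i)
        = g (φ i) (φ i) - 2 * c * g (φ i) (e i) + c * c * g (e i) (e i) := by
      intro i
      simp only [map_sub, map_smul, LinearMap.sub_apply, LinearMap.smul_apply, smul_eq_mul]
      have h2' : g (e i) (φ i) = g (φ i) (e i) := hsymm _ _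
      rw [h2']
      ring
    rw [Finset.sum_congr rfl fun i _ => h i]
    have hs1 : (∑ i, (g (φ i) (φ i) - 2 * c * g (φ i) (e i) + c * c * g (e i) (e i)))
        = D - 2 * c * T + c * c * kR := by
      rw [Finset.sum_add_distrib, Finset.sum_sub_distrib, ← Finset.mul_sum, ← Finset.mul_sum,
        ← hD, ← hT, hcard, hkR]
    rw [hs1, hDval, hTval]
    ring
  have hφc : ∀ i, φ i = c • e i := by
    intro i
    have hnn : ∀ i : Fin (Module.finrank ℝ U), i ∈ Finset.univ
        → 0 ≤ g (φ i - c • e i) (φ i - c • e i) := by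
      intro i _
      rcases eq_or_ne (φ i - c • e i) 0 with h | h
      · rw [h]; simp
      · exact (hpos _ h).le
    have h := (Finset.sum_eq_zero_iff_of_nonneg hnn).mp hCS i (Finset.mem_univ i)
    have h2' : φ i - c • e i = 0 := by
      by_contra hne
      exact (hpos _ hne).ne' h
    have := sub_eq_zero.mp h2'
    exact this
  -- q = (2c) • ξ
  have hqval : q = (2 * c) • ξ := by
    have h1 : q = ∑ i, li i • N (e i) ξ := by
      have hNs : N ξ = ∑ i, li i • N (e i) := by
        rw [← ha, map_sum]
        exact Finset.sum_congr rfl fun i _ => by rw [map_smul]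
      rw [hq, hNs, LinearMap.sum_apply]
      exact Finset.sum_congr rfl fun i _ => by rw [LinearMap.smul_apply]
    have h2' : ∀ i, li i • N (e i) ξ = (li i * li i) • ξ + (c * li i) • e i := by
      intro i
      rw [hNeξ i, hφc i]
      module
    rw [h1, Finset.sum_congr rfl fun i _ => h2' i, Finset.sum_add_distrib]
    have h3 : (∑ i, (li i * li i) • ξ) = c • ξ := by
      rw [← Finset.sum_smul, hc2]
    have h4 : (∑ i, (c * li i) • e i) = c • ξ := by
      have : ∀ i, (c * li i) • e i = c • (li i • e i) := fun i => by rw [smul_smul]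
      rw [Finset.sum_congr rfl fun i _ => this i, ← Finset.smul_sum, ha]
    rw [h3, h4, ← add_smul]
    rw [show c + c = 2 * c by ring]
  -- conclusion : c = 0
  have hcc : c * c = 2 * (c * c) := by
    have h := hθq
    rw [hqval, map_smul, smul_eq_mul, ← hc] at h
    linarith
  have hc0 : c = 0 := by
    have : c * c = 0 := by linarith
    exact mul_self_eq_zero.mp this
  have hξ0 : ξ = 0 := by
    by_contra h
    have hp := hpos ξ h
    rw [hgξξ, hc0] at hp
    exact lt_irrefl 0 hp
  exact hθ (LinearMap.ext fun y => by rw [← hξ y, hξ0, map_zero, LinearMap.zero_apply])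
end

section
/- A proper LCP structure (g,θ,𝔲) on a Lie algebra 𝔤 is adapted (θ|_𝔲 = 0) if and only if 𝔲 is an ideal of 𝔤. -/
open Finset in
lemma exists_on_family {E : Type*} [AddCommGroup E] [Module ℝ E] [FiniteDimensional ℝ E]
    (B : LinearMap.BilinForm ℝ E) (hs : ∀ x y, B x y = B y x) (hp : ∀ x : E, x ≠ 0 → 0 < B x x) :
    ∃ (n : ℕ) (v : Fin n → E), (∀ i j, B (v i) (v j) = if i = j then 1 else 0) ∧
      ∀ x : E, x = ∑ i, B x (v i) • v i := by
  haveI : Invertible (2 : ℝ) := invertibleOfNonzero two_ne_zero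
  have hBs : B.IsSymm := ⟨fun x y => by simpa using hs x y⟩
  obtain ⟨v, hv⟩ := LinearMap.BilinForm.exists_orthogonal_basis (LinearMap.BilinForm.isSymm_iff.1 hBs)
  have hdiag : ∀ i, 0 < B (v i) (v i) := fun i => hp _ (v.ne_zero i)
  set w : Fin (Module.finrank ℝ E) → E := fun i => (Real.sqrt (B (v i) (v i)))⁻¹ • v i with hw
  have hsq : ∀ i, 0 < Real.sqrt (B (v i) (v i)) := fun i => Real.sqrt_pos.2 (hdiag i)
  have hon : ∀ i j, B (w i) (w j) = if i = j then 1 else 0 := by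
    intro i j
    by_cases hij : i = j
    · subst hij
      simp only [hw, map_smul, LinearMap.smul_apply, smul_eq_mul, if_pos rfl]
      have h1 : Real.sqrt (B (v i) (v i)) * Real.sqrt (B (v i) (v i)) = B (v i) (v i) :=
        Real.mul_self_sqrt (hdiag i).le
      rw [← h1]
      field_simp
      rw [if_pos trivial, Real.sqrt_sq (hsq i).le]
      exact div_self (pow_ne_zero 2 (hsq i).ne')
    · have h0 : B (v i) (v j) = 0 := hv hij
      simp [hw, map_smul, h0, hij]
  refine ⟨_, w, hon, ?_⟩
  intro x
  set z := x - ∑ i, B x (w i) • w i with hz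
  have hzw : ∀ j, B z (w j) = 0 := by
    intro j
    simp only [hz, map_sub, map_sum, map_smul, LinearMap.sub_apply, LinearMap.sum_apply,
      LinearMap.smul_apply, smul_eq_mul]
    rw [Finset.sum_eq_single j]
    · rw [hon j j]; simp
    · intro b _ hb; rw [hon b j, if_neg hb]; ring
    · intro h; exact absurd (Finset.mem_univ j) h
  have hzv : B z = 0 := by
    apply v.ext
    intro j
    have : v j = Real.sqrt (B (v j) (v j)) • w j := by
      rw [hw]; simp [smul_smul, mul_inv_cancel₀ (hsq j).ne']
    rw [this, map_smul]
    simp [hzw j]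
  have hzz : z = 0 := by
    by_contra h
    have := hp z h
    rw [hzv] at this
    simp at this
  rw [hz] at hzz
  exact (sub_eq_zero.1 hzz)

lemma lie_sum_smul' {G : Type*} [LieRing G] [LieAlgebra ℝ G] {κ : Type*} (s : Finset κ)
    (z : G) (c : κ → ℝ) (w : κ → G) :
    ⁅z, ∑ a ∈ s, c a • w a⁆ = ∑ a ∈ s, c a • ⁅z, w a⁆ := by
  rw [show (⁅z, ∑ a ∈ s, c a • w a⁆ : G) = LieAlgebra.ad ℝ G z (∑ a ∈ s, c a • w a) from rfl,
    map_sum]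
  simp [LieAlgebra.ad_apply]

/-- A proper LCP structure `(g,θ,𝔲)` on a Lie algebra `𝔤` is adapted (`θ|_𝔲 = 0`)
if and only if `𝔲` is an ideal of `𝔤`. -/
theorem proper_lcp_adapted_iff_ideal
    {G : Type*} [LieRing G] [LieAlgebra ℝ G] [FiniteDimensional ℝ G]
    (g : LinearMap.BilinForm ℝ G)
    (hsymm : ∀ x y : G, g x y = g y x)
    (hpos : ∀ x : G, x ≠ 0 → 0 < g x x)
    -- θ : non-zero closed 1-form
    (θ : G →ₗ[ℝ] ℝ) (hθ : θ ≠ 0) (hclosed : ∀ x y : G, θ ⁅x, y⁆ = 0)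
    -- 𝔲 : non-zero subspace
    (U : Submodule ℝ G) (hUne : U ≠ ⊥)
    -- the Weyl connection ∇^θ determined by g and θ
    (N : G →ₗ[ℝ] Module.End ℝ G)
    (hN : ∀ x y z : G, g (N x y) z =
      (g ⁅x, y⁆ z - g ⁅x, z⁆ y - g ⁅y, z⁆ x) / 2
        + θ x * g y z + θ y * g x z - θ z * g x y)
    -- (1) 𝔲 and 𝔲^⊥ are Lie subalgebras
    (hUsub : ∀ u ∈ U, ∀ v ∈ U, ⁅u, v⁆ ∈ U)
    (hPsub : ∀ x ∈ LinearMap.BilinForm.orthogonal g U,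
             ∀ y ∈ LinearMap.BilinForm.orthogonal g U,
             ⁅x, y⁆ ∈ LinearMap.BilinForm.orthogonal g U)
    -- (2)
    (h2 : ∀ u ∈ U, ∀ x ∈ LinearMap.BilinForm.orthogonal g U,
      g ⁅u, x⁆ x = θ u * g x x ∧ g ⁅x, u⁆ u = θ x * g u u)
    -- (3) 𝔲 is ∇^θ-parallel and x ↦ ∇^θ_x|_𝔲 is a Lie algebra representation
    (hpar : ∀ x : G, ∀ u ∈ U, N x u ∈ U)
    (hrep : ∀ x y : G, ∀ u ∈ U, N ⁅x, y⁆ u = N x (N y u) - N y (N x u))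
    -- the LCP structure is proper
    (hproper : U ≠ ⊤) :
    (∀ u ∈ U, θ u = 0) ↔ (∀ x : G, ∀ u ∈ U, ⁅x, u⁆ ∈ U) := by
  classical
  set Wo := LinearMap.BilinForm.orthogonal g U with hWodef
  have hWmem : ∀ x : G, x ∈ Wo ↔ ∀ u ∈ U, g u x = 0 := by
    intro x
    rw [hWodef, LinearMap.BilinForm.mem_orthogonal_iff]
  have hUW : ∀ u ∈ U, ∀ p ∈ Wo, g u p = 0 := fun u hu p hp => (hWmem p).1 hp u hu
  have hrefl : g.IsRefl := fun x y h => by rw [hsymm]; exact h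
  have hrestr : (g.restrict U).Nondegenerate := by
    constructor
    all_goals
      intro x hx
      by_contra h
      have hx0 : (x : G) ≠ 0 := fun h0 => h (Subtype.ext h0)
      have := hpos x hx0
      have h2' := hx x
      simp only [LinearMap.BilinForm.restrict_apply, LinearMap.domRestrict_apply] at h2'
      rw [h2'] at this
      exact lt_irrefl 0 this
  have hcompl : IsCompl U Wo := g.isCompl_orthogonal_of_restrict_nondegenerate hrefl hrestr
  have hdecomp : ∀ x : G, ∃ u ∈ U, ∃ p ∈ Wo, x = u + p := by
    intro x
    have hx : x ∈ U ⊔ Wo := by rw [hcompl.sup_eq_top]; trivial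
    obtain ⟨y, hy, z, hz, hyz⟩ := Submodule.mem_sup.1 hx
    exact ⟨y, hy, z, hz, hyz.symm⟩
  have hWtoU : ∀ z : G, (∀ q ∈ Wo, g z q = 0) → z ∈ U := by
    intro z hzq
    obtain ⟨a, ha, b, hb, rfl⟩ := hdecomp z
    have h1 := hzq b hb
    have h2' := hUW a ha b hb
    have hgb : g b b = 0 := by
      rw [map_add, LinearMap.add_apply] at h1
      linarith
    have hb0 : b = 0 := by
      by_contra h
      exact absurd hgb (ne_of_gt (hpos b h))
    rw [hb0, add_zero]
    exact ha
  constructor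
  · -- adapted ⇒ ideal
    intro hadapt
    -- orthonormal families for U and Wo
    have hsU : ∀ x y : ↥U, (g.restrict U) x y = (g.restrict U) y x := fun x y => by
      simp only [LinearMap.BilinForm.restrict_apply, LinearMap.domRestrict_apply]
      exact hsymm _ _
    have hpU : ∀ x : ↥U, x ≠ 0 → 0 < (g.restrict U) x x := fun x hx => by
      simp only [LinearMap.BilinForm.restrict_apply, LinearMap.domRestrict_apply]
      exact hpos x (fun h0 => hx (Subtype.ext h0))
    obtain ⟨m, fv, hfon, hfexp⟩ := exists_on_family (g.restrict U) hsU hpU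
    have hsW : ∀ x y : ↥Wo, (g.restrict Wo) x y = (g.restrict Wo) y x := fun x y => by
      simp only [LinearMap.BilinForm.restrict_apply, LinearMap.domRestrict_apply]
      exact hsymm _ _
    have hpW : ∀ x : ↥Wo, x ≠ 0 → 0 < (g.restrict Wo) x x := fun x hx => by
      simp only [LinearMap.BilinForm.restrict_apply, LinearMap.domRestrict_apply]
      exact hpos x (fun h0 => hx (Subtype.ext h0))
    obtain ⟨n, ev, heon, heexp⟩ := exists_on_family (g.restrict Wo) hsW hpW
    set f : Fin m → G := fun a => ((fv a : G)) with hfdef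
    set e : Fin n → G := fun i => ((ev i : G)) with hedef
    have hfU : ∀ a, f a ∈ U := fun a => (fv a).2
    have heW : ∀ i, e i ∈ Wo := fun i => (ev i).2
    have hfon' : ∀ a b, g (f a) (f b) = if a = b then 1 else 0 := fun a b => by
      have h1 := hfon a b
      simpa only [LinearMap.BilinForm.restrict_apply, LinearMap.domRestrict_apply] using h1
    have hfexp' : ∀ u, u ∈ U → u = ∑ a, g u (f a) • f a := by
      intro u hu
      have h1 := congrArg (Subtype.val) (hfexp ⟨u, hu⟩)
      simpa only [AddSubmonoidClass.coe_finset_sum, SetLike.val_smul,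
        LinearMap.BilinForm.restrict_apply, LinearMap.domRestrict_apply] using h1
    have heexp' : ∀ q, q ∈ Wo → q = ∑ i, g q (e i) • e i := by
      intro q hq
      have h1 := congrArg (Subtype.val) (heexp ⟨q, hq⟩)
      simpa only [AddSubmonoidClass.coe_finset_sum, SetLike.val_smul,
        LinearMap.BilinForm.restrict_apply, LinearMap.domRestrict_apply] using h1
    -- the metric dual of θ
    have hgnd : g.Nondegenerate := by
      constructor
      all_goals
        intro x hx
        by_contra h
        exact absurd (hx x) (ne_of_gt (hpos x h))
    set ω : G := (g.toDual hgnd).symm θ with hωdef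
    have hωapp : ∀ x : G, g ω x = θ x := fun x =>
      LinearMap.BilinForm.apply_toDual_symm_apply θ x
    have hωW : ω ∈ Wo := (hWmem ω).2 (fun u hu => by
      rw [hsymm u ω, hωapp u, hadapt u hu])
    have hθω : 0 < θ ω := by
      obtain ⟨x0, hx0⟩ := DFunLike.ne_iff.mp hθ
      have hωne : ω ≠ 0 := by
        intro h0
        apply hx0
        rw [← hωapp x0, h0]
        simp
      have h1 := hpos ω hωne
      rwa [hωapp ω] at h1
    -- skew-symmetry of mixed brackets in the Wo slots
    have hskew : ∀ v ∈ U, ∀ p ∈ Wo, ∀ q ∈ Wo, g ⁅p, v⁆ q = - g ⁅q, v⁆ p := by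
      intro v hv p hp q hq
      have h0 : ∀ r, r ∈ Wo → g ⁅v, r⁆ r = 0 := fun r hr => by
        rw [(h2 v hv r hr).1, hadapt v hv, zero_mul]
      have hpq := h0 (p + q) (Wo.add_mem hp hq)
      have hpp := h0 p hp
      have hqq := h0 q hq
      simp only [lie_add, map_add, LinearMap.add_apply] at hpq
      have e1 : g ⁅p, v⁆ q = - g ⁅v, p⁆ q := by
        rw [← lie_skew v p, map_neg, LinearMap.neg_apply, neg_neg]
      have e2 : g ⁅q, v⁆ p = - g ⁅v, q⁆ p := by
        rw [← lie_skew v q, map_neg, LinearMap.neg_apply, neg_neg]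
      rw [e1, e2]
      linarith
    -- expansion of pairings against elements of Wo
    have hexpW : ∀ q ∈ Wo, ∀ z : G, g z q = ∑ j, g q (e j) * g z (e j) := by
      intro q hq z
      conv_lhs => rw [heexp' q hq]
      rw [map_sum]
      simp only [map_smul, smul_eq_mul]
    -- ⁅ω, u⁆ stays in U
    have hωU : ∀ v, v ∈ U → ⁅ω, v⁆ ∈ U := by
      intro v hv
      apply hWtoU
      intro q hq
      rw [hskew v hv ω hωW q hq]
      have h3 : g ⁅q, v⁆ ω = 0 := by
        rw [hsymm, hωapp]
        exact hclosed q v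
      rw [h3, neg_zero]
    -- polarized form of condition (2b) at ω
    have hL2 : ∀ a b, g ⁅ω, f a⁆ (f b) + g ⁅ω, f b⁆ (f a) = 2 * θ ω * g (f a) (f b) := by
      intro a b
      have hab := (h2 (f a + f b) (U.add_mem (hfU a) (hfU b)) ω hωW).2
      have ha := (h2 (f a) (hfU a) ω hωW).2
      have hb := (h2 (f b) (hfU b) ω hωW).2
      simp only [lie_add, map_add, LinearMap.add_apply] at hab
      have hba : g (f b) (f a) = g (f a) (f b) := hsymm _ _
      nlinarith [hab, ha, hb, hba]
    -- the key computation
    have key1 : ∀ v, v ∈ U →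
        ∑ i, ∑ j, g ⁅e i, v⁆ (e j) * g ⁅e i, ⁅ω, v⁆⁆ (e j) = 0 := by
      intro v hv
      have hβskew : ∀ i j, g ⁅e i, v⁆ (e j) = - g ⁅e j, v⁆ (e i) :=
        fun i j => hskew v hv (e i) (heW i) (e j) (heW j)
      set c : Fin n → G := fun i => ∑ j, g ⁅e i, v⁆ (e j) • e j with hcdef
      have hcW : ∀ i, c i ∈ Wo :=
        fun i => Submodule.sum_mem _ (fun j _ => Wo.smul_mem _ (heW j))
      have hgc : ∀ (z : G) (i : Fin n), g z (c i) = ∑ j, g ⁅e i, v⁆ (e j) * g z (e j) := by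
        intro z i
        simp only [hcdef]
        rw [map_sum]
        simp only [map_smul, smul_eq_mul]
      have hcup : ∀ i, ⁅e i, v⁆ - c i ∈ U := by
        intro i
        apply hWtoU
        intro q hq
        rw [map_sub, LinearMap.sub_apply]
        have e1 : g ⁅e i, v⁆ q = ∑ j, g q (e j) * g ⁅e i, v⁆ (e j) := hexpW q hq _
        have e2 : g (c i) q = ∑ j, g q (e j) * g ⁅e i, v⁆ (e j) := by
          rw [hsymm (c i) q, hgc q i]
          exact Finset.sum_congr rfl (fun j _ => mul_comm _ _)
        rw [e1, e2, sub_self]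
      have hA : ∀ i, g ⁅⁅ω, e i⁆, v⁆ (c i)
          = - ∑ j, ∑ k, g ⁅e i, v⁆ (e j) * (g ⁅ω, e i⁆ (e k) * g ⁅e j, v⁆ (e k)) := by
        intro i
        have hp' : ⁅ω, e i⁆ ∈ Wo := hPsub ω hωW (e i) (heW i)
        rw [hgc]
        have h4 : ∀ j, g ⁅⁅ω, e i⁆, v⁆ (e j)
            = - ∑ k, g ⁅ω, e i⁆ (e k) * g ⁅e j, v⁆ (e k) := by
          intro j
          rw [hskew v hv _ hp' (e j) (heW j), hexpW _ hp' ⁅e j, v⁆]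
        rw [Finset.sum_congr rfl (fun j _ => by rw [h4 j])]
        simp only [mul_neg, Finset.mul_sum, Finset.sum_neg_distrib]
      have hB : ∀ i, g ⁅ω, c i⁆ (c i)
          = ∑ j, ∑ k, g ⁅e i, v⁆ (e j) * (g ⁅e i, v⁆ (e k) * g ⁅ω, e j⁆ (e k)) := by
        intro i
        have hcexp : (⁅ω, c i⁆ : G) = ∑ j, g ⁅e i, v⁆ (e j) • ⁅ω, e j⁆ := by
          simp only [hcdef]
          exact lie_sum_smul' _ _ _ _
        rw [hgc ⁅ω, c i⁆ i]
        have hstep : ∀ j, g ⁅ω, c i⁆ (e j) = ∑ k, g ⁅e i, v⁆ (e k) * g ⁅ω, e k⁆ (e j) := by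
          intro j
          rw [hcexp]
          simp only [map_sum, LinearMap.sum_apply, map_smul, LinearMap.smul_apply, smul_eq_mul]
        calc ∑ j, g ⁅e i, v⁆ (e j) * g ⁅ω, c i⁆ (e j)
            = ∑ j, ∑ k, g ⁅e i, v⁆ (e j) * (g ⁅e i, v⁆ (e k) * g ⁅ω, e k⁆ (e j)) := by
              refine Finset.sum_congr rfl fun j _ => ?_
              rw [hstep j, Finset.mul_sum]
          _ = ∑ k, ∑ j, g ⁅e i, v⁆ (e j) * (g ⁅e i, v⁆ (e k) * g ⁅ω, e k⁆ (e j)) :=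
              Finset.sum_comm
          _ = ∑ j, ∑ k, g ⁅e i, v⁆ (e k) * (g ⁅e i, v⁆ (e j) * g ⁅ω, e j⁆ (e k)) := rfl
          _ = ∑ j, ∑ k, g ⁅e i, v⁆ (e j) * (g ⁅e i, v⁆ (e k) * g ⁅ω, e j⁆ (e k)) :=
              Finset.sum_congr rfl fun j _ => Finset.sum_congr rfl fun k _ => by ring
      have hC : ∀ i, g ⁅e i, ⁅ω, v⁆⁆ (c i)
          = ∑ j, g ⁅e i, v⁆ (e j) * g ⁅e i, ⁅ω, v⁆⁆ (e j) := fun i => hgc _ i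
      have hjac : ∀ i, g ⁅⁅ω, e i⁆, v⁆ (c i)
          = g ⁅ω, c i⁆ (c i) - g ⁅e i, ⁅ω, v⁆⁆ (c i) := by
        intro i
        have hll : (⁅⁅ω, e i⁆, v⁆ : G) = ⁅ω, ⁅e i, v⁆⁆ - ⁅e i, ⁅ω, v⁆⁆ := lie_lie _ _ _
        rw [hll, map_sub, LinearMap.sub_apply]
        congr 1
        have hsplit : (⁅ω, ⁅e i, v⁆⁆ : G) = ⁅ω, ⁅e i, v⁆ - c i⁆ + ⁅ω, c i⁆ := by
          rw [lie_sub]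
          abel
        rw [hsplit, map_add, LinearMap.add_apply]
        have h0 : g ⁅ω, ⁅e i, v⁆ - c i⁆ (c i) = 0 := hUW _ (hωU _ (hcup i)) _ (hcW i)
        rw [h0, zero_add]
      have hper : ∀ i, ∑ j, g ⁅e i, v⁆ (e j) * g ⁅e i, ⁅ω, v⁆⁆ (e j)
          = (∑ j, ∑ k, g ⁅e i, v⁆ (e j) * (g ⁅e i, v⁆ (e k) * g ⁅ω, e j⁆ (e k)))
            + ∑ j, ∑ k, g ⁅e i, v⁆ (e j) * (g ⁅ω, e i⁆ (e k) * g ⁅e j, v⁆ (e k)) := by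
        intro i
        have h1 := hjac i
        rw [hA i, hB i, hC i] at h1
        linarith
      have hswap : ∑ i, ∑ j, ∑ k, g ⁅e i, v⁆ (e j) * (g ⁅ω, e i⁆ (e k) * g ⁅e j, v⁆ (e k))
          = - ∑ i, ∑ j, ∑ k, g ⁅e i, v⁆ (e j) * (g ⁅e i, v⁆ (e k) * g ⁅ω, e j⁆ (e k)) := by
        calc ∑ i, ∑ j, ∑ k, g ⁅e i, v⁆ (e j) * (g ⁅ω, e i⁆ (e k) * g ⁅e j, v⁆ (e k))
            = ∑ i, ∑ j, ∑ k, -(g ⁅e j, v⁆ (e i) * (g ⁅e j, v⁆ (e k) * g ⁅ω, e i⁆ (e k))) := by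
              refine Finset.sum_congr rfl fun i _ => Finset.sum_congr rfl fun j _ =>
                Finset.sum_congr rfl fun k _ => ?_
              rw [hβskew i j]
              ring
          _ = - ∑ i, ∑ j, ∑ k, g ⁅e j, v⁆ (e i) * (g ⁅e j, v⁆ (e k) * g ⁅ω, e i⁆ (e k)) := by
              simp only [Finset.sum_neg_distrib]
          _ = - ∑ j, ∑ i, ∑ k, g ⁅e j, v⁆ (e i) * (g ⁅e j, v⁆ (e k) * g ⁅ω, e i⁆ (e k)) := by
              rw [Finset.sum_comm]
          _ = - ∑ i, ∑ j, ∑ k, g ⁅e i, v⁆ (e j) * (g ⁅e i, v⁆ (e k) * g ⁅ω, e j⁆ (e k)) := rfl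
      calc ∑ i, ∑ j, g ⁅e i, v⁆ (e j) * g ⁅e i, ⁅ω, v⁆⁆ (e j)
          = ∑ i, ((∑ j, ∑ k, g ⁅e i, v⁆ (e j) * (g ⁅e i, v⁆ (e k) * g ⁅ω, e j⁆ (e k)))
            + ∑ j, ∑ k, g ⁅e i, v⁆ (e j) * (g ⁅ω, e i⁆ (e k) * g ⁅e j, v⁆ (e k))) :=
            Finset.sum_congr rfl (fun i _ => hper i)
        _ = (∑ i, ∑ j, ∑ k, g ⁅e i, v⁆ (e j) * (g ⁅e i, v⁆ (e k) * g ⁅ω, e j⁆ (e k)))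
            + ∑ i, ∑ j, ∑ k, g ⁅e i, v⁆ (e j) * (g ⁅ω, e i⁆ (e k) * g ⁅e j, v⁆ (e k)) :=
            Finset.sum_add_distrib
        _ = 0 := by rw [hswap]; ring
    -- apply key1 to the basis of U and sum up
    have hk1f : ∀ a, ∑ b, g ⁅ω, f a⁆ (f b) *
        (∑ i, ∑ j, g ⁅e i, f a⁆ (e j) * g ⁅e i, f b⁆ (e j)) = 0 := by
      intro a
      have h1 := key1 (f a) (hfU a)
      have hexpand : ∀ i : Fin n, (⁅e i, ⁅ω, f a⁆⁆ : G)
          = ∑ b, g ⁅ω, f a⁆ (f b) • ⁅e i, f b⁆ := by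
        intro i
        conv_lhs => rw [hfexp' ⁅ω, f a⁆ (hωU _ (hfU a))]
        exact lie_sum_smul' _ _ _ _
      have h2' : ∀ i j, g ⁅e i, ⁅ω, f a⁆⁆ (e j)
          = ∑ b, g ⁅ω, f a⁆ (f b) * g ⁅e i, f b⁆ (e j) := by
        intro i j
        rw [hexpand i, map_sum, LinearMap.sum_apply]
        exact Finset.sum_congr rfl (fun b _ => by
          rw [map_smul, LinearMap.smul_apply, smul_eq_mul])
      calc ∑ b, g ⁅ω, f a⁆ (f b) * (∑ i, ∑ j, g ⁅e i, f a⁆ (e j) * g ⁅e i, f b⁆ (e j))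
          = ∑ b, ∑ i, ∑ j, g ⁅e i, f a⁆ (e j) * (g ⁅ω, f a⁆ (f b) * g ⁅e i, f b⁆ (e j)) := by
            refine Finset.sum_congr rfl fun b _ => ?_
            rw [Finset.mul_sum]
            refine Finset.sum_congr rfl fun i _ => ?_
            rw [Finset.mul_sum]
            exact Finset.sum_congr rfl fun j _ => by ring
        _ = ∑ i, ∑ b, ∑ j, g ⁅e i, f a⁆ (e j) * (g ⁅ω, f a⁆ (f b) * g ⁅e i, f b⁆ (e j)) := by
            rw [Finset.sum_comm]
        _ = ∑ i, ∑ j, ∑ b, g ⁅e i, f a⁆ (e j) * (g ⁅ω, f a⁆ (f b) * g ⁅e i, f b⁆ (e j)) := by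
            exact Finset.sum_congr rfl fun i _ => Finset.sum_comm
        _ = ∑ i, ∑ j, g ⁅e i, f a⁆ (e j) * g ⁅e i, ⁅ω, f a⁆⁆ (e j) := by
            refine Finset.sum_congr rfl fun i _ => Finset.sum_congr rfl fun j _ => ?_
            rw [h2' i j, Finset.mul_sum]
        _ = 0 := h1
    have hTsymm : ∀ a b, (∑ i, ∑ j, g ⁅e i, f a⁆ (e j) * g ⁅e i, f b⁆ (e j))
        = ∑ i, ∑ j, g ⁅e i, f b⁆ (e j) * g ⁅e i, f a⁆ (e j) := by
      intro a b
      exact Finset.sum_congr rfl fun i _ => Finset.sum_congr rfl fun j _ => mul_comm _ _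
    have hsum0 : ∑ a, ∑ b, g ⁅ω, f a⁆ (f b) *
        (∑ i, ∑ j, g ⁅e i, f a⁆ (e j) * g ⁅e i, f b⁆ (e j)) = 0 :=
      Finset.sum_eq_zero (fun a _ => hk1f a)
    have hsum0' : ∑ a, ∑ b, g ⁅ω, f b⁆ (f a) *
        (∑ i, ∑ j, g ⁅e i, f a⁆ (e j) * g ⁅e i, f b⁆ (e j)) = 0 := by
      calc ∑ a, ∑ b, g ⁅ω, f b⁆ (f a) *
            (∑ i, ∑ j, g ⁅e i, f a⁆ (e j) * g ⁅e i, f b⁆ (e j))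
          = ∑ b, ∑ a, g ⁅ω, f b⁆ (f a) *
            (∑ i, ∑ j, g ⁅e i, f a⁆ (e j) * g ⁅e i, f b⁆ (e j)) := Finset.sum_comm
        _ = ∑ a, ∑ b, g ⁅ω, f a⁆ (f b) *
            (∑ i, ∑ j, g ⁅e i, f b⁆ (e j) * g ⁅e i, f a⁆ (e j)) := rfl
        _ = ∑ a, ∑ b, g ⁅ω, f a⁆ (f b) *
            (∑ i, ∑ j, g ⁅e i, f a⁆ (e j) * g ⁅e i, f b⁆ (e j)) := by
            refine Finset.sum_congr rfl fun a _ => Finset.sum_congr rfl fun b _ => ?_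
            rw [hTsymm a b]
        _ = 0 := hsum0
    have hdiag0 : ∑ a, ∑ i, ∑ j, g ⁅e i, f a⁆ (e j) * g ⁅e i, f a⁆ (e j) = 0 := by
      have hadd : ∑ a, ∑ b, (g ⁅ω, f a⁆ (f b) + g ⁅ω, f b⁆ (f a)) *
          (∑ i, ∑ j, g ⁅e i, f a⁆ (e j) * g ⁅e i, f b⁆ (e j)) = 0 := by
        have := congrArg₂ (· + ·) hsum0 hsum0'
        simp only [add_zero] at this
        rw [← this, ← Finset.sum_add_distrib]
        refine Finset.sum_congr rfl fun a _ => ?_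
        rw [← Finset.sum_add_distrib]
        exact Finset.sum_congr rfl fun b _ => by ring
      have hcollapse : ∑ a, ∑ b, (g ⁅ω, f a⁆ (f b) + g ⁅ω, f b⁆ (f a)) *
          (∑ i, ∑ j, g ⁅e i, f a⁆ (e j) * g ⁅e i, f b⁆ (e j))
          = 2 * θ ω * ∑ a, ∑ i, ∑ j, g ⁅e i, f a⁆ (e j) * g ⁅e i, f a⁆ (e j) := by
        rw [Finset.mul_sum]
        refine Finset.sum_congr rfl fun a _ => ?_
        rw [Finset.sum_eq_single a]
        · rw [hL2 a a, hfon' a a, if_pos rfl, mul_one]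
        · intro b _ hb
          rw [hL2 a b, hfon' a b, if_neg (fun h => hb h.symm), mul_zero, zero_mul]
        · intro h
          exact absurd (Finset.mem_univ a) h
      rw [hcollapse] at hadd
      have h2θ : (2 : ℝ) * θ ω ≠ 0 := by positivity
      exact (mul_eq_zero.1 hadd).resolve_left h2θ
    have hbase : ∀ a i j, g ⁅e i, f a⁆ (e j) = 0 := by
      intro a i j
      have hnn1 : ∀ a' : Fin m, 0 ≤ ∑ i', ∑ j', g ⁅e i', f a'⁆ (e j') * g ⁅e i', f a'⁆ (e j') :=
        fun a' => Finset.sum_nonneg fun i' _ => Finset.sum_nonneg fun j' _ => mul_self_nonneg _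
      have h1 : ∑ i', ∑ j', g ⁅e i', f a⁆ (e j') * g ⁅e i', f a⁆ (e j') = 0 :=
        (Finset.sum_eq_zero_iff_of_nonneg (fun a' _ => hnn1 a')).1 hdiag0 a (Finset.mem_univ a)
      have h2'' : ∑ j', g ⁅e i, f a⁆ (e j') * g ⁅e i, f a⁆ (e j') = 0 :=
        (Finset.sum_eq_zero_iff_of_nonneg (fun i' _ =>
          Finset.sum_nonneg fun j' _ => mul_self_nonneg _)).1 h1 i (Finset.mem_univ i)
      have h3 : g ⁅e i, f a⁆ (e j) * g ⁅e i, f a⁆ (e j) = 0 :=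
        (Finset.sum_eq_zero_iff_of_nonneg (fun j' _ => mul_self_nonneg _)).1 h2'' j
          (Finset.mem_univ j)
      exact mul_self_eq_zero.1 h3
    have hzero : ∀ v, v ∈ U → ∀ i j, g ⁅e i, v⁆ (e j) = 0 := by
      intro v hv i j
      have hlie : (⁅e i, v⁆ : G) = ∑ a, g v (f a) • ⁅e i, f a⁆ := by
        conv_lhs => rw [hfexp' v hv]
        exact lie_sum_smul' _ _ _ _
      rw [hlie, map_sum, LinearMap.sum_apply]
      refine Finset.sum_eq_zero fun a _ => ?_
      rw [map_smul, LinearMap.smul_apply, smul_eq_mul, hbase a i j, mul_zero]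
    have hWbr : ∀ v, v ∈ U → ∀ p, p ∈ Wo → (⁅p, v⁆ : G) ∈ U := by
      intro v hv p hp
      apply hWtoU
      intro q hq
      rw [hexpW q hq]
      refine Finset.sum_eq_zero fun j _ => ?_
      have h5 : g ⁅p, v⁆ (e j) = 0 := by
        rw [hskew v hv p hp (e j) (heW j), hexpW p hp ⁅e j, v⁆]
        rw [Finset.sum_eq_zero fun k _ => by rw [hzero v hv j k, mul_zero]]
        ring
      rw [h5, mul_zero]
    intro x u hu
    obtain ⟨a, ha, b, hb, rfl⟩ := hdecomp x
    rw [add_lie]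
    exact U.add_mem (hUsub a ha u hu) (hWbr u hu b hb)
  · -- ideal ⇒ adapted
    intro hideal u hu
    have hWone : Wo ≠ ⊥ := by
      intro h
      apply hproper
      have hst := hcompl.sup_eq_top
      rwa [h, sup_bot_eq] at hst
    obtain ⟨p, hp, hp0⟩ := Submodule.exists_mem_ne_zero_of_ne_bot hWone
    have h1 := (h2 u hu p hp).1
    have hmem : ⁅u, p⁆ ∈ U := by
      have h3 : -⁅p, u⁆ ∈ U := U.neg_mem (hideal p u hu)
      rwa [lie_skew] at h3
    rw [hUW _ hmem p hp] at h1
    have hgp := hpos p hp0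
    by_contra hne
    exact absurd (mul_ne_zero hne (ne_of_gt hgp)) (fun hc => hc h1.symm)
end

section
/- If (g,θ,𝔲) is an adapted proper LCP structure on a Lie algebra 𝔤, then 𝔲 is an abelian ideal contained in the derived algebra [𝔤,𝔤]. -/
open scoped RealInnerProductSpace

/-- Restrict a bilinear map `B : G →ₗ G →ₗ G` to submodules `V`, `W` (with values in `W`). -/
private def restrict3 {G : Type*} [AddCommGroup G] [Module ℝ G]
    (B : G →ₗ[ℝ] G →ₗ[ℝ] G) (V W : Submodule ℝ G)
    (h : ∀ v ∈ V, ∀ w ∈ W, B v w ∈ W) : V →ₗ[ℝ] W →ₗ[ℝ] W where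
  toFun v := (B (v : G)).restrict (fun w hw => h v v.2 w hw)
  map_add' v v' := by
    refine LinearMap.ext fun w => Subtype.ext ?_
    simp [LinearMap.restrict_coe_apply]
  map_smul' r v := by
    refine LinearMap.ext fun w => Subtype.ext ?_
    simp [LinearMap.restrict_coe_apply]

private lemma restrict3_coe {G : Type*} [AddCommGroup G] [Module ℝ G]
    (B : G →ₗ[ℝ] G →ₗ[ℝ] G) (V W : Submodule ℝ G)
    (h : ∀ v ∈ V, ∀ w ∈ W, B v w ∈ W) (v : V) (w : W) :
    (restrict3 B V W h v w : G) = B (v : G) (w : G) := rfl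

/-- The key "trace trick": if `v ↦ L v` is a linear family of skew endomorphisms of `W`,
`T` has symmetric part `c • id` with `c > 0`, and `L (T v) = [D, L v]` for some endomorphism
`D` of `W`, then `L = 0`. -/
private theorem kill_lemma {V W : Type*} [NormedAddCommGroup V] [InnerProductSpace ℝ V]
    [FiniteDimensional ℝ V] [NormedAddCommGroup W] [InnerProductSpace ℝ W]
    [FiniteDimensional ℝ W]
    (L : V →ₗ[ℝ] W →ₗ[ℝ] W) (T : V →ₗ[ℝ] V) (D : W →ₗ[ℝ] W) (c : ℝ) (hc : 0 < c)
    (hT : ∀ v w : V, ⟪T v, w⟫ + ⟪v, T w⟫ = 2 * c * ⟪v, w⟫)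
    (hskew : ∀ (v : V) (x y : W), ⟪L v x, y⟫ = - ⟪x, L v y⟫)
    (h0 : ∀ v : V, L (T v) = D ∘ₗ L v - L v ∘ₗ D) :
    L = 0 := by
  classical
  let e := stdOrthonormalBasis ℝ V
  let f := stdOrthonormalBasis ℝ W
  set Φ : V → V → ℝ := fun v w => ∑ j, ⟪L v (f j), L w (f j)⟫ with hΦ
  have hΦsym : ∀ v w, Φ v w = Φ w v := fun v w =>
    Finset.sum_congr rfl fun j _ => real_inner_comm _ _
  -- trace commutativity over the orthonormal basis f
  have expand : ∀ X Y : W →ₗ[ℝ] W, ∀ j, ⟪X (Y (f j)), f j⟫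
      = ∑ k, ⟪f k, Y (f j)⟫ * ⟪X (f k), f j⟫ := by
    intro X Y j
    conv_lhs => rw [← f.sum_repr' (Y (f j))]
    rw [map_sum, sum_inner]
    exact Finset.sum_congr rfl fun k _ => by
      rw [map_smul, real_inner_smul_left]
  have trS : ∀ X Y : W →ₗ[ℝ] W,
      (∑ j, ⟪X (Y (f j)), f j⟫) = ∑ j, ⟪Y (X (f j)), f j⟫ := by
    intro X Y
    calc (∑ j, ⟪X (Y (f j)), f j⟫)
        = ∑ j, ∑ k, ⟪f k, Y (f j)⟫ * ⟪X (f k), f j⟫ :=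
          Finset.sum_congr rfl fun j _ => expand X Y j
      _ = ∑ k, ∑ j, ⟪f k, Y (f j)⟫ * ⟪X (f k), f j⟫ := Finset.sum_comm
      _ = ∑ k, ∑ j, ⟪f j, X (f k)⟫ * ⟪Y (f j), f k⟫ :=
          Finset.sum_congr rfl fun k _ => Finset.sum_congr rfl fun j _ => by
            rw [real_inner_comm (f k) (Y (f j)), real_inner_comm (X (f k)) (f j)]; ring
      _ = ∑ k, ⟪Y (X (f k)), f k⟫ :=
          Finset.sum_congr rfl fun k _ => (expand Y X k).symm
  have step1 : ∀ v, Φ (T v) v = 0 := by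
    intro v
    have hsk : ∀ x y : W, ⟪L v x, y⟫ = -⟪x, L v y⟫ := hskew v
    have hterm : ∀ j, ⟪L (T v) (f j), L v (f j)⟫
        = ⟪(L v) ((L v) (D (f j))), f j⟫ - ⟪(L v) (D ((L v) (f j))), f j⟫ := by
      intro j
      rw [h0 v]
      have h1 : (D ∘ₗ L v - L v ∘ₗ D) (f j) = D (L v (f j)) - L v (D (f j)) := rfl
      rw [h1, inner_sub_left]
      have h2 : ⟪D (L v (f j)), L v (f j)⟫ = - ⟪L v (D (L v (f j))), f j⟫ := by
        have := hsk (D (L v (f j))) (f j)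
        linarith
      have h3 : ⟪L v (D (f j)), L v (f j)⟫ = - ⟪L v (L v (D (f j))), f j⟫ := by
        have := hsk (L v (D (f j))) (f j)
        linarith
      rw [h2, h3]; ring
    have tr1 : (∑ j, ⟪L v (L v (D (f j))), f j⟫) = ∑ j, ⟪L v (D (L v (f j))), f j⟫ := by
      simpa using trS (L v) (L v ∘ₗ D)
    calc Φ (T v) v
        = ∑ j, (⟪(L v) ((L v) (D (f j))), f j⟫ - ⟪(L v) (D ((L v) (f j))), f j⟫) :=
          Finset.sum_congr rfl fun j _ => hterm j
      _ = (∑ j, ⟪L v (L v (D (f j))), f j⟫) - ∑ j, ⟪L v (D (L v (f j))), f j⟫ :=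
          Finset.sum_sub_distrib _ _
      _ = 0 := by rw [tr1, sub_self]
  set S : V →ₗ[ℝ] V := T - c • LinearMap.id with hSdef
  have hTS : ∀ v, T v = c • v + S v := by
    intro v; simp [hSdef]
  have hS : ∀ v w, ⟪S v, w⟫ = - ⟪v, S w⟫ := by
    intro v w
    have h1 := hT v w
    simp only [hSdef, LinearMap.sub_apply, LinearMap.smul_apply, LinearMap.id_apply,
      inner_sub_left, inner_sub_right, real_inner_smul_left, real_inner_smul_right]
    linarith
  have hΦadd : ∀ a b w : V, Φ (a + b) w = Φ a w + Φ b w := by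
    intro a b w
    simp only [hΦ, map_add, LinearMap.add_apply, inner_add_left, Finset.sum_add_distrib]
  have hΦsmul : ∀ (r : ℝ) (a w : V), Φ (r • a) w = r * Φ a w := by
    intro r a w
    simp only [hΦ, map_smul, LinearMap.smul_apply, real_inner_smul_left, Finset.mul_sum]
  have hΦexpand : ∀ (x w : V), Φ x w = ∑ k, ⟪e k, x⟫ * Φ (e k) w := by
    intro x w
    have hL : L x = ∑ k, ⟪e k, x⟫ • L (e k) := by
      conv_lhs => rw [← e.sum_repr' x]
      rw [map_sum]
      exact Finset.sum_congr rfl fun k _ => by rw [map_smul]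
    simp only [hΦ]
    rw [hL]
    simp only [LinearMap.sum_apply, LinearMap.smul_apply, sum_inner, real_inner_smul_left]
    rw [Finset.sum_comm]
    simp only [Finset.mul_sum]
  have hsum0 : ∑ i, Φ (T (e i)) (e i) = 0 := Finset.sum_eq_zero fun i _ => step1 (e i)
  have hskewsum : ∑ i, Φ (S (e i)) (e i) = 0 := by
    rw [Finset.sum_congr rfl fun i _ => hΦexpand (S (e i)) (e i)]
    have key : (∑ i, ∑ k, ⟪e k, S (e i)⟫ * Φ (e k) (e i))
        = - ∑ i, ∑ k, ⟪e k, S (e i)⟫ * Φ (e k) (e i) := by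
      nth_rewrite 1 [Finset.sum_comm]
      rw [← Finset.sum_neg_distrib]
      refine Finset.sum_congr rfl fun a _ => ?_
      rw [← Finset.sum_neg_distrib]
      refine Finset.sum_congr rfl fun b _ => ?_
      have h1 : ⟪e a, S (e b)⟫ = - ⟪e b, S (e a)⟫ := by
        have h2 := hS (e a) (e b)
        have h3 : ⟪S (e a), e b⟫ = ⟪e b, S (e a)⟫ := real_inner_comm _ _
        linarith
      rw [h1, hΦsym (e a) (e b)]; ring
    linarith
  have hsum : c * ∑ i, Φ (e i) (e i) = 0 := by
    have hh : ∑ i, Φ (T (e i)) (e i)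
        = c * (∑ i, Φ (e i) (e i)) + ∑ i, Φ (S (e i)) (e i) := by
      rw [Finset.sum_congr rfl fun i _ => by rw [hTS (e i), hΦadd, hΦsmul],
        Finset.sum_add_distrib, Finset.mul_sum]
    rw [hsum0, hskewsum, add_zero] at hh
    linarith
  have hzero : ∑ i, Φ (e i) (e i) = 0 := by
    rcases mul_eq_zero.mp hsum with h | h
    · exact absurd h hc.ne'
    · exact h
  have hΦnn : ∀ i, ∀ j ∈ Finset.univ, (0:ℝ) ≤ ⟪L (e i) (f j), L (e i) (f j)⟫ :=
    fun i j _ => real_inner_self_nonneg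
  have hΦdiag : ∀ i, Φ (e i) (e i) = 0 := by
    have hnn : ∀ i ∈ Finset.univ, 0 ≤ Φ (e i) (e i) := fun i _ =>
      Finset.sum_nonneg (hΦnn i)
    exact fun i => (Finset.sum_eq_zero_iff_of_nonneg hnn).mp hzero i (Finset.mem_univ i)
  have hLe : ∀ i, L (e i) = 0 := by
    intro i
    refine Module.Basis.ext f.toBasis fun j => ?_
    have hj : ⟪L (e i) (f j), L (e i) (f j)⟫ = 0 :=
      (Finset.sum_eq_zero_iff_of_nonneg (hΦnn i)).mp (hΦdiag i) j (Finset.mem_univ j)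
    have : L (e i) (f j) = 0 := inner_self_eq_zero.mp hj
    simpa [f.coe_toBasis] using this
  refine Module.Basis.ext e.toBasis fun i => ?_
  simpa [e.coe_toBasis] using hLe i

/-- If `(g,θ,𝔲)` is an adapted proper LCP structure on a Lie algebra `𝔤`, then
`𝔲` is an abelian ideal contained in the derived algebra `⁅𝔤,𝔤⁆`. -/
theorem adapted_lcp_abelian_ideal_in_derived
    {G : Type*} [LieRing G] [LieAlgebra ℝ G] [FiniteDimensional ℝ G]
    (g : LinearMap.BilinForm ℝ G)
    (hsymm : ∀ x y : G, g x y = g y x)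
    (hpos : ∀ x : G, x ≠ 0 → 0 < g x x)
    -- θ : non-zero closed 1-form
    (θ : G →ₗ[ℝ] ℝ) (hθ : θ ≠ 0) (hclosed : ∀ x y : G, θ ⁅x, y⁆ = 0)
    -- 𝔲 : non-zero subspace
    (U : Submodule ℝ G) (hUne : U ≠ ⊥)
    -- the Weyl connection ∇^θ determined by g and θ
    (N : G →ₗ[ℝ] Module.End ℝ G)
    (hN : ∀ x y z : G, g (N x y) z =
      (g ⁅x, y⁆ z - g ⁅x, z⁆ y - g ⁅y, z⁆ x) / 2
        + θ x * g y z + θ y * g x z - θ z * g x y)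
    -- (1) 𝔲 and 𝔲^⊥ are Lie subalgebras
    (hUsub : ∀ u ∈ U, ∀ v ∈ U, ⁅u, v⁆ ∈ U)
    (hPsub : ∀ x ∈ LinearMap.BilinForm.orthogonal g U,
             ∀ y ∈ LinearMap.BilinForm.orthogonal g U,
             ⁅x, y⁆ ∈ LinearMap.BilinForm.orthogonal g U)
    -- (2)
    (h2 : ∀ u ∈ U, ∀ x ∈ LinearMap.BilinForm.orthogonal g U,
      g ⁅u, x⁆ x = θ u * g x x ∧ g ⁅x, u⁆ u = θ x * g u u)
    -- (3) 𝔲 is ∇^θ-parallel and x ↦ ∇^θ_x|_𝔲 is a Lie algebra representation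
    (hpar : ∀ x : G, ∀ u ∈ U, N x u ∈ U)
    (hrep : ∀ x y : G, ∀ u ∈ U, N ⁅x, y⁆ u = N x (N y u) - N y (N x u))
    -- the LCP structure is proper and adapted
    (hproper : U ≠ ⊤) (hadapt : ∀ u ∈ U, θ u = 0) :
    (∀ x : G, ∀ u ∈ U, ⁅x, u⁆ ∈ U) ∧
    (∀ u ∈ U, ∀ v ∈ U, ⁅u, v⁆ = 0) ∧
    (∀ u ∈ U, u ∈ LieAlgebra.derivedSeries ℝ G 1) := by
  classical
  set P := LinearMap.BilinForm.orthogonal g U with hPdef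
  have hdef : ∀ x : G, g x x = 0 → x = 0 := by
    intro x hx
    by_contra h
    exact absurd hx (ne_of_gt (hpos x h))
  -- inner product space structure on G coming from g
  letI core : InnerProductSpace.Core ℝ G :=
    { inner := fun x y => g x y
      conj_inner_symm := fun x y => by simpa using hsymm y x
      re_inner_nonneg := fun x => by
        rcases eq_or_ne x 0 with h | h
        · simp [h]
        · simpa using le_of_lt (hpos x h)
      add_left := fun x y z => by simp
      smul_left := fun x y r => by simp
      definite := hdef }
  letI : NormedAddCommGroup G := core.toNormedAddCommGroup
  letI : InnerProductSpace ℝ G := InnerProductSpace.ofCore core.toCore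
  have hgin : ∀ x y : G, ⟪x, y⟫ = g x y := fun x y => rfl
  -- membership in P
  have hPmem : ∀ x : G, x ∈ P ↔ ∀ u ∈ U, g u x = 0 := by
    intro x
    simp [hPdef, LinearMap.BilinForm.mem_orthogonal_iff, LinearMap.BilinForm.IsOrtho]
  -- the decomposition G = U ⊕ P
  have hrefl : g.IsRefl := fun x y h => by rw [hsymm]; exact h
  have hnd : (g.restrict U).Nondegenerate := by
    refine ⟨?_, ?_⟩ <;>
    ( intro u hu
      have := hu u
      simp only [LinearMap.BilinForm.restrict_apply] at this
      exact Subtype.ext (hdef _ this))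
  have hcompl : IsCompl U P :=
    LinearMap.BilinForm.isCompl_orthogonal_of_restrict_nondegenerate hrefl hnd
  set prU : G →ₗ[ℝ] G := U.subtype ∘ₗ U.linearProjOfIsCompl P hcompl with hprUdef
  set prP : G →ₗ[ℝ] G := P.subtype ∘ₗ P.linearProjOfIsCompl U hcompl.symm with hprPdef
  have hprU_mem : ∀ x : G, prU x ∈ U := fun x => Submodule.coe_mem _
  have hprP_mem : ∀ x : G, prP x ∈ P := fun x => Submodule.coe_mem _
  have hprU_left : ∀ u ∈ U, prU u = u := by
    intro u hu
    exact congrArg Subtype.val (Submodule.projectionOnto_apply_of_mem_left hcompl hu)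
  have hprU_right : ∀ p ∈ P, prU p = 0 := by
    intro p hp
    exact congrArg Subtype.val (Submodule.projectionOnto_apply_of_mem_right hcompl hp)
  have hprP_left : ∀ p ∈ P, prP p = p := by
    intro p hp
    exact congrArg Subtype.val (Submodule.projectionOnto_apply_of_mem_left hcompl.symm hp)
  have hprP_right : ∀ u ∈ U, prP u = 0 := by
    intro u hu
    exact congrArg Subtype.val (Submodule.projectionOnto_apply_of_mem_right hcompl.symm hu)
  have hsplit : ∀ x : G, x = prU x + prP x := by
    intro x
    obtain ⟨u, p, hu, hp, hx⟩ := Submodule.codisjoint_iff_exists_add_eq.mp hcompl.codisjoint x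
    rw [← hx, map_add, map_add, hprU_left u hu, hprU_right p hp, hprP_left p hp,
      hprP_right u hu]
    abel
  -- orthogonality relations
  have hUP0 : ∀ u ∈ U, ∀ p ∈ P, g u p = 0 := fun u hu p hp => (hPmem p).mp hp u hu
  have hPU0 : ∀ p ∈ P, ∀ u ∈ U, g p u = 0 := fun p hp u hu => by
    rw [hsymm]; exact hUP0 u hu p hp
  -- the vector ξ dual to θ
  obtain ⟨ξ, hξ⟩ : ∃ ξ : G, ∀ y : G, ⟪ξ, y⟫ = θ y := by
    refine ⟨(InnerProductSpace.toDual ℝ G).symm (LinearMap.toContinuousLinearMap θ), fun y => ?_⟩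
    simpa using InnerProductSpace.toDual_symm_apply
      (y := LinearMap.toContinuousLinearMap θ) (x := y)
  have hgξ : ∀ y : G, g ξ y = θ y := fun y => by rw [← hgin]; exact hξ y
  have hξP : ξ ∈ P := by
    rw [hPmem]
    intro u hu
    rw [hsymm, hgξ u, hadapt u hu]
  have hξ0 : ξ ≠ 0 := by
    intro h
    apply hθ
    ext y
    rw [← hgξ y, h]
    simp
  set c : ℝ := g ξ ξ with hcdef
  have hc : 0 < c := hpos ξ hξ0
  have hθξ : θ ξ = c := by rw [← hgξ ξ]
  have hgsk : ∀ a b z : G, g ⁅a, b⁆ z = - g ⁅b, a⁆ z := by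
    intro a b z
    rw [← lie_skew b a, map_neg, LinearMap.neg_apply, neg_neg]
  -- skewness of x ↦ pr_P ⁅x, u⁆ on P (from (2a) and adaptedness)
  have h2a : ∀ u ∈ U, ∀ x ∈ P, g ⁅u, x⁆ x = 0 := by
    intro u hu x hx
    rw [(h2 u hu x hx).1, hadapt u hu, zero_mul]
  have skewA : ∀ u ∈ U, ∀ x ∈ P, ∀ y ∈ P, g ⁅x, u⁆ y = - g ⁅y, u⁆ x := by
    intro u hu x hx y hy
    have hxy := h2a u hu (x + y) (P.add_mem hx hy)
    have hx0 := h2a u hu x hx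
    have hy0 := h2a u hu y hy
    have hexp : g ⁅u, x⁆ y + g ⁅u, y⁆ x = 0 := by
      simp only [lie_add, map_add, LinearMap.add_apply] at hxy
      linarith
    rw [hgsk x u y, hgsk y u x]
    linarith
  -- symmetric part of u ↦ ⁅ξ, u⁆ on U is c • id (from (2b))
  have h2b : ∀ u ∈ U, g ⁅ξ, u⁆ u = c * g u u := by
    intro u hu
    rw [(h2 u hu ξ hξP).2, hθξ]
  have hsymTξ : ∀ u ∈ U, ∀ v ∈ U, g ⁅ξ, u⁆ v + g ⁅ξ, v⁆ u = 2 * c * g u v := by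
    intro u hu v hv
    have huv := h2b (u + v) (U.add_mem hu hv)
    have hu0 := h2b u hu
    have hv0 := h2b v hv
    simp only [lie_add, map_add, LinearMap.add_apply, mul_add] at huv
    have hvu : c * g v u = c * g u v := by rw [hsymm v u]
    linarith
  -- key step: ⁅ξ, u⁆ ∈ U for u ∈ U (uses closedness of θ)
  have hξU : ∀ u ∈ U, ⁅ξ, u⁆ ∈ U := by
    intro u hu
    set q : G := prP ⁅ξ, u⁆ with hq
    have hqP : q ∈ P := hprP_mem _
    have h3 : g ⁅ξ, u⁆ q = - g ⁅q, u⁆ ξ := skewA u hu ξ hξP q hqP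
    have h4 : g ⁅q, u⁆ ξ = 0 := by
      rw [hsymm, hgξ, hclosed]
    have h5 : g (prU ⁅ξ, u⁆) q = 0 := hUP0 _ (hprU_mem _) q hqP
    have h6 : g q q = 0 := by
      have h7 : g ⁅ξ, u⁆ q = g (prU ⁅ξ, u⁆) q + g q q := by
        conv_lhs => rw [hsplit ⁅ξ, u⁆]
        rw [map_add]
        rfl
      rw [h3, h4] at h7
      rw [h5] at h7
      linarith
    have hq0 : q = 0 := hdef q h6
    have := hsplit ⁅ξ, u⁆
    rw [← hq, hq0, add_zero] at this
    rw [this]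
    exact hprU_mem _
  -- the restriction τ of ad ξ to U
  have hadmem : ∀ u ∈ U, (LieAlgebra.ad ℝ G ξ) u ∈ U := by
    intro u hu
    simpa [LieAlgebra.ad_apply] using hξU u hu
  set τ : U →ₗ[ℝ] U := (LieAlgebra.ad ℝ G ξ : G →ₗ[ℝ] G).restrict hadmem with hτdef
  have hτcoe : ∀ u : U, (τ u : G) = ⁅ξ, (u : G)⁆ := by
    intro u
    rw [hτdef, LinearMap.restrict_coe_apply]
    simp [LieAlgebra.ad_apply]
  -- τ is bijective
  have hτinj : Function.Injective τ := by
    rw [← LinearMap.ker_eq_bot, Submodule.eq_bot_iff]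
    intro u hu
    rw [LinearMap.mem_ker] at hu
    have h8 : (τ u : G) = 0 := by rw [hu]; rfl
    have h9 : g ⁅ξ, (u : G)⁆ (u : G) = c * g u u := h2b u u.2
    rw [← hτcoe u, h8] at h9
    simp only [map_zero, LinearMap.zero_apply] at h9
    have : g (u : G) (u : G) = 0 := by
      rcases mul_eq_zero.mp h9.symm with h | h
      · exact absurd h hc.ne'
      · exact h
    exact Subtype.ext (hdef _ this)
  have hτsurj : Function.Surjective τ := LinearMap.injective_iff_surjective.mp hτinj
  -- torsion-freeness of N
  have htors : ∀ x y : G, N x y - N y x = ⁅x, y⁆ := by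
    intro x y
    have hz : ∀ z : G, g (N x y - N y x - ⁅x, y⁆) z = 0 := by
      intro z
      have h1 := hN x y z
      have h2' := hN y x z
      have h3 : g ⁅y, x⁆ z = - g ⁅x, y⁆ z := hgsk y x z
      have h4 : g x y = g y x := hsymm x y
      simp only [map_sub, LinearMap.sub_apply]
      rw [h1, h2', h3]
      ring_nf
      rw [h4]
      ring
    have h0 := hdef _ (hz (N x y - N y x - ⁅x, y⁆))
    exact sub_eq_zero.mp h0
  -- N with all three arguments in U
  have hNU : ∀ v ∈ U, ∀ u ∈ U, ∀ w ∈ U, g (N v u) w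
      = (g ⁅v, u⁆ w - g ⁅v, w⁆ u - g ⁅u, w⁆ v) / 2 := by
    intro v hv u hu w hw
    rw [hN v u w, hadapt v hv, hadapt u hu, hadapt w hw]
    ring
  have hNskew : ∀ v ∈ U, ∀ u ∈ U, ∀ w ∈ U, g (N v u) w = - g (N v w) u := by
    intro v hv u hu w hw
    rw [hNU v hv u hu w hw, hNU v hv w hw u hu]
    have h3 : g ⁅w, u⁆ v = - g ⁅u, w⁆ v := hgsk w u v
    rw [h3]
    ring
  -- N ξ u = ⁅ξ, u⁆ on U
  have hNξ : ∀ u ∈ U, N ξ u = ⁅ξ, u⁆ := by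
    intro u hu
    have key : ∀ v ∈ U, g (N ξ u) v = g ⁅ξ, u⁆ v := by
      intro v hv
      rw [hN ξ u v, hadapt u hu, hadapt v hv, hθξ]
      have h3 : g ⁅u, v⁆ ξ = 0 := by rw [hsymm, hgξ, hclosed]
      have h4 := hsymTξ u hu v hv
      rw [h3]
      linarith
    set d : G := N ξ u - ⁅ξ, u⁆ with hd
    have hdU : d ∈ U := U.sub_mem (hpar ξ u hu) (hξU u hu)
    have hdd : g d d = 0 := by
      have h5 : g (N ξ u) d = g ⁅ξ, u⁆ d := key d hdU
      have h6 : g d d = g (N ξ u) d - g ⁅ξ, u⁆ d := by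
        simp only [hd, map_sub, LinearMap.sub_apply]
        ring
      rw [h5] at h6
      rw [h6]; ring
    have := hdef d hdd
    rw [hd] at this
    exact sub_eq_zero.mp this
  -- ===== abelian: kill N on U =====
  have hT1 : ∀ v w : U, ⟪τ v, w⟫ + ⟪v, τ w⟫ = 2 * c * ⟪v, w⟫ := by
    intro v w
    rw [Submodule.coe_inner, Submodule.coe_inner, Submodule.coe_inner, hgin, hgin, hgin,
      hτcoe v, hτcoe w]
    have h7 := hsymTξ v v.2 w w.2
    have h8 : g (v : G) ⁅ξ, (w : G)⁆ = g ⁅ξ, (w : G)⁆ (v : G) := hsymm _ _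
    linarith
  set L1 : U →ₗ[ℝ] U →ₗ[ℝ] U :=
    restrict3 (N : G →ₗ[ℝ] G →ₗ[ℝ] G) U U (fun v _ w hw => hpar v w hw) with hL1def
  have hL1coe : ∀ (v : U) (w : U), (L1 v w : G) = N (v : G) (w : G) := fun v w => rfl
  have hskew1 : ∀ (v : U) (x y : U), ⟪L1 v x, y⟫ = - ⟪x, L1 v y⟫ := by
    intro v x y
    rw [Submodule.coe_inner, Submodule.coe_inner, hgin, hgin, hL1coe, hL1coe]
    have h9 := hNskew v v.2 x x.2 y y.2
    have h10 : g (x : G) (N (v : G) (y : G)) = g (N (v : G) (y : G)) (x : G) := hsymm _ _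
    linarith
  have h01 : ∀ v : U, L1 (τ v) = τ ∘ₗ L1 v - L1 v ∘ₗ τ := by
    intro v
    refine LinearMap.ext fun u => Subtype.ext ?_
    have hcoe : ((τ ∘ₗ L1 v - L1 v ∘ₗ τ) u : G)
        = ⁅ξ, (N (v : G) (u : G) : G)⁆ - N (v : G) ⁅ξ, (u : G)⁆ := by
      simp only [LinearMap.sub_apply, LinearMap.comp_apply]
      rw [AddSubgroupClass.coe_sub]
      rw [hτcoe, hL1coe, hL1coe, hτcoe]
    rw [hcoe, hL1coe, hτcoe]
    rw [hrep ξ (v : G) (u : G) u.2]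
    rw [hNξ (N (v : G) (u : G)) (hpar (v : G) (u : G) u.2), hNξ (u : G) u.2]
  have hL1zero : L1 = 0 := kill_lemma L1 τ τ c hc hT1 hskew1 h01
  have hNzero : ∀ v ∈ U, ∀ u ∈ U, N v u = 0 := by
    intro v hv u hu
    have : (L1 ⟨v, hv⟩ ⟨u, hu⟩ : G) = 0 := by rw [hL1zero]; rfl
    rw [hL1coe] at this
    exact this
  have habelian : ∀ u ∈ U, ∀ v ∈ U, ⁅u, v⁆ = 0 := by
    intro u hu v hv
    rw [← htors u v, hNzero u hu v hv, hNzero v hv u hu, sub_zero]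
  -- ===== ideal: kill the P-component of ⁅x, u⁆ =====
  set B2 : G →ₗ[ℝ] G →ₗ[ℝ] G := LinearMap.mk₂ ℝ (fun u x => prP ⁅x, u⁆)
    (fun u u' x => by
      show prP ⁅x, u + u'⁆ = prP ⁅x, u⁆ + prP ⁅x, u'⁆
      rw [lie_add, map_add])
    (fun r u x => by
      show prP ⁅x, r • u⁆ = r • prP ⁅x, u⁆
      rw [lie_smul, map_smul])
    (fun u x x' => by
      show prP ⁅x + x', u⁆ = prP ⁅x, u⁆ + prP ⁅x', u⁆
      rw [add_lie, map_add])
    (fun r u x => by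
      show prP ⁅r • x, u⁆ = r • prP ⁅x, u⁆
      rw [smul_lie, map_smul]) with hB2def
  have hB2app : ∀ u x : G, B2 u x = prP ⁅x, u⁆ := fun u x => rfl
  set L2 : U →ₗ[ℝ] P →ₗ[ℝ] P :=
    restrict3 B2 U P (fun u _ x _ => hprP_mem _) with hL2def
  have hL2coe : ∀ (u : U) (x : P), (L2 u x : G) = prP ⁅(x : G), (u : G)⁆ := fun u x => rfl
  have hprPg : ∀ (z : G) (y : G), y ∈ P → g (prP z) y = g z y := by
    intro z y hy
    conv_rhs => rw [hsplit z]
    rw [map_add, LinearMap.add_apply, hUP0 _ (hprU_mem z) y hy, zero_add]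
  have hskew2 : ∀ (u : U) (x y : P), ⟪L2 u x, y⟫ = - ⟪x, L2 u y⟫ := by
    intro u x y
    rw [Submodule.coe_inner, Submodule.coe_inner, hgin, hgin, hL2coe, hL2coe]
    rw [hprPg _ _ y.2]
    have h11 := skewA (u : G) u.2 (x : G) x.2 (y : G) y.2
    have h12 : g (x : G) (prP ⁅(y : G), (u : G)⁆) = g (prP ⁅(y : G), (u : G)⁆) (x : G) :=
      hsymm _ _
    rw [h12, hprPg _ _ x.2]
    linarith
  set D2 : P →ₗ[ℝ] P := (LieAlgebra.ad ℝ G ξ : G →ₗ[ℝ] G).restrict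
    (fun x hx => by simpa [LieAlgebra.ad_apply] using hPsub ξ hξP x hx) with hD2def
  have hD2coe : ∀ x : P, (D2 x : G) = ⁅ξ, (x : G)⁆ := by
    intro x
    rw [hD2def, LinearMap.restrict_coe_apply]
    simp [LieAlgebra.ad_apply]
  have h02 : ∀ u : U, L2 (τ u) = D2 ∘ₗ L2 u - L2 u ∘ₗ D2 := by
    intro u
    refine LinearMap.ext fun x => Subtype.ext ?_
    have hcoe : ((D2 ∘ₗ L2 u - L2 u ∘ₗ D2) x : G)
        = ⁅ξ, (prP ⁅(x : G), (u : G)⁆ : G)⁆ - prP ⁅⁅ξ, (x : G)⁆, (u : G)⁆ := by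
      simp only [LinearMap.sub_apply, LinearMap.comp_apply]
      rw [AddSubgroupClass.coe_sub]
      rw [hD2coe, hL2coe, hL2coe, hD2coe]
    rw [hcoe, hL2coe, hτcoe]
    -- Jacobi identity
    have hjac : ⁅(x : G), ⁅ξ, (u : G)⁆⁆
        = ⁅ξ, ⁅(x : G), (u : G)⁆⁆ - ⁅⁅ξ, (x : G)⁆, (u : G)⁆ := by
      have := leibniz_lie ξ (x : G) (u : G)
      rw [this]; abel
    rw [hjac, map_sub]
    -- prP ⁅ξ, ⁅x, u⁆⁆ = ⁅ξ, prP ⁅x, u⁆⁆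
    have hmid : prP ⁅ξ, ⁅(x : G), (u : G)⁆⁆ = ⁅ξ, prP ⁅(x : G), (u : G)⁆⁆ := by
      conv_lhs => rw [hsplit ⁅(x : G), (u : G)⁆]
      rw [lie_add, map_add]
      rw [hprP_right _ (hξU _ (hprU_mem _)), zero_add]
      exact hprP_left _ (hPsub ξ hξP _ (hprP_mem _))
    rw [hmid]
  have hL2zero : L2 = 0 := kill_lemma L2 τ D2 c hc hT1 hskew2 h02
  have hPU : ∀ x ∈ P, ∀ u ∈ U, ⁅x, u⁆ ∈ U := by
    intro x hx u hu
    have : (L2 ⟨u, hu⟩ ⟨x, hx⟩ : G) = 0 := by rw [hL2zero]; rfl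
    rw [hL2coe] at this
    have h13 := hsplit ⁅x, u⁆
    rw [this, add_zero] at h13
    rw [h13]
    exact hprU_mem _
  have hideal : ∀ x : G, ∀ u ∈ U, ⁅x, u⁆ ∈ U := by
    intro x u hu
    have h14 : ⁅x, u⁆ = ⁅prU x, u⁆ + ⁅prP x, u⁆ := by
      conv_lhs => rw [hsplit x]
      rw [add_lie]
    rw [h14]
    exact U.add_mem (hUsub _ (hprU_mem x) u hu) (hPU _ (hprP_mem x) u hu)
  -- ===== derived algebra =====
  have hderived : ∀ u ∈ U, u ∈ LieAlgebra.derivedSeries ℝ G 1 := by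
    intro u hu
    obtain ⟨w, hw⟩ := hτsurj ⟨u, hu⟩
    have hwc : ⁅ξ, (w : G)⁆ = u := by
      rw [← hτcoe w, hw]
    have hD : LieAlgebra.derivedSeries ℝ G 1
        = ⁅(⊤ : LieIdeal ℝ G), (⊤ : LieIdeal ℝ G)⁆ := by
      rw [LieAlgebra.derivedSeries_def, LieAlgebra.derivedSeriesOfIdeal_succ,
        LieAlgebra.derivedSeriesOfIdeal_zero]
    rw [hD, ← hwc]
    exact LieSubmodule.lie_mem_lie (LieSubmodule.mem_top _) (LieSubmodule.mem_top _)
  exact ⟨hideal, habelian, hderived⟩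
end

section
/- Let (g,θ,𝔲) be an adapted LCP structure on a Lie algebra 𝔤. Then for every x ∈ 𝔤: ad_x|_𝔲 = ∇^θ_x|_𝔲 and θ(x) = (1/dim 𝔲)·tr(ad_x|_𝔲). -/
private lemma sum_antisym' {ι : Type*} [Fintype ι] (F : ι → ι → ℝ)
    (hF : ∀ i j, F i j = - F j i) : ∑ i, ∑ j, F i j = 0 := by
  have h : (∑ i, ∑ j, F i j) = ∑ i, ∑ j, - F i j := by
    rw [Finset.sum_comm]
    exact Finset.sum_congr rfl fun i _ => Finset.sum_congr rfl fun j _ => (hF j i)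
  simp only [Finset.sum_neg_distrib] at h
  linarith

private lemma lemA' {G : Type*} [AddCommGroup G] [Module ℝ G] {ι : Type*} [Fintype ι]
    (v : ι → G) (d : ι → ℝ)
    (β : G → G → ℝ)
    (hβs : ∀ p q, β p q = β q p)
    (hβsum : ∀ (c : ι → ℝ) (r : G), β (∑ j, c j • v j) r = ∑ j, c j * β (v j) r)
    (X : G → G)
    (x : ι → ι → ℝ) (hxa : ∀ i j, x i j = - x j i)
    (hexp : ∀ i, X (v i) = ∑ j, (x i j / d j) • v j) :
    ∑ i, (1 / d i) * β (X (v i)) (v i) = 0 := by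
  have key : ∀ i, (1 / d i) * β (X (v i)) (v i)
      = ∑ j, ((1 / d i) * ((x i j / d j) * β (v j) (v i))) := by
    intro i
    rw [hexp i, hβsum, Finset.mul_sum]
  rw [Finset.sum_congr rfl fun i _ => key i]
  apply sum_antisym'
  intro i j
  rw [hβs (v j) (v i), hxa i j]
  ring


private noncomputable def Rop {G : Type*} [LieRing G] [LieAlgebra ℝ G]
    (N : G →ₗ[ℝ] Module.End ℝ G) (x y z : G) : G :=
  N x (N y z) - N y (N x z) - N ⁅x, y⁆ z





/-- For an adapted LCP structure `(g,θ,𝔲)` on a Lie algebra `𝔤`, for every `x ∈ 𝔤`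
one has `ad_x|_𝔲 = ∇^θ_x|_𝔲` and `θ(x) = (1/dim 𝔲)·tr(ad_x|_𝔲)`, the latter trace
being that of any endomorphism of `𝔲` acting as `ad_x` on `𝔲`. -/
theorem adapted_lcp_ad_eq_weyl_and_theta
    {G : Type*} [LieRing G] [LieAlgebra ℝ G] [FiniteDimensional ℝ G]
    (g : LinearMap.BilinForm ℝ G)
    (hsymm : ∀ x y : G, g x y = g y x)
    (hpos : ∀ x : G, x ≠ 0 → 0 < g x x)
    -- θ : non-zero closed 1-form
    (θ : G →ₗ[ℝ] ℝ) (hθ : θ ≠ 0) (hclosed : ∀ x y : G, θ ⁅x, y⁆ = 0)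
    -- 𝔲 : non-zero subspace
    (U : Submodule ℝ G) (hUne : U ≠ ⊥)
    -- the Weyl connection ∇^θ determined by g and θ
    (N : G →ₗ[ℝ] Module.End ℝ G)
    (hN : ∀ x y z : G, g (N x y) z =
      (g ⁅x, y⁆ z - g ⁅x, z⁆ y - g ⁅y, z⁆ x) / 2
        + θ x * g y z + θ y * g x z - θ z * g x y)
    -- (1) 𝔲 and 𝔲^⊥ are Lie subalgebras
    (hUsub : ∀ u ∈ U, ∀ v ∈ U, ⁅u, v⁆ ∈ U)
    (hPsub : ∀ x ∈ LinearMap.BilinForm.orthogonal g U,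
             ∀ y ∈ LinearMap.BilinForm.orthogonal g U,
             ⁅x, y⁆ ∈ LinearMap.BilinForm.orthogonal g U)
    -- (2)
    (h2 : ∀ u ∈ U, ∀ x ∈ LinearMap.BilinForm.orthogonal g U,
      g ⁅u, x⁆ x = θ u * g x x ∧ g ⁅x, u⁆ u = θ x * g u u)
    -- (3) 𝔲 is ∇^θ-parallel and x ↦ ∇^θ_x|_𝔲 is a Lie algebra representation
    (hpar : ∀ x : G, ∀ u ∈ U, N x u ∈ U)
    (hrep : ∀ x y : G, ∀ u ∈ U, N ⁅x, y⁆ u = N x (N y u) - N y (N x u))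
    -- the LCP structure is proper and adapted
    (hproper : U ≠ ⊤) (hadapt : ∀ u ∈ U, θ u = 0) :
    ∀ x : G,
      (∀ u ∈ U, ⁅x, u⁆ = N x u) ∧
      (∀ T : U →ₗ[ℝ] U, (∀ v : U, (T v : G) = ⁅x, (v : G)⁆) →
        θ x = (1 / (Module.finrank ℝ U : ℝ)) * LinearMap.trace ℝ U T) := by
  have hnd : ∀ z : G, (∀ w : G, g z w = 0) → z = 0 := by
    intro z hz
    by_contra h
    exact absurd (hz z) (ne_of_gt (hpos z h))
  have hskewg : ∀ p q r : G, g ⁅p, q⁆ r + g ⁅q, p⁆ r = 0 := by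
    intro p q r
    rw [← lie_skew q p, map_neg, LinearMap.neg_apply]
    ring
  have hNs : ∀ x y z : G, g (N x y) z + g (N x z) y = 2 * θ x * g y z := by
    intro x y z
    have h1 := hN x y z
    have h2 := hN x z y
    have h3 := hskewg y z x
    have h4 := hsymm z y
    linear_combination h1 + h2 - (1/2) * h3 + (θ x) * h4
  have htor : ∀ x y : G, N x y = N y x + ⁅x, y⁆ := by
    intro x y
    have key : ∀ w : G, g (N x y - (N y x + ⁅x, y⁆)) w = 0 := by
      intro w
      have h1 := hN x y w
      have h2 := hN y x w
      have h3 := hskewg x y w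
      have h4 := hsymm x y
      simp only [map_sub, map_add, LinearMap.sub_apply, LinearMap.add_apply]
      linear_combination h1 - h2 - (1/2) * h3 - (θ w) * h4
    have := hnd _ key
    rwa [sub_eq_zero] at this
  -- Riesz representation of θ
  have hndeg : g.Nondegenerate :=
    ⟨fun z hz => hnd z hz, fun z hz => hnd z fun w => by rw [hsymm]; exact hz w⟩
  set H : G := (LinearMap.BilinForm.toDual g hndeg).symm θ with hHdef
  have hH : ∀ w : G, g H w = θ w := by
    intro w
    exact LinearMap.BilinForm.apply_toDual_symm_apply θ w
  have hθN : ∀ u ∈ U, ∀ w : G, θ (N u w) = 0 := by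
    intro u hu w
    rw [htor u w, map_add, hclosed u w, hadapt _ (hpar w u hu), zero_add]
  have hNuH : ∀ u ∈ U, N u H = 0 := by
    intro u hu
    apply hnd
    intro w
    have h1 := hNs u H w
    have h2 : g (N u w) H = θ (N u w) := by rw [hsymm]; exact hH _
    rw [hθN u hu w] at h2
    rw [hadapt u hu] at h1
    linarith
  -- curvature is skew-symmetric
  have hRskew : ∀ x y z w : G, g (Rop N x y z) w = - g (Rop N x y w) z := by
    intro x y z w
    have a1 := hNs x (N y z) w
    have a2 := hNs y (N x w) z
    have a3 := hNs y (N x z) w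
    have a4 := hNs x (N y w) z
    have a5 := hNs ⁅x, y⁆ z w
    have b1 := hNs x z w
    have b2 := hNs y z w
    have s1 := hsymm (N x w) (N y z)
    have s2 := hsymm (N x z) (N y w)
    have hcl := hclosed x y
    simp only [Rop, map_sub, LinearMap.sub_apply]
    linear_combination a1 - a2 - a3 + a4 - a5 - s1 - s2 + 2*(θ x)*b2 - 2*(θ y)*b1 - 2*(g z w)*hcl
  -- first Bianchi identity
  have hBianchi : ∀ x y z : G, Rop N x y z + Rop N y z x + Rop N z x y = 0 := by
    intro x y z
    have jac := lie_jacobi x y z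
    have jc : ⁅z, ⁅x, y⁆⁆ = -⁅x, ⁅y, z⁆⁆ - ⁅y, ⁅z, x⁆⁆ := by
      rw [← sub_eq_zero]
      calc ⁅z, ⁅x, y⁆⁆ - (-⁅x, ⁅y, z⁆⁆ - ⁅y, ⁅z, x⁆⁆)
          = ⁅x, ⁅y, z⁆⁆ + ⁅y, ⁅z, x⁆⁆ + ⁅z, ⁅x, y⁆⁆ := by abel
        _ = 0 := jac
    simp only [Rop]
    rw [htor y z, htor z x, htor x y]
    simp only [map_add]
    rw [htor x ⁅y, z⁆, htor y ⁅z, x⁆, htor z ⁅x, y⁆, jc]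
    abel
  -- flatness on U
  have hRU : ∀ x y : G, ∀ u ∈ U, Rop N x y u = 0 := by
    intro x y u hu
    simp only [Rop]
    rw [hrep x y u hu]
    abel
  -- symmetry of R(u, -, -) in the last two slots, for u ∈ U
  have hsym2 : ∀ u ∈ U, ∀ y z : G, Rop N u y z = Rop N u z y := by
    intro u hu y z
    have hB := hBianchi u y z
    rw [hRU y z u hu] at hB
    have hzu : ⁅z, u⁆ = -⁅u, z⁆ := by rw [← lie_skew u z, neg_neg]
    have h3 : Rop N z u y + Rop N u z y = 0 := by
      simp only [Rop]
      rw [hzu, map_neg, LinearMap.neg_apply]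
      abel
    have h4 : Rop N u y z - Rop N u z y
        = (Rop N u y z + 0 + Rop N z u y) - (Rop N z u y + Rop N u z y) := by abel
    rw [hB, h3] at h4
    rw [← sub_eq_zero]
    rw [h4]
    abel
  -- R(u,y) = 0 for u ∈ U
  have hdance : ∀ u ∈ U, ∀ y z : G, Rop N u y z = 0 := by
    intro u hu y z
    apply hnd
    intro w
    have c1 : g (Rop N u y z) w = g (Rop N u z y) w := by rw [hsym2 u hu y z]
    have c2 : g (Rop N u z y) w = - g (Rop N u z w) y := hRskew u z y w
    have c3 : g (Rop N u z w) y = g (Rop N u w z) y := by rw [hsym2 u hu z w]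
    have c4 : g (Rop N u w z) y = - g (Rop N u w y) z := hRskew u w z y
    have c5 : g (Rop N u w y) z = g (Rop N u y w) z := by rw [hsym2 u hu w y]
    have c6 : g (Rop N u y w) z = - g (Rop N u y z) w := hRskew u y w z
    linarith
  -- the key identity
  have key10 : ∀ u ∈ U, ∀ z : G, N (N H u) z = N H (N u z) - N u (N H z) := by
    intro u hu z
    have h1 : Rop N H u z = 0 := by
      have := hdance u hu H z
      have ha : Rop N H u z = - Rop N u H z := by
        simp only [Rop]
        have hHu : ⁅H, u⁆ = -⁅u, H⁆ := by rw [← lie_skew u H, neg_neg]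
        rw [hHu, map_neg, LinearMap.neg_apply]
        abel
      rw [ha, this, neg_zero]
    have hbr : ⁅H, u⁆ = N H u := by
      rw [htor H u, hNuH u hu]
      abel
    simp only [Rop] at h1
    rw [hbr] at h1
    rw [← sub_eq_zero]
    have e : (N (N H u)) z - ((N H) ((N u) z) - (N u) ((N H) z))
        = -((N H) ((N u) z) - (N u) ((N H) z) - (N ((N H) u)) z) := by abel
    rw [e, h1, neg_zero]
  -- orthogonal basis of G
  have hgsymm : g.IsSymm := LinearMap.BilinForm.isSymm_def.mpr fun x y => by simpa using hsymm x y
  obtain ⟨f, hf⟩ := LinearMap.BilinForm.exists_orthogonal_basis (LinearMap.BilinForm.isSymm_iff.mp hgsymm)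
  have hcpos : ∀ α, 0 < g (f α) (f α) := fun α => hpos _ (f.ne_zero α)
  have horthf : ∀ α β, α ≠ β → g (f α) (f β) = 0 := fun α β hne => hf hne
  have hcoordG : ∀ (w : G) α, g w (f α) = f.repr w α * g (f α) (f α) := by
    intro w α
    conv_lhs => rw [← f.sum_repr w]
    rw [map_sum, LinearMap.sum_apply, Finset.sum_eq_single α]
    · rw [map_smul, LinearMap.smul_apply, smul_eq_mul]
    · intro b _ hb
      rw [map_smul, LinearMap.smul_apply, smul_eq_mul, horthf b α hb, mul_zero]
    · intro h; exact absurd (Finset.mem_univ α) h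
  have hGexp : ∀ w : G, w = ∑ α, (g w (f α) / g (f α) (f α)) • f α := by
    intro w
    conv_lhs => rw [← f.sum_repr w]
    refine Finset.sum_congr rfl ?_
    intro α _
    congr 1
    rw [hcoordG w α, mul_div_assoc, div_self (ne_of_gt (hcpos α)), mul_one]
  -- orthogonal basis of U
  have hgUsymm : (g.restrict U).IsSymm := by
    rw [LinearMap.BilinForm.isSymm_def]
    intro x y
    simp only [LinearMap.BilinForm.restrict_apply, RingHom.id_apply]
    exact hsymm _ _
  obtain ⟨e, he⟩ := LinearMap.BilinForm.exists_orthogonal_basis (LinearMap.BilinForm.isSymm_iff.mp hgUsymm)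
  have huU : ∀ i, ((e i : U) : G) ∈ U := fun i => (e i).2
  have hdpos : ∀ i, 0 < g ((e i : U) : G) ((e i : U) : G) := by
    intro i
    apply hpos
    simpa using e.ne_zero i
  have horthU : ∀ i j, i ≠ j → g ((e i : U) : G) ((e j : U) : G) = 0 := by
    intro i j hne
    have := he hne
    simpa [LinearMap.BilinForm.IsOrtho, LinearMap.BilinForm.restrict_apply] using this
  have hcoordU : ∀ (w : U) i, g (w : G) ((e i : U) : G)
      = e.repr w i * g ((e i : U) : G) ((e i : U) : G) := by
    intro w i
    have hw : (w : G) = ∑ j, e.repr w j • ((e j : U) : G) := by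
      conv_lhs => rw [← e.sum_repr w]
      push_cast
      rfl
    rw [hw, map_sum, LinearMap.sum_apply, Finset.sum_eq_single i]
    · rw [map_smul, LinearMap.smul_apply, smul_eq_mul]
    · intro b _ hb
      rw [map_smul, LinearMap.smul_apply, smul_eq_mul, horthU b i hb, mul_zero]
    · intro h; exact absurd (Finset.mem_univ i) h
  have hUexp : ∀ w, (hw : w ∈ U) → w = ∑ i, (g w ((e i : U) : G) / g ((e i : U) : G) ((e i : U) : G)) • ((e i : U) : G) := by
    intro w hw
    have hw2 : w = ∑ j, e.repr ⟨w, hw⟩ j • ((e j : U) : G) := by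
      conv_lhs => rw [show w = ((⟨w, hw⟩ : U) : G) from rfl, ← e.sum_repr ⟨w, hw⟩]
      push_cast
      rfl
    conv_lhs => rw [hw2]
    refine Finset.sum_congr rfl ?_
    intro i _
    congr 1
    have hc : g w ((e i : U) : G) = e.repr ⟨w, hw⟩ i * g ((e i : U) : G) ((e i : U) : G) :=
      hcoordU ⟨w, hw⟩ i
    rw [hc, mul_div_assoc, div_self (ne_of_gt (hdpos i)), mul_one]
  -- skewness of X := N H · − θ(H)·
  have hXskew : ∀ p q : G, g (N H p - θ H • p) q = - g (N H q - θ H • q) p := by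
    intro p q
    have h1 := hNs H p q
    have h2 := hsymm p q
    simp only [map_sub, map_smul, LinearMap.sub_apply, LinearMap.smul_apply, smul_eq_mul]
    linear_combination h1 + θ H * h2
  -- main1
  have main1 : ∀ v : G,
      ∑ α, (1 / g (f α) (f α)) * g (N v (N H (f α) - θ H • f α)) (N v (f α)) = 0 := by
    intro v
    refine lemA' (fun α => f α) (fun α => g (f α) (f α))
      (fun p q => g (N v p) (N v q))
      (fun p q => hsymm _ _)
      ?_
      (fun p => N H p - θ H • p)
      (fun i j => g (N H (f i) - θ H • f i) (f j))
      (fun i j => hXskew (f i) (f j))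
      (fun i => hGexp _)
    intro c r
    simp only [map_sum, map_smul, LinearMap.sum_apply, LinearMap.smul_apply, smul_eq_mul]
  -- main2
  have main2 : ∀ u, u ∈ U →
      ∑ α, (1 / g (f α) (f α)) * g (N (N H u) (f α)) (N u (f α)) = 0 := by
    intro u hu
    have hNH : ∀ w : G, g (N H w) w = θ H * g w w := by
      intro w
      have := hNs H w w
      linarith
    have e1 : ∀ α, g (N (N H u) (f α)) (N u (f α))
        = - g (N u (N H (f α) - θ H • f α)) (N u (f α)) := by
      intro α
      rw [key10 u hu (f α)]
      have hsplit : N u (N H (f α)) = N u (N H (f α) - θ H • f α) + θ H • N u (f α) := by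
        rw [map_sub, map_smul]
        abel
      rw [map_sub, LinearMap.sub_apply, hsplit]
      rw [map_add, LinearMap.add_apply, hNH (N u (f α))]
      rw [map_smul, LinearMap.smul_apply, smul_eq_mul]
      ring
    calc ∑ α, (1 / g (f α) (f α)) * g (N (N H u) (f α)) (N u (f α))
        = ∑ α, -((1 / g (f α) (f α)) * g (N u (N H (f α) - θ H • f α)) (N u (f α))) := by
          refine Finset.sum_congr rfl fun α _ => ?_
          rw [e1 α]; ring
      _ = 0 := by rw [Finset.sum_neg_distrib, main1 u, neg_zero]
  -- main3
  have main3 : ∑ i, (1 / g ((e i : U) : G) ((e i : U) : G)) *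
      (∑ α, (1 / g (f α) (f α)) *
        g (N (N H ((e i : U) : G) - θ H • ((e i : U) : G)) (f α)) (N ((e i : U) : G) (f α))) = 0 := by
    refine lemA' (fun i => ((e i : U) : G)) (fun i => g ((e i : U) : G) ((e i : U) : G))
      (fun p q => ∑ α, (1 / g (f α) (f α)) * g (N p (f α)) (N q (f α)))
      (fun p q => Finset.sum_congr rfl fun α _ => by rw [hsymm (N p (f α)) (N q (f α))])
      ?_
      (fun p => N H p - θ H • p)
      (fun i j => g (N H ((e i : U) : G) - θ H • ((e i : U) : G)) ((e j : U) : G))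
      (fun i j => hXskew _ _)
      ?_
    · intro c r
      simp only [map_sum, map_smul, LinearMap.sum_apply, LinearMap.smul_apply, smul_eq_mul,
        Finset.mul_sum]
      rw [Finset.sum_comm]
      refine Finset.sum_congr rfl fun j _ => Finset.sum_congr rfl fun α _ => by ring
    · intro i
      refine hUexp _ ?_
      exact Submodule.sub_mem _ (hpar H _ (huU i)) (Submodule.smul_mem _ _ (huU i))
  -- positivity of θ H
  have hHne : H ≠ 0 := by
    intro h0
    apply hθ
    ext x
    rw [← hH x, h0]
    simp
  have hθH : 0 < θ H := by
    rw [← hH H]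
    exact hpos H hHne
  have hgnn : ∀ w : G, 0 ≤ g w w := by
    intro w
    by_cases h : w = 0
    · simp [h]
    · exact le_of_lt (hpos w h)
  have hgz : ∀ w : G, g w w = 0 → w = 0 := by
    intro w h
    by_contra hne
    exact absurd h (ne_of_gt (hpos w hne))
  -- combine main2 and main3
  have hsplitS : ∀ i, (∑ α, (1 / g (f α) (f α)) *
        g (N (N H ((e i : U) : G)) (f α)) (N ((e i : U) : G) (f α)))
      = (∑ α, (1 / g (f α) (f α)) *
          g (N (N H ((e i : U) : G) - θ H • ((e i : U) : G)) (f α)) (N ((e i : U) : G) (f α)))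
        + θ H * ∑ α, (1 / g (f α) (f α)) *
            g (N ((e i : U) : G) (f α)) (N ((e i : U) : G) (f α)) := by
    intro i
    rw [Finset.mul_sum, ← Finset.sum_add_distrib]
    refine Finset.sum_congr rfl fun α _ => ?_
    have h0 : N (N H ((e i : U) : G))
        = N (N H ((e i : U) : G) - θ H • ((e i : U) : G)) + θ H • N ((e i : U) : G) := by
      rw [← map_smul, ← map_add, sub_add_cancel]
    rw [h0, LinearMap.add_apply, LinearMap.smul_apply, map_add, map_smul,
      LinearMap.add_apply, LinearMap.smul_apply, smul_eq_mul]
    ring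
  have hPsi : ∑ i, (1 / g ((e i : U) : G) ((e i : U) : G)) *
      (∑ α, (1 / g (f α) (f α)) *
        g (N ((e i : U) : G) (f α)) (N ((e i : U) : G) (f α))) = 0 := by
    have h3 : ∑ i, (1 / g ((e i : U) : G) ((e i : U) : G)) *
        (∑ α, (1 / g (f α) (f α)) *
          g (N (N H ((e i : U) : G)) (f α)) (N ((e i : U) : G) (f α))) = 0 :=
      Finset.sum_eq_zero fun i _ => by rw [main2 _ (huU i), mul_zero]
    have h4 : ∑ i, ((1 / g ((e i : U) : G) ((e i : U) : G)) *
        (∑ α, (1 / g (f α) (f α)) *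
          g (N (N H ((e i : U) : G) - θ H • ((e i : U) : G)) (f α)) (N ((e i : U) : G) (f α)))
        + θ H * ((1 / g ((e i : U) : G) ((e i : U) : G)) *
          (∑ α, (1 / g (f α) (f α)) *
            g (N ((e i : U) : G) (f α)) (N ((e i : U) : G) (f α))))) = 0 := by
      rw [← h3]
      refine Finset.sum_congr rfl fun i _ => ?_
      rw [hsplitS i]
      ring
    rw [Finset.sum_add_distrib, main3, zero_add, ← Finset.mul_sum] at h4
    rcases mul_eq_zero.mp h4 with h | h
    · exact absurd h (ne_of_gt hθH)
    · exact h
  -- hence N u = 0 for u ∈ U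
  have hNei : ∀ i z, N ((e i : U) : G) z = 0 := by
    have hterm : ∀ i, (∑ α, (1 / g (f α) (f α)) *
        g (N ((e i : U) : G) (f α)) (N ((e i : U) : G) (f α))) = 0 := by
      have hnn : ∀ i ∈ Finset.univ, (0:ℝ) ≤ (1 / g ((e i : U) : G) ((e i : U) : G)) *
          (∑ α, (1 / g (f α) (f α)) *
            g (N ((e i : U) : G) (f α)) (N ((e i : U) : G) (f α))) := by
        intro i _
        apply mul_nonneg (le_of_lt (one_div_pos.mpr (hdpos i)))
        exact Finset.sum_nonneg fun α _ =>
          mul_nonneg (le_of_lt (one_div_pos.mpr (hcpos α))) (hgnn _)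
      intro i
      have := (Finset.sum_eq_zero_iff_of_nonneg hnn).mp hPsi i (Finset.mem_univ i)
      rcases mul_eq_zero.mp this with h | h
      · exact absurd h (ne_of_gt (one_div_pos.mpr (hdpos i)))
      · exact h
    have hvan : ∀ i α, N ((e i : U) : G) (f α) = 0 := by
      intro i α
      have hnn : ∀ α ∈ Finset.univ, (0:ℝ) ≤ (1 / g (f α) (f α)) *
          g (N ((e i : U) : G) (f α)) (N ((e i : U) : G) (f α)) := fun α _ =>
        mul_nonneg (le_of_lt (one_div_pos.mpr (hcpos α))) (hgnn _)
      have := (Finset.sum_eq_zero_iff_of_nonneg hnn).mp (hterm i) α (Finset.mem_univ α)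
      rcases mul_eq_zero.mp this with h | h
      · exact absurd h (ne_of_gt (one_div_pos.mpr (hcpos α)))
      · exact hgz _ h
    intro i z
    conv_lhs => rw [hGexp z]
    rw [map_sum]
    refine Finset.sum_eq_zero fun α _ => ?_
    rw [map_smul, hvan i α, smul_zero]
  have hNU0 : ∀ u ∈ U, ∀ z : G, N u z = 0 := by
    intro u hu z
    conv_lhs => rw [hUexp u hu]
    rw [map_sum, LinearMap.sum_apply]
    refine Finset.sum_eq_zero fun i _ => ?_
    rw [map_smul, LinearMap.smul_apply, hNei i z, smul_zero]
  -- final goals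
  intro x
  constructor
  · intro u hu
    rw [htor x u, hNU0 u hu x, zero_add]
  · intro T hT
    have hdiag : ∀ i, e.repr (T (e i)) i = θ x := by
      intro i
      have h1 : g ((T (e i) : U) : G) ((e i : U) : G)
          = e.repr (T (e i)) i * g ((e i : U) : G) ((e i : U) : G) := hcoordU (T (e i)) i
      have h2 : ((T (e i) : U) : G) = N x ((e i : U) : G) := by
        rw [hT (e i), htor x _, hNU0 _ (huU i) x, zero_add]
      have h3 : g (N x ((e i : U) : G)) ((e i : U) : G)
          = θ x * g ((e i : U) : G) ((e i : U) : G) := by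
        have := hNs x ((e i : U) : G) ((e i : U) : G)
        linarith
      rw [h2, h3] at h1
      exact (mul_right_cancel₀ (ne_of_gt (hdpos i)) h1).symm
    have htrace : LinearMap.trace ℝ U T = (Module.finrank ℝ U : ℝ) * θ x := by
      rw [LinearMap.trace_eq_matrix_trace ℝ e T]
      have hmt : (LinearMap.toMatrix e e T).trace = ∑ i, e.repr (T (e i)) i := by
        simp [Matrix.trace, Matrix.diag, LinearMap.toMatrix_apply]
      rw [hmt, Finset.sum_congr rfl fun i _ => hdiag i, Finset.sum_const, Finset.card_univ,
        Fintype.card_fin]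
      simp [nsmul_eq_mul]
    rw [htrace]
    have hn : (Module.finrank ℝ U : ℝ) ≠ 0 := by
      rw [Nat.cast_ne_zero]
      intro h0
      exact hUne (Submodule.finrank_eq_zero.mp h0)
    field_simp
end
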